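/- arXiv:1607.06639 — 9 statements merged into one kernel-verified Lean document; each statement's English description precedes it below -/
import Mathlib

section
/- Let A be a semiprime Archimedean f-algebra (over ℝ) which is geometric mean closed. Then for all f, g ∈ A⁺, the element f ⊠ g = 2⁻¹·inf{θ·f + θ⁻¹·g : θ ∈ (0,∞)} satisfies (f ⊠ g)² = f·g; i.e., f ⊠ g is the (unique nonnegative) square root of f·g. -/
/-!
Write `U(f, g)` for the upper estimates `θ • f + θ⁻¹ • g` of `2 √(f g)` and `L(f, g)` for the
lower estimates `σ • f ⊓ σ⁻¹ • g` of `√(f g)`. In an Archimedean vector lattice, half the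
infimum of `U(f, g)` is also the supremum of `L(f, g)`. In an `f`-algebra, multiplication by
`c ≥ 0` is a lattice homomorphism mapping `U(f, g)` and `L(f, g)` onto `U(c f, c g)` and
`L(c f, c g)`, so it commutes with this infimum and supremum. Applying this twice,
`(f ⊠ g)²` is an infimum of products `x y / 4` with `x, y ∈ U(f, g)`, each `≥ f g` by AM-GM
(squares are positive in an `f`-algebra), and a supremum of products `x y` with `x, y ∈ L(f, g)`,
each `≤ f g`. Uniqueness holds because `x² ≤ y²` implies `x ≤ y` on `A⁺` when `A` is semiprime.
-/

lemma two_le_add_inv {t : ℝ} (ht : 0 < t) : 2 ≤ t + t⁻¹ := by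
  have : 0 ≤ (t - 1) ^ 2 / t := by positivity
  have e : (t - 1) ^ 2 / t = t + t⁻¹ - 2 := by field_simp; ring
  linarith

section VectorLattice

variable {E : Type*} [AddCommGroup E] [Lattice E] [Module ℝ E] [PosSMulMono ℝ E]

def gmUpperSet (f g : E) : Set E := {x | ∃ θ : ℝ, 0 < θ ∧ x = θ • f + θ⁻¹ • g}

def gmLowerSet (f g : E) : Set E := {x | ∃ σ : ℝ, 0 < σ ∧ x = σ • f ⊓ σ⁻¹ • g}

lemma smul_inf_of_pos {c : ℝ} (hc : 0 < c) (x y : E) : c • (x ⊓ y) = c • x ⊓ c • y :=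
  (OrderIso.smulRight hc).map_inf x y

variable {a b : E}

lemma nonneg_of_mem_gmLowerSet (ha : 0 ≤ a) (hb : 0 ≤ b) {x : E} (hx : x ∈ gmLowerSet a b) :
    0 ≤ x := by
  obtain ⟨σ, hσ, rfl⟩ := hx
  exact le_inf (smul_nonneg hσ.le ha) (smul_nonneg (inv_nonneg.mpr hσ.le) hb)

variable [IsOrderedAddMonoid E]

lemma le_of_forall_pos_le_add_smul (harch : ∀ f g : E, (∀ n : ℕ, (n : ℝ) • f ≤ g) → f ≤ 0)
    {x y k : E} (hk : 0 ≤ k) (h : ∀ ε : ℝ, 0 < ε → x ≤ y + ε • k) : x ≤ y := by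
  refine sub_nonpos.mp (harch _ k fun n => ?_)
  rcases n.eq_zero_or_pos with rfl | hn
  · simpa using hk
  · have hn' : (0 : ℝ) < n := Nat.cast_pos.mpr hn
    rw [← le_inv_smul_iff_of_pos hn', sub_le_iff_le_add']
    exact h _ (inv_pos.mpr hn')

lemma nonneg_of_mem_gmUpperSet (ha : 0 ≤ a) (hb : 0 ≤ b) {x : E} (hx : x ∈ gmUpperSet a b) :
    0 ≤ x := by
  obtain ⟨θ, hθ, rfl⟩ := hx
  exact add_nonneg (smul_nonneg hθ.le ha) (smul_nonneg (inv_nonneg.mpr hθ.le) hb)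

lemma nonneg_of_isGLB_gmUpperSet (ha : 0 ≤ a) (hb : 0 ≤ b) {m : E}
    (hm : IsGLB (gmUpperSet a b) m) : 0 ≤ m :=
  hm.2 fun _ hx => nonneg_of_mem_gmUpperSet ha hb hx

lemma two_smul_le_of_mem_gmLowerSet_of_mem_gmUpperSet (ha : 0 ≤ a) (hb : 0 ≤ b) {x y : E}
    (hx : x ∈ gmLowerSet a b) (hy : y ∈ gmUpperSet a b) : (2 : ℝ) • x ≤ y := by
  have hx0 := nonneg_of_mem_gmLowerSet ha hb hx
  obtain ⟨σ, hσ, rfl⟩ := hx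
  obtain ⟨θ, hθ, rfl⟩ := hy
  set t := θ / σ
  have ht : 0 < t := div_pos hθ hσ
  calc (2 : ℝ) • (σ • a ⊓ σ⁻¹ • b) ≤ (t + t⁻¹) • (σ • a ⊓ σ⁻¹ • b) :=
        smul_le_smul_of_nonneg_right (two_le_add_inv ht) hx0
    _ = t • (σ • a ⊓ σ⁻¹ • b) + t⁻¹ • (σ • a ⊓ σ⁻¹ • b) := add_smul _ _ _
    _ ≤ t • (σ • a) + t⁻¹ • (σ⁻¹ • b) :=
        add_le_add (smul_le_smul_of_nonneg_left inf_le_left ht.le)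
          (smul_le_smul_of_nonneg_left inf_le_right (inv_nonneg.mpr ht.le))
    _ = θ • a + θ⁻¹ • b := by
        simp only [smul_smul, t]
        congr 2 <;> field_simp

/-- The upper estimates at `ρ * s` and `ρ / s` exceed `s⁻¹ • (ρ • a + ρ⁻¹ • b)` by
`(s - s⁻¹) • ρ • a` and `(s - s⁻¹) • ρ⁻¹ • b`, so `N ≤ s⁻¹ • (ρ • a + ρ⁻¹ • b) + (s - s⁻¹) • k`
for all `ρ`, i.e. `s • (N - (s - s⁻¹) • k) ≤ N`. -/
lemma le_add_one_smul_of_isGLB_gmUpperSet {N k : E}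
    (hN : IsGLB (gmUpperSet a b) N) (hk : k ∈ upperBounds (gmLowerSet a b)) {s : ℝ}
    (hs : 1 < s) : N ≤ (s + 1) • k := by
  have hs0 : 0 < s := one_pos.trans hs
  have hc : 0 < s - s⁻¹ := by
    have : s⁻¹ < 1 := inv_lt_one_of_one_lt₀ hs
    linarith
  have hshift : ∀ ρ : ℝ, 0 < ρ → N ≤ s⁻¹ • (ρ • a + ρ⁻¹ • b) + (s - s⁻¹) • k := by
    intro ρ hρ
    have h₁ : N ≤ s⁻¹ • (ρ • a + ρ⁻¹ • b) + (s - s⁻¹) • (ρ • a) := by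
      convert hN.1 ⟨ρ * s, by positivity, rfl⟩ using 1
      match_scalars <;> field_simp
      ring
    have h₂ : N ≤ s⁻¹ • (ρ • a + ρ⁻¹ • b) + (s - s⁻¹) • (ρ⁻¹ • b) := by
      convert hN.1 ⟨ρ / s, by positivity, rfl⟩ using 1
      match_scalars <;> field_simp
      ring
    calc N ≤ (s⁻¹ • (ρ • a + ρ⁻¹ • b) + (s - s⁻¹) • (ρ • a)) ⊓
          (s⁻¹ • (ρ • a + ρ⁻¹ • b) + (s - s⁻¹) • (ρ⁻¹ • b)) := le_inf h₁ h₂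
      _ = s⁻¹ • (ρ • a + ρ⁻¹ • b) + (s - s⁻¹) • (ρ • a ⊓ ρ⁻¹ • b) := by
        rw [← add_inf, smul_inf_of_pos hc]
      _ ≤ s⁻¹ • (ρ • a + ρ⁻¹ • b) + (s - s⁻¹) • k :=
        add_le_add_right (smul_le_smul_of_nonneg_left (hk ⟨ρ, hρ, rfl⟩) hc.le) _
  have hlow : s • (N - (s - s⁻¹) • k) ≤ N := by
    refine hN.2 ?_
    rintro _ ⟨ρ, hρ, rfl⟩
    rw [← le_inv_smul_iff_of_pos hs0, sub_le_iff_le_add]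
    exact hshift ρ hρ
  have e : (s - 1) • ((s + 1) • k) - (s - 1) • N = N - s • (N - (s - s⁻¹) • k) := by
    match_scalars
    · field_simp
      ring
    · ring
  rw [← smul_le_smul_iff_of_pos_left (sub_pos.mpr hs), ← sub_nonneg, e, sub_nonneg]
  exact hlow

lemma le_two_smul_of_isGLB_gmUpperSet (harch : ∀ f g : E, (∀ n : ℕ, (n : ℝ) • f ≤ g) → f ≤ 0)
    (ha : 0 ≤ a) (hb : 0 ≤ b) {N k : E} (hN : IsGLB (gmUpperSet a b) N)
    (hk : k ∈ upperBounds (gmLowerSet a b)) : N ≤ (2 : ℝ) • k := by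
  have hk0 : 0 ≤ k :=
    (nonneg_of_mem_gmLowerSet ha hb ⟨1, one_pos, rfl⟩).trans (hk ⟨1, one_pos, rfl⟩)
  refine le_of_forall_pos_le_add_smul harch hk0 fun ε hε => ?_
  calc N ≤ (1 + ε + 1) • k :=
        le_add_one_smul_of_isGLB_gmUpperSet hN hk (lt_add_of_pos_right 1 hε)
    _ = (2 : ℝ) • k + ε • k := by rw [← add_smul]; ring_nf

lemma isLUB_gmLowerSet (harch : ∀ f g : E, (∀ n : ℕ, (n : ℝ) • f ≤ g) → f ≤ 0)
    (ha : 0 ≤ a) (hb : 0 ≤ b) {N : E} (hN : IsGLB (gmUpperSet a b) N) :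
    IsLUB (gmLowerSet a b) ((2⁻¹ : ℝ) • N) :=
  ⟨fun _ hx => (le_inv_smul_iff_of_pos two_pos).2 <|
      hN.2 fun _ hy => two_smul_le_of_mem_gmLowerSet_of_mem_gmUpperSet ha hb hx hy,
    fun _ hk => (inv_smul_le_iff_of_pos two_pos).2 <|
      le_two_smul_of_isGLB_gmUpperSet harch ha hb hN hk⟩

end VectorLattice

section FAlgebra

/-- The axiom that distinguishes `f`-algebras among lattice-ordered algebras. -/
def MulPreservesDisjoint (A : Type*) [Mul A] [Lattice A] [Zero A] : Prop :=
  ∀ a b c : A, a ⊓ b = 0 → 0 ≤ c → (c * a) ⊓ b = 0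

variable {A : Type*} [NonUnitalCommRing A] [Lattice A]

lemma MulPreservesDisjoint.mul_eq_zero_of_inf_eq_zero (hA : MulPreservesDisjoint A) {a b : A}
    (h : a ⊓ b = 0) : a * b = 0 := by
  have hba : b ⊓ b * a = 0 := by
    rw [inf_comm]
    exact hA a b b h (h ▸ inf_le_right)
  simpa [mul_comm b a] using hA b (b * a) a hba (h ▸ inf_le_left)

variable [IsOrderedAddMonoid A]

lemma MulPreservesDisjoint.mul_inf (hA : MulPreservesDisjoint A) {c : A} (hc : 0 ≤ c)
    (x y : A) : c * (x ⊓ y) = c * x ⊓ c * y := by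
  set w := x ⊓ y
  have hd : (x - w) ⊓ (y - w) = 0 := by rw [← inf_sub, sub_self]
  have hcd : c * (x - w) ⊓ c * (y - w) = 0 := by
    have h := hA _ _ c hd hc
    rw [inf_comm] at h ⊢
    exact hA _ _ c h hc
  calc c * w = c * w + (c * (x - w) ⊓ c * (y - w)) := by rw [hcd, add_zero]
    _ = c * x ⊓ c * y := by rw [add_inf, ← mul_add, ← mul_add, add_sub_cancel, add_sub_cancel]

variable [PosMulMono A]

lemma MulPreservesDisjoint.mul_self_nonneg (hA : MulPreservesDisjoint A) (a : A) :
    0 ≤ a * a := by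
  have h := hA.mul_eq_zero_of_inf_eq_zero (posPart_inf_negPart_eq_zero a)
  have e : a * a = a⁺ * a⁺ + a⁻ * a⁻ := by
    conv_lhs => rw [← posPart_sub_negPart a]
    rw [sub_mul, mul_sub, mul_sub, h, mul_comm a⁻ a⁺, h]
    abel
  rw [e]
  exact add_nonneg (mul_nonneg (posPart_nonneg a) (posPart_nonneg a))
    (mul_nonneg (negPart_nonneg a) (negPart_nonneg a))

/-- With `c = (x - y)⁺` one gets `c * (x - y) = c * c`, so `(x + y) * c * c = c * (x * x - y * y)`
is both `≥ 0` and `≤ 0`; then `c ^ 3 ≤ x * c * c = 0`, and semiprimeness gives `c = 0`. -/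
lemma MulPreservesDisjoint.le_of_mul_self_le_mul_self (hA : MulPreservesDisjoint A)
    (hsemiprime : ∀ a : A, a * a = 0 → a = 0) {x y : A} (hx : 0 ≤ x) (hy : 0 ≤ y)
    (h : x * x ≤ y * y) : x ≤ y := by
  set c := (x - y)⁺
  have hc : 0 ≤ c := posPart_nonneg _
  have hcc : 0 ≤ c * c := mul_nonneg hc hc
  have hcd : c * (x - y) = c * c := by
    conv_lhs => rw [← posPart_sub_negPart (x - y)]
    rw [mul_sub, hA.mul_eq_zero_of_inf_eq_zero (posPart_inf_negPart_eq_zero _), sub_zero]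
  have hsum : x * (c * c) + y * (c * c) = 0 := by
    have e : x * (c * c) + y * (c * c) = -(c * (y * y - x * x)) := by
      calc x * (c * c) + y * (c * c) = (x + y) * (c * (x - y)) := by rw [hcd, add_mul]
        _ = -(c * (y * y - x * x)) := by
          rw [mul_left_comm, ← mul_neg, neg_sub, add_mul, mul_sub, mul_sub, mul_comm y x,
            sub_add_sub_cancel]
    refine le_antisymm ?_ (add_nonneg (mul_nonneg hx hcc) (mul_nonneg hy hcc))
    rw [e, neg_nonpos]
    exact mul_nonneg hc (sub_nonneg.mpr h)
  have hxcc : x * (c * c) = 0 :=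
    ((add_eq_zero_iff_of_nonneg (mul_nonneg hx hcc) (mul_nonneg hy hcc)).mp hsum).1
  have hcx : c ≤ x := sup_le (sub_le_self x hy) hx
  have hccc : c * c * c = 0 := by
    refine le_antisymm ?_ (mul_nonneg hcc hc)
    calc c * c * c ≤ c * c * x := mul_le_mul_of_nonneg_left hcx hcc
      _ = 0 := by rw [mul_comm, hxcc]
  have hc0 : c = 0 := hsemiprime c (hsemiprime (c * c) (by rw [← mul_assoc, hccc, zero_mul]))
  exact sub_nonpos.mp (posPart_eq_zero.mp hc0)

end FAlgebra

section GeometricMean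

variable {A : Type*} [NonUnitalCommRing A] [Module ℝ A] [SMulCommClass ℝ A A]

lemma gmUpperSet_mul (c a b : A) : gmUpperSet (c * a) (c * b) = (c * ·) '' gmUpperSet a b := by
  have e : ∀ θ : ℝ, c * (θ • a + θ⁻¹ • b) = θ • (c * a) + θ⁻¹ • (c * b) := fun θ => by
    rw [mul_add, mul_smul_comm, mul_smul_comm]
  ext x
  constructor
  · rintro ⟨θ, hθ, rfl⟩
    exact ⟨_, ⟨θ, hθ, rfl⟩, e θ⟩
  · rintro ⟨_, ⟨θ, hθ, rfl⟩, rfl⟩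
    exact ⟨θ, hθ, e θ⟩

variable [Lattice A] [IsOrderedAddMonoid A]

lemma MulPreservesDisjoint.gmLowerSet_mul (hA : MulPreservesDisjoint A) {c : A} (hc : 0 ≤ c)
    (a b : A) : gmLowerSet (c * a) (c * b) = (c * ·) '' gmLowerSet a b := by
  have e : ∀ σ : ℝ, c * (σ • a ⊓ σ⁻¹ • b) = σ • (c * a) ⊓ σ⁻¹ • (c * b) := fun σ => by
    rw [hA.mul_inf hc, mul_smul_comm, mul_smul_comm]
  ext x
  constructor
  · rintro ⟨σ, hσ, rfl⟩
    exact ⟨_, ⟨σ, hσ, rfl⟩, e σ⟩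
  · rintro ⟨_, ⟨σ, hσ, rfl⟩, rfl⟩
    exact ⟨σ, hσ, e σ⟩

variable [PosSMulMono ℝ A] [PosMulMono A]

/-- `c * m ≤ M` is immediate; conversely `2⁻¹ • M` is the supremum of
`gmLowerSet (c * a) (c * b) = c * gmLowerSet a b`, which lies below `c * (2⁻¹ • m)`. -/
lemma MulPreservesDisjoint.isGLB_gmUpperSet_mul (hA : MulPreservesDisjoint A)
    (harch : ∀ f g : A, (∀ n : ℕ, (n : ℝ) • f ≤ g) → f ≤ 0) {a b c m : A} (ha : 0 ≤ a)
    (hb : 0 ≤ b) (hc : 0 ≤ c) (hm : IsGLB (gmUpperSet a b) m)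
    (hexists : ∃ M, IsGLB (gmUpperSet (c * a) (c * b)) M) :
    IsGLB (gmUpperSet (c * a) (c * b)) (c * m) := by
  obtain ⟨M, hM⟩ := hexists
  suffices hMm : M = c * m from hMm ▸ hM
  refine le_antisymm ?_ (hM.2 ?_)
  · have hL := isLUB_gmLowerSet harch (mul_nonneg hc ha) (mul_nonneg hc hb) hM
    rw [← smul_le_smul_iff_of_pos_left (inv_pos.mpr (two_pos (α := ℝ))), ← mul_smul_comm]
    refine hL.2 ?_
    rw [hA.gmLowerSet_mul hc]
    rintro _ ⟨x, hx, rfl⟩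
    exact mul_le_mul_of_nonneg_left ((isLUB_gmLowerSet harch ha hb hm).1 hx) hc
  · rw [gmUpperSet_mul]
    rintro _ ⟨x, hx, rfl⟩
    exact mul_le_mul_of_nonneg_left (hm.1 hx) hc

variable [IsScalarTower ℝ A A]

lemma MulPreservesDisjoint.two_smul_mul_le (hA : MulPreservesDisjoint A) (f g : A) {u : ℝ}
    (hu : 0 < u) : (2 : ℝ) • (f * g) ≤ u • (f * f) + u⁻¹ • (g * g) := by
  have h := smul_nonneg (inv_nonneg.mpr hu.le) (hA.mul_self_nonneg (u • f - g))
  have e : u⁻¹ • ((u • f - g) * (u • f - g))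
      = u • (f * f) + u⁻¹ • (g * g) - (2 : ℝ) • (f * g) := by
    simp only [sub_mul, mul_sub, smul_mul_assoc, mul_smul_comm, smul_smul, smul_sub,
      mul_comm g f]
    match_scalars <;> field_simp
    ring
  rwa [e, sub_nonneg] at h

lemma MulPreservesDisjoint.four_smul_mul_le_mul_of_mem_gmUpperSet
    (hA : MulPreservesDisjoint A) {f g x y : A} (hf : 0 ≤ f) (hg : 0 ≤ g)
    (hx : x ∈ gmUpperSet f g) (hy : y ∈ gmUpperSet f g) :
    (4 : ℝ) • (f * g) ≤ x * y := by
  obtain ⟨φ, hφ, rfl⟩ := hx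
  obtain ⟨θ, hθ, rfl⟩ := hy
  have e : (φ • f + φ⁻¹ • g) * (θ • f + θ⁻¹ • g)
      = ((φ * θ) • (f * f) + (φ * θ)⁻¹ • (g * g)) + (φ / θ + (φ / θ)⁻¹) • (f * g) := by
    simp only [add_mul, mul_add, smul_mul_assoc, mul_smul_comm, mul_comm g f]
    match_scalars <;> field_simp
    ring
  rw [e, show (4 : ℝ) = 2 + 2 by norm_num, add_smul]
  exact add_le_add (hA.two_smul_mul_le f g (by positivity))
    (smul_le_smul_of_nonneg_right (two_le_add_inv (by positivity)) (mul_nonneg hf hg))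

lemma mul_le_of_mem_gmLowerSet {f g x y : A} (hf : 0 ≤ f) (hg : 0 ≤ g)
    (hx : x ∈ gmLowerSet f g) (hy : y ∈ gmLowerSet f g) : x * y ≤ f * g := by
  have := PosMulMono.toMulPosMono (α := A)
  have hx0 := nonneg_of_mem_gmLowerSet hf hg hx
  have hy0 := nonneg_of_mem_gmLowerSet hf hg hy
  have hfg := mul_nonneg hf hg
  obtain ⟨σ, hσ, rfl⟩ := hx
  obtain ⟨τ, hτ, rfl⟩ := hy
  rcases le_total σ τ with h | h
  · calc _ ≤ (σ • f) * (τ⁻¹ • g) :=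
          mul_le_mul_of_nonneg inf_le_left inf_le_right hx0 (hy0.trans inf_le_right)
      _ = (σ / τ) • (f * g) := by rw [smul_mul_assoc, mul_smul_comm, smul_smul, div_eq_mul_inv]
      _ ≤ f * g := smul_le_of_le_one_left hfg (div_le_one_of_le₀ h hτ.le)
  · calc _ ≤ (σ⁻¹ • g) * (τ • f) :=
          mul_le_mul_of_nonneg inf_le_right inf_le_left hx0 (hy0.trans inf_le_left)
      _ = (τ / σ) • (f * g) := by
          rw [smul_mul_assoc, mul_smul_comm, smul_smul, mul_comm g f, div_eq_inv_mul]
      _ ≤ f * g := smul_le_of_le_one_left hfg (div_le_one_of_le₀ h hσ.le)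

lemma MulPreservesDisjoint.four_smul_mul_le_mul_self_of_isGLB (hA : MulPreservesDisjoint A)
    (harch : ∀ f g : A, (∀ n : ℕ, (n : ℝ) • f ≤ g) → f ≤ 0) {f g m : A} (hf : 0 ≤ f)
    (hg : 0 ≤ g) (hgm : ∀ c : A, 0 ≤ c → ∃ M, IsGLB (gmUpperSet (c * f) (c * g)) M)
    (hm : IsGLB (gmUpperSet f g) m) : (4 : ℝ) • (f * g) ≤ m * m := by
  have hinf : ∀ c, 0 ≤ c → IsGLB (gmUpperSet (c * f) (c * g)) (c * m) := fun c hc =>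
    hA.isGLB_gmUpperSet_mul harch hf hg hc hm (hgm c hc)
  refine (hinf m (nonneg_of_isGLB_gmUpperSet hf hg hm)).2 ?_
  rw [gmUpperSet_mul]
  rintro _ ⟨x, hx, rfl⟩
  dsimp only
  rw [mul_comm m x]
  refine (hinf x (nonneg_of_mem_gmUpperSet hf hg hx)).2 ?_
  rw [gmUpperSet_mul]
  rintro _ ⟨y, hy, rfl⟩
  exact hA.four_smul_mul_le_mul_of_mem_gmUpperSet hf hg hx hy

lemma MulPreservesDisjoint.half_mul_half_le_of_isGLB (hA : MulPreservesDisjoint A)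
    (harch : ∀ f g : A, (∀ n : ℕ, (n : ℝ) • f ≤ g) → f ≤ 0) {f g m : A} (hf : 0 ≤ f)
    (hg : 0 ≤ g) (hgm : ∀ c : A, 0 ≤ c → ∃ M, IsGLB (gmUpperSet (c * f) (c * g)) M)
    (hm : IsGLB (gmUpperSet f g) m) : ((2⁻¹ : ℝ) • m) * ((2⁻¹ : ℝ) • m) ≤ f * g := by
  have hsup : ∀ c, 0 ≤ c → IsLUB (gmLowerSet (c * f) (c * g)) (c * (2⁻¹ : ℝ) • m) :=
    fun c hc => by
      rw [mul_smul_comm]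
      exact isLUB_gmLowerSet harch (mul_nonneg hc hf) (mul_nonneg hc hg)
        (hA.isGLB_gmUpperSet_mul harch hf hg hc hm (hgm c hc))
  have hw : 0 ≤ (2⁻¹ : ℝ) • m := smul_nonneg (by norm_num) (nonneg_of_isGLB_gmUpperSet hf hg hm)
  refine (hsup _ hw).2 ?_
  rw [hA.gmLowerSet_mul hw]
  rintro _ ⟨x, hx, rfl⟩
  dsimp only
  rw [mul_comm _ x]
  have hx0 := nonneg_of_mem_gmLowerSet hf hg hx
  refine (hsup x hx0).2 ?_
  rw [hA.gmLowerSet_mul hx0]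
  rintro _ ⟨y, hy, rfl⟩
  exact mul_le_of_mem_gmLowerSet hf hg hx hy

end GeometricMean

/-- **Proposition 2.1 (real case).** In a geometric mean closed semiprime Archimedean
`f`-algebra `A`, for `f, g ∈ A⁺` the element `f ⊠ g = 2⁻¹ ⬝ inf {θ•f + θ⁻¹•g : θ > 0}`
is the unique nonnegative square root of `f * g`. -/
theorem stmt0 {A : Type*} [NonUnitalCommRing A] [Lattice A]
    [CovariantClass A A (· + ·) (· ≤ ·)]
    [Module ℝ A] [PosSMulMono ℝ A]
    [IsScalarTower ℝ A A] [SMulCommClass ℝ A A]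
    (harch : ∀ f g : A, (∀ n : ℕ, (n : ℝ) • f ≤ g) → f ≤ 0)
    (hmulpos : ∀ a b : A, 0 ≤ a → 0 ≤ b → 0 ≤ a * b)
    (hfalg : ∀ a b c : A, a ⊓ b = 0 → 0 ≤ c → (c * a) ⊓ b = 0)
    (hsemiprime : ∀ a : A, a * a = 0 → a = 0)
    (hgm : ∀ f g : A, 0 ≤ f → 0 ≤ g →
      ∃ m, IsGLB {x | ∃ θ : ℝ, 0 < θ ∧ x = θ • f + θ⁻¹ • g} m)
    (f g : A) (hf : 0 ≤ f) (hg : 0 ≤ g)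
    (m : A) (hm : IsGLB {x | ∃ θ : ℝ, 0 < θ ∧ x = θ • f + θ⁻¹ • g} m) :
    0 ≤ (2⁻¹ : ℝ) • m ∧
    ((2⁻¹ : ℝ) • m) * ((2⁻¹ : ℝ) • m) = f * g ∧
    ∀ b : A, 0 ≤ b → b * b = f * g → b = (2⁻¹ : ℝ) • m := by
  have : IsOrderedAddMonoid A := { add_le_add_left := fun _ _ h c => add_le_add_left h c }
  have : PosMulMono A := ⟨fun c hc a b h => by
    simpa [mul_sub] using hmulpos c (b - a) hc (sub_nonneg.mpr h)⟩
  have hA : MulPreservesDisjoint A := hfalg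
  have hgm_mul : ∀ c : A, 0 ≤ c → ∃ M, IsGLB (gmUpperSet (c * f) (c * g)) M :=
    fun c hc => hgm _ _ (mul_nonneg hc hf) (mul_nonneg hc hg)
  have hw : 0 ≤ (2⁻¹ : ℝ) • m := smul_nonneg (by norm_num) (nonneg_of_isGLB_gmUpperSet hf hg hm)
  have hsq : ((2⁻¹ : ℝ) • m) * ((2⁻¹ : ℝ) • m) = f * g := by
    refine le_antisymm (hA.half_mul_half_le_of_isGLB harch hf hg hgm_mul hm) ?_
    rw [smul_mul_smul_comm, show (2⁻¹ * 2⁻¹ : ℝ) = 4⁻¹ by norm_num,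
      le_inv_smul_iff_of_pos (by norm_num)]
    exact hA.four_smul_mul_le_mul_self_of_isGLB harch hf hg hgm_mul hm
  refine ⟨hw, hsq, fun b hb hbb => le_antisymm ?_ ?_⟩
  · exact hA.le_of_mul_self_le_mul_self hsemiprime hb hw (hbb.trans hsq.symm).le
  · exact hA.le_of_mul_self_le_mul_self hsemiprime hw hb (hsq.trans hbb.symm).le
end

section
/- Let V be a real vector space, let F be a geometric mean closed Archimedean vector lattice, and let T : V × V → F be a bilinear, symmetric, positive semidefinite map. Then for all u, v ∈ V, the infimum inf{ |z|⁻¹·T(z·u − v, z·u − v) : z ∈ ℝ, z ≠ 0 } exists in F. -/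
/-!
Expanding `T (z • u - v) (z • u - v)` by bilinearity and symmetry, and writing `θ = |z|`, the
element `|z|⁻¹ • T (z • u - v) (z • u - v)` equals `θ • T u u + θ⁻¹ • T v v ∓ 2 • T u v`, the sign
being that of `z`. So the set in question is the union of the translates by `∓ 2 • T u v` of the set
whose infimum defines `2 • (T u u ⊠ T v v)`, and its infimum is the meet of the two translated
infima.
-/

open Set

/-- The set whose infimum is `2 • (f ⊠ g)`. -/
def geometricMeanSet {F : Type*} [AddCommGroup F] [Module ℝ F] (f g : F) : Set F :=
  {x | ∃ θ : ℝ, 0 < θ ∧ x = θ • f + θ⁻¹ • g}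

section Bilinear

variable {V F : Type*} [AddCommGroup V] [Module ℝ V] [AddCommGroup F] [Module ℝ F]
  (T : V →ₗ[ℝ] V →ₗ[ℝ] F)

theorem LinearMap.apply_smul_sub_smul_sub (hsymm : ∀ u v : V, T u v = T v u) (z : ℝ) (u v : V) :
    T (z • u - v) (z • u - v) = (z * z) • T u u + T v v - (2 * z) • T u v := by
  simp only [map_sub, map_smul, LinearMap.sub_apply, LinearMap.smul_apply, hsymm v u]
  module

theorem LinearMap.abs_inv_smul_apply_smul_sub_smul_sub_of_pos
    (hsymm : ∀ u v : V, T u v = T v u) {z : ℝ} (hz : 0 < z) (u v : V) :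
    |z|⁻¹ • T (z • u - v) (z • u - v) = z • T u u + z⁻¹ • T v v - (2 : ℝ) • T u v := by
  rw [abs_of_pos hz, T.apply_smul_sub_smul_sub hsymm]
  match_scalars <;> field_simp

theorem LinearMap.abs_inv_smul_apply_smul_sub_smul_sub_of_neg
    (hsymm : ∀ u v : V, T u v = T v u) {z : ℝ} (hz : z < 0) (u v : V) :
    |z|⁻¹ • T (z • u - v) (z • u - v) = (-z) • T u u + (-z)⁻¹ • T v v + (2 : ℝ) • T u v := by
  rw [abs_of_neg hz, T.apply_smul_sub_smul_sub hsymm]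
  match_scalars <;> field_simp [hz.ne]

theorem LinearMap.setOf_abs_inv_smul_apply_eq_union (hsymm : ∀ u v : V, T u v = T v u)
    (u v : V) :
    {x | ∃ z : ℝ, z ≠ 0 ∧ x = |z|⁻¹ • T (z • u - v) (z • u - v)} =
      (· - (2 : ℝ) • T u v) '' geometricMeanSet (T u u) (T v v) ∪
        (· + (2 : ℝ) • T u v) '' geometricMeanSet (T u u) (T v v) := by
  ext x
  constructor
  · rintro ⟨z, hz, rfl⟩
    rcases hz.lt_or_gt with hneg | hpos
    · exact .inr ⟨_, ⟨-z, neg_pos.2 hneg, rfl⟩,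
        (T.abs_inv_smul_apply_smul_sub_smul_sub_of_neg hsymm hneg u v).symm⟩
    · exact .inl ⟨_, ⟨z, hpos, rfl⟩,
        (T.abs_inv_smul_apply_smul_sub_smul_sub_of_pos hsymm hpos u v).symm⟩
  · rintro (⟨_, ⟨θ, hθ, rfl⟩, rfl⟩ | ⟨_, ⟨θ, hθ, rfl⟩, rfl⟩)
    · exact ⟨θ, hθ.ne', (T.abs_inv_smul_apply_smul_sub_smul_sub_of_pos hsymm hθ u v).symm⟩
    · refine ⟨-θ, neg_ne_zero.2 hθ.ne', ?_⟩
      rw [T.abs_inv_smul_apply_smul_sub_smul_sub_of_neg hsymm (neg_neg_of_pos hθ), neg_neg]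

end Bilinear

theorem stmt1_general {V : Type*} [AddCommGroup V] [Module ℝ V]
    {F : Type*} [AddCommGroup F] [Lattice F]
    [CovariantClass F F (· + ·) (· ≤ ·)]
    [Module ℝ F]
    (hgm : ∀ f g : F, 0 ≤ f → 0 ≤ g →
      ∃ m, IsGLB {x | ∃ θ : ℝ, 0 < θ ∧ x = θ • f + θ⁻¹ • g} m)
    (T : V →ₗ[ℝ] V →ₗ[ℝ] F)
    (hsymm : ∀ u v : V, T u v = T v u)
    (hpos : ∀ v : V, 0 ≤ T v v)
    (u v : V) :
    ∃ m, IsGLB {x | ∃ z : ℝ, z ≠ 0 ∧ x = |z|⁻¹ • T (z • u - v) (z • u - v)} m := by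
  obtain ⟨m, hm⟩ := hgm (T u u) (T v v) (hpos u) (hpos v)
  rw [T.setOf_abs_inv_smul_apply_eq_union hsymm]
  exact ⟨_, ((OrderIso.subRight _).isGLB_image'.2 hm).union
    ((OrderIso.addRight _).isGLB_image'.2 hm)⟩

/-- **Theorem 3.1(1) (real case).** For a bilinear, symmetric, positive semidefinite map
`T : V × V → F` into a geometric mean closed Archimedean vector lattice `F`, the infimum
`inf {|z|⁻¹ • T(z•u - v, z•u - v) : z ∈ ℝ, z ≠ 0}` exists in `F`. -/
theorem stmt1 {V : Type*} [AddCommGroup V] [Module ℝ V]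
    {F : Type*} [AddCommGroup F] [Lattice F]
    [CovariantClass F F (· + ·) (· ≤ ·)]
    [Module ℝ F] [PosSMulMono ℝ F]
    (harch : ∀ f g : F, (∀ n : ℕ, (n : ℝ) • f ≤ g) → f ≤ 0)
    (hgm : ∀ f g : F, 0 ≤ f → 0 ≤ g →
      ∃ m, IsGLB {x | ∃ θ : ℝ, 0 < θ ∧ x = θ • f + θ⁻¹ • g} m)
    (T : V →ₗ[ℝ] V →ₗ[ℝ] F)
    (hsymm : ∀ u v : V, T u v = T v u)
    (hpos : ∀ v : V, 0 ≤ T v v)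
    (u v : V) :
    ∃ m, IsGLB {x | ∃ z : ℝ, z ≠ 0 ∧ x = |z|⁻¹ • T (z • u - v) (z • u - v)} m :=
  stmt1_general hgm T hsymm hpos u v
end

section
/- (Cauchy–Schwarz inequality for vector-lattice-valued bilinear maps.) Let V be a real vector space, let F be a geometric mean closed Archimedean vector lattice, and let T : V × V → F be a bilinear, symmetric, positive semidefinite map. Then for all u, v ∈ V, |T(u,v)| ≤ T(u,u) ⊠ T(v,v), where |f| = f ∨ (−f). -/
theorem LinearMap.apply_smul_add_smul_self {R V F : Type*} [CommRing R]
    [AddCommGroup V] [Module R V] [AddCommGroup F] [Module R F]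
    (T : V →ₗ[R] V →ₗ[R] F) (hsymm : ∀ u v : V, T u v = T v u) (a b : R) (u v : V) :
    T (a • u + b • v) (a • u + b • v) = (a * a) • T u u + (2 * a * b) • T u v + (b * b) • T v v := by
  simp only [map_add, map_smul, LinearMap.add_apply, LinearMap.smul_apply, hsymm v u]
  module

/-- Positivity of `T w w` at `w = √θ • u - (√θ)⁻¹ • v`. -/
theorem two_smul_apply_le_of_pos {V F : Type*} [AddCommGroup V] [Module ℝ V]
    [AddCommGroup F] [Preorder F] [AddLeftMono F] [Module ℝ F]
    (T : V →ₗ[ℝ] V →ₗ[ℝ] F) (hsymm : ∀ u v : V, T u v = T v u) (hpos : ∀ v : V, 0 ≤ T v v)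
    {θ : ℝ} (hθ : 0 < θ) (u v : V) :
    (2 : ℝ) • T u v ≤ θ • T u u + θ⁻¹ • T v v := by
  have hsqrt : √θ * √θ = θ := Real.mul_self_sqrt hθ.le
  have hsqrt_ne : √θ ≠ 0 := (Real.sqrt_pos.mpr hθ).ne'
  have h := hpos (√θ • u + (-(√θ)⁻¹) • v)
  rw [T.apply_smul_add_smul_self hsymm] at h
  have hcross : 2 * √θ * -(√θ)⁻¹ = -2 := by field_simp
  have hinv : -(√θ)⁻¹ * -(√θ)⁻¹ = θ⁻¹ := by rw [neg_mul_neg, ← mul_inv, hsqrt]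
  rw [hsqrt, hcross, hinv] at h
  rw [← sub_nonneg]
  convert h using 1
  module

theorem two_smul_abs_apply_le_of_pos {V F : Type*} [AddCommGroup V] [Module ℝ V]
    [AddCommGroup F] [Lattice F] [AddLeftMono F] [Module ℝ F] [PosSMulMono ℝ F]
    (T : V →ₗ[ℝ] V →ₗ[ℝ] F) (hsymm : ∀ u v : V, T u v = T v u)
    (hpos : ∀ v : V, 0 ≤ T v v) {θ : ℝ} (hθ : 0 < θ) (u v : V) :
    (2 : ℝ) • |T u v| ≤ θ • T u u + θ⁻¹ • T v v := by
  rw [← le_inv_smul_iff_of_pos two_pos]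
  refine abs_le'.mpr ⟨?_, ?_⟩ <;> rw [le_inv_smul_iff_of_pos two_pos]
  · exact two_smul_apply_le_of_pos T hsymm hpos hθ u v
  · simpa using two_smul_apply_le_of_pos T hsymm hpos hθ u (-v)

theorem stmt3_general {V : Type*} [AddCommGroup V] [Module ℝ V]
    {F : Type*} [AddCommGroup F] [Lattice F]
    [CovariantClass F F (· + ·) (· ≤ ·)]
    [Module ℝ F] [PosSMulMono ℝ F]
    (T : V →ₗ[ℝ] V →ₗ[ℝ] F)
    (hsymm : ∀ u v : V, T u v = T v u)
    (hpos : ∀ v : V, 0 ≤ T v v)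
    (u v : V) (m₁ : F)
    (hm₁ : IsGLB {x | ∃ θ : ℝ, 0 < θ ∧ x = θ • T u u + θ⁻¹ • T v v} m₁) :
    |T u v| ≤ (2⁻¹ : ℝ) • m₁ := by
  rw [le_inv_smul_iff_of_pos two_pos]
  refine hm₁.2 ?_
  rintro x ⟨θ, hθ, rfl⟩
  exact two_smul_abs_apply_le_of_pos T hsymm hpos hθ u v

/-- **Theorem 3.1(3) (real case), Cauchy–Schwarz inequality.** `|T(u,v)| ≤ T(u,u) ⊠ T(v,v)`,
where `T(u,u) ⊠ T(v,v) = 2⁻¹ • m₁` and `m₁` is the infimum of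
`{θ • T(u,u) + θ⁻¹ • T(v,v) : θ > 0}`. -/
theorem stmt3 {V : Type*} [AddCommGroup V] [Module ℝ V]
    {F : Type*} [AddCommGroup F] [Lattice F]
    [CovariantClass F F (· + ·) (· ≤ ·)]
    [Module ℝ F] [PosSMulMono ℝ F]
    (harch : ∀ f g : F, (∀ n : ℕ, (n : ℝ) • f ≤ g) → f ≤ 0)
    (hgm : ∀ f g : F, 0 ≤ f → 0 ≤ g →
      ∃ m, IsGLB {x | ∃ θ : ℝ, 0 < θ ∧ x = θ • f + θ⁻¹ • g} m)
    (T : V →ₗ[ℝ] V →ₗ[ℝ] F)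
    (hsymm : ∀ u v : V, T u v = T v u)
    (hpos : ∀ v : V, 0 ≤ T v v)
    (u v : V) (m₁ : F)
    (hm₁ : IsGLB {x | ∃ θ : ℝ, 0 < θ ∧ x = θ • T u u + θ⁻¹ • T v v} m₁) :
    |T u v| ≤ (2⁻¹ : ℝ) • m₁ :=
  stmt3_general T hsymm hpos u v m₁ hm₁
end

section
/- (Cauchy–Schwarz inequality for f-algebra-valued bilinear maps.) Let V be a real vector space, let A be a geometric mean closed semiprime Archimedean f-algebra, and let T : V × V → A be a bilinear, symmetric, positive semidefinite map. Then for all u, v ∈ V, |T(u,v)|² ≤ T(u,u)·T(v,v), where |f| = f ∨ (−f). -/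
/-!
Positive semidefiniteness gives `2 |T u v| ≤ θ T(u,u) + θ⁻¹ T(v,v)` for every `θ > 0`, so with
`a = |T u v|`, `f = T(u,u)`, `g = T(v,v)` squaring yields `4 (a² - f g) ≤ y(θ)²` for
`y(θ) = θ f - θ⁻¹ g`. Pointwise `y` vanishes at `θ = √(g/f)`, but that `θ` varies from point to
point, so we walk along a geometric grid `θᵢ = rⁱ s` instead. As `y` is increasing, the smaller of
`y(θᵢ)²` and `y(θᵢ₊₁)²` is at most `y(θᵢ)⁺² ⊔ y(θᵢ₊₁)⁻²` up to `2 (r - 1) f g`, which bounds the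
square of the overlap `y(θᵢ)⁻ ⊓ y(θᵢ₊₁)⁺`. Since `y(θᵢ)⁺` and `y(θᵢ)⁻` are disjoint, chaining
these bounds leaves only the end terms `y(s)⁺² ≤ s² f²` and `y(rᵐ s)⁻² ≤ (rᵐ s)⁻² g²`, which are
small. The Archimedean property then gives `a² ≤ f g`.
-/

section LatticeOrderedGroup

variable {α : Type*} [Lattice α] [AddCommGroup α] [AddLeftMono α]

theorem add_inf_add_le {a b c d : α} (ha : 0 ≤ a) (hd : 0 ≤ d) :
    (a + b) ⊓ (c + d) ≤ a + b ⊓ c + d :=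
  calc (a + b) ⊓ (c + d) ≤ (b + (a + d)) ⊓ (c + (a + d)) :=
        inf_le_inf (by rw [← add_assoc, add_comm b a]; exact le_add_of_nonneg_right hd)
          (by rw [add_left_comm]; exact le_add_of_nonneg_left ha)
    _ = a + b ⊓ c + d := by rw [← inf_add]; abel

theorem posPart_inf_negPart_eq_zero_of_le {x y : α} (h : x ≤ y) : x⁺ ⊓ y⁻ = 0 :=
  le_antisymm ((inf_le_inf_right _ (posPart_mono h)).trans (posPart_inf_negPart_eq_zero y).le)
    (le_inf (posPart_nonneg x) (negPart_nonneg y))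

theorem negPart_inf_posPart_le_sub {x y : α} (h : x ≤ y) : x⁻ ⊓ y⁺ ≤ y - x := by
  have hy : y⁺ ≤ x⁺ + (y - x) :=
    sup_le (by simpa using add_le_add_left (le_posPart x) (y - x))
      (add_nonneg (posPart_nonneg x) (sub_nonneg.2 h))
  calc x⁻ ⊓ y⁺ ≤ (x⁻ + (y - x)) ⊓ (x⁺ + (y - x)) :=
        inf_le_inf (le_add_of_nonneg_right (sub_nonneg.2 h)) hy
    _ = y - x := by rw [← inf_add, inf_comm, posPart_inf_negPart_eq_zero, zero_add]

theorem le_sup_of_forall_le_sup {w : α} {p q : ℕ → α} (hp : 0 ≤ p 0)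
    (hpq : ∀ i, p i ⊓ q i = 0) (hw : ∀ i, w ≤ p i ⊔ q (i + 1)) (m : ℕ) :
    w ≤ p 0 ⊔ q (m + 1) := by
  let := AddCommGroup.toDistribLattice α
  induction m with
  | zero => exact hw 0
  | succ m ih =>
    calc w ≤ (p 0 ⊔ q (m + 1)) ⊓ (p (m + 1) ⊔ q (m + 2)) := le_inf ih (hw (m + 1))
      _ = (p 0 ⊓ p (m + 1) ⊔ q (m + 1) ⊓ p (m + 1)) ⊔ (p 0 ⊔ q (m + 1)) ⊓ q (m + 2) := by
        rw [inf_sup_left, inf_sup_right]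
      _ ≤ p 0 ⊔ q (m + 2) := by
        rw [inf_comm (q _), hpq]
        exact sup_le (sup_le (inf_le_left.trans le_sup_left) (hp.trans le_sup_left))
          (inf_le_right.trans le_sup_right)

end LatticeOrderedGroup

namespace MulPreservesDisjoint

variable {A : Type*} [NonUnitalCommRing A] [Lattice A]

theorem mul_inf_mul_eq_zero (hA : MulPreservesDisjoint A) {a b c d : A} (hab : a ⊓ b = 0)
    (hc : 0 ≤ c) (hd : 0 ≤ d) : (c * a) ⊓ (d * b) = 0 := by
  have hcab : b ⊓ (c * a) = 0 := by rw [inf_comm]; exact hA a b c hab hc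
  rw [inf_comm]
  exact hA b (c * a) d hcab hd

theorem mul_eq_zero_of_inf_eq_zero_s6 (hA : MulPreservesDisjoint A) {a b : A} (hab : a ⊓ b = 0) :
    a * b = 0 := by
  have h := hA.mul_inf_mul_eq_zero hab (hab ▸ inf_le_right : 0 ≤ b) (hab ▸ inf_le_left : 0 ≤ a)
  rwa [mul_comm b a, inf_idem] at h

variable [AddLeftMono A]

theorem mul_self_eq_posPart_add_negPart (hA : MulPreservesDisjoint A) (x : A) :
    x * x = x⁺ * x⁺ + x⁻ * x⁻ := by
  have h := hA.mul_eq_zero_of_inf_eq_zero_s6 (posPart_inf_negPart_eq_zero x)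
  conv_lhs => rw [← posPart_sub_negPart x]
  rw [sub_mul, mul_sub, mul_sub, mul_comm x⁻ x⁺, h]
  abel

theorem mul_self_inf_mul_self (hA : MulPreservesDisjoint A) {x y : A} (hx : 0 ≤ x) (hy : 0 ≤ y) :
    (x * x) ⊓ (y * y) = (x ⊓ y) * (x ⊓ y) := by
  set m := x ⊓ y
  have hm : 0 ≤ m := le_inf hx hy
  have hsq : ∀ z, z * z = (z + m) * (z - m) + m * m := fun z => by
    rw [add_mul, mul_sub, mul_sub, mul_comm m z]; abel
  have hdisj : (x - m) ⊓ (y - m) = 0 := by rw [← inf_sub, sub_self]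
  rw [hsq x, hsq y, ← inf_add,
    hA.mul_inf_mul_eq_zero hdisj (add_nonneg hx hm) (add_nonneg hy hm), zero_add]

variable [PosMulMono A]

theorem le_add_mul_self_inf (hA : MulPreservesDisjoint A) {e x y : A} (hx : e ≤ x * x)
    (hy : e ≤ y * y) : e ≤ x⁺ * x⁺ + (x⁻ ⊓ y⁺) * (x⁻ ⊓ y⁺) + y⁻ * y⁻ := by
  rw [← hA.mul_self_inf_mul_self (negPart_nonneg x) (posPart_nonneg y)]
  calc e ≤ (x⁺ * x⁺ + x⁻ * x⁻) ⊓ (y⁺ * y⁺ + y⁻ * y⁻) := by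
        rw [← hA.mul_self_eq_posPart_add_negPart, ← hA.mul_self_eq_posPart_add_negPart]
        exact le_inf hx hy
    _ ≤ _ := add_inf_add_le (mul_nonneg (posPart_nonneg x) (posPart_nonneg x))
        (mul_nonneg (negPart_nonneg y) (negPart_nonneg y))

end MulPreservesDisjoint

section AmGmGap

variable {A : Type*} [AddCommGroup A] [Module ℝ A]

/-- Pointwise (for `f, g ≥ 0`) this vanishes exactly at `θ = √(g / f)`, where
`θ • f + θ⁻¹ • g` attains its infimum `2 √(f g)`. -/
noncomputable def amgmGap (f g : A) (θ : ℝ) : A := θ • f - θ⁻¹ • g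

variable {f g : A}

theorem amgmGap_mul_sub_amgmGap {r s : ℝ} (hr : r ≠ 0) (hs : s ≠ 0) :
    amgmGap f g (r * s) - amgmGap f g s = (r - 1) • (s • f + (r * s)⁻¹ • g) := by
  simp only [amgmGap]
  match_scalars
  · ring
  · field_simp
    ring

variable [Lattice A] [IsOrderedAddMonoid A] [PosSMulMono ℝ A]

theorem amgmGap_mono (hf : 0 ≤ f) (hg : 0 ≤ g) {s t : ℝ} (hs : 0 < s) (hst : s ≤ t) :
    amgmGap f g s ≤ amgmGap f g t :=
  sub_le_sub (smul_le_smul_of_nonneg_right hst hf)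
    (smul_le_smul_of_nonneg_right ((inv_le_inv₀ (hs.trans_le hst) hs).2 hst) hg)

theorem posPart_amgmGap_le (hf : 0 ≤ f) (hg : 0 ≤ g) {θ : ℝ} (hθ : 0 ≤ θ) :
    (amgmGap f g θ)⁺ ≤ θ • f :=
  sup_le (sub_le_self _ (smul_nonneg (inv_nonneg.2 hθ) hg)) (smul_nonneg hθ hf)

theorem negPart_amgmGap_le (hf : 0 ≤ f) (hg : 0 ≤ g) {θ : ℝ} (hθ : 0 ≤ θ) :
    (amgmGap f g θ)⁻ ≤ θ⁻¹ • g :=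
  sup_le (by rw [amgmGap, neg_sub]; exact sub_le_self _ (smul_nonneg hθ hf))
    (smul_nonneg (inv_nonneg.2 hθ) hg)

end AmGmGap

section AmGmGapMul

variable {A : Type*} [NonUnitalCommRing A] [Module ℝ A] [IsScalarTower ℝ A A] [SMulCommClass ℝ A A]
  {f g : A}

theorem add_mul_self_eq_amgmGap_mul_self_add {θ : ℝ} (hθ : θ ≠ 0) :
    (θ • f + θ⁻¹ • g) * (θ • f + θ⁻¹ • g) = amgmGap f g θ * amgmGap f g θ + (4 : ℝ) • (f * g) := by
  simp only [amgmGap, add_mul, mul_add, sub_mul, mul_sub, smul_mul_smul_comm, mul_comm g f]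
  match_scalars <;> field_simp; ring

end AmGmGapMul

theorem nonpos_of_forall_le_smul {A : Type*} [AddCommGroup A] [Lattice A] [Module ℝ A]
    [PosSMulMono ℝ A] (harch : ∀ x y : A, (∀ n : ℕ, (n : ℝ) • x ≤ y) → x ≤ 0)
    {x d : A} (hd : 0 ≤ d) (h : ∀ ε : ℝ, 0 < ε → x ≤ ε • d) : x ≤ 0 := by
  refine (le_posPart x).trans (harch _ d fun n => ?_)
  rcases n.eq_zero_or_pos with rfl | hn
  · simpa using hd
  · have hn' : (0 : ℝ) < n := Nat.cast_pos.2 hn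
    calc (n : ℝ) • x⁺ ≤ (n : ℝ) • ((n : ℝ)⁻¹ • d) :=
          smul_le_smul_of_nonneg_left
            (sup_le (h _ (inv_pos.2 hn')) (smul_nonneg (inv_nonneg.2 hn'.le) hd)) hn'.le
      _ = d := smul_inv_smul₀ hn'.ne' d

section CauchySchwarz

variable {A : Type*} [NonUnitalCommRing A] [Lattice A] [IsOrderedAddMonoid A] [PosMulMono A]
  [Module ℝ A] [PosSMulMono ℝ A] [IsScalarTower ℝ A A] [SMulCommClass ℝ A A] {f g : A}

attribute [local instance] PosMulMono.toMulPosMono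

theorem smul_sub_le_amgmGap_mul_self {a : A} (ha : 0 ≤ a) {θ : ℝ} (hθ : θ ≠ 0)
    (h : (2 : ℝ) • a ≤ θ • f + θ⁻¹ • g) :
    (4 : ℝ) • (a * a - f * g) ≤ amgmGap f g θ * amgmGap f g θ := by
  have hsq := mul_self_le_mul_self (smul_nonneg zero_le_two ha) h
  rw [add_mul_self_eq_amgmGap_mul_self_add hθ, smul_mul_smul_comm] at hsq
  norm_num at hsq
  rwa [smul_sub, sub_le_iff_le_add]

theorem posPart_amgmGap_mul_self_le (hf : 0 ≤ f) (hg : 0 ≤ g) {θ : ℝ} (hθ : 0 ≤ θ) :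
    (amgmGap f g θ)⁺ * (amgmGap f g θ)⁺ ≤ (θ * θ) • (f * f) := by
  rw [← smul_mul_smul_comm]
  exact mul_self_le_mul_self (posPart_nonneg _) (posPart_amgmGap_le hf hg hθ)

theorem negPart_amgmGap_mul_self_le (hf : 0 ≤ f) (hg : 0 ≤ g) {θ : ℝ} (hθ : 0 ≤ θ) :
    (amgmGap f g θ)⁻ * (amgmGap f g θ)⁻ ≤ (θ⁻¹ * θ⁻¹) • (g * g) := by
  rw [← smul_mul_smul_comm]
  exact mul_self_le_mul_self (negPart_nonneg _) (negPart_amgmGap_le hf hg hθ)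

theorem negPart_inf_posPart_amgmGap_mul_self_le (hf : 0 ≤ f) (hg : 0 ≤ g) {r s : ℝ}
    (hr : 1 ≤ r) (hs : 0 < s) :
    ((amgmGap f g s)⁻ ⊓ (amgmGap f g (r * s))⁺) * ((amgmGap f g s)⁻ ⊓ (amgmGap f g (r * s))⁺)
      ≤ (2 * (r - 1)) • (f * g) := by
  set m := (amgmGap f g s)⁻ ⊓ (amgmGap f g (r * s))⁺
  have hrs : 0 < r * s := by positivity
  have hm : 0 ≤ m := le_inf (negPart_nonneg _) (posPart_nonneg _)
  have hmd : m ≤ (r - 1) • (s • f + (r * s)⁻¹ • g) :=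
    (negPart_inf_posPart_le_sub (amgmGap_mono hf hg hs (le_mul_of_one_le_left hs.le hr))).trans_eq
      (amgmGap_mul_sub_amgmGap (by positivity) hs.ne')
  have hmf : m * f ≤ s⁻¹ • (g * f) := by
    rw [← smul_mul_assoc]
    exact mul_le_mul_of_nonneg_right (inf_le_left.trans (negPart_amgmGap_le hf hg hs.le)) hf
  have hmg : m * g ≤ (r * s) • (f * g) := by
    rw [← smul_mul_assoc]
    exact mul_le_mul_of_nonneg_right (inf_le_right.trans (posPart_amgmGap_le hf hg hrs.le)) hg
  calc m * m ≤ m * ((r - 1) • (s • f + (r * s)⁻¹ • g)) := mul_le_mul_of_nonneg_left hmd hm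
    _ = (r - 1) • (s • (m * f) + (r * s)⁻¹ • (m * g)) := by simp only [mul_add, mul_smul_comm]
    _ ≤ (r - 1) • (s • (s⁻¹ • (g * f)) + (r * s)⁻¹ • ((r * s) • (f * g))) := by gcongr
    _ = (2 * (r - 1)) • (f * g) := by
      rw [mul_comm g f]
      match_scalars
      field_simp
      ring

theorem sub_le_posPart_mul_self_sup_negPart_mul_self (hA : MulPreservesDisjoint A) (hf : 0 ≤ f)
    (hg : 0 ≤ g) {e : A} (he : ∀ θ : ℝ, 0 < θ → e ≤ amgmGap f g θ * amgmGap f g θ) {r s : ℝ}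
    (hr : 1 ≤ r) (hs : 0 < s) :
    e - (2 * (r - 1)) • (f * g) ≤
      (amgmGap f g s)⁺ * (amgmGap f g s)⁺ ⊔ (amgmGap f g (r * s))⁻ * (amgmGap f g (r * s))⁻ := by
  set x := amgmGap f g s
  set y := amgmGap f g (r * s)
  have hrs : 0 < r * s := by positivity
  have hdisj : x⁺ * x⁺ ⊓ y⁻ * y⁻ = 0 :=
    hA.mul_inf_mul_eq_zero
      (posPart_inf_negPart_eq_zero_of_le (amgmGap_mono hf hg hs (le_mul_of_one_le_left hs.le hr)))
      (posPart_nonneg _) (negPart_nonneg _)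
  rw [← zero_add (_ ⊔ _), ← hdisj, inf_add_sup, sub_le_iff_le_add]
  calc e ≤ x⁺ * x⁺ + (x⁻ ⊓ y⁺) * (x⁻ ⊓ y⁺) + y⁻ * y⁻ :=
        hA.le_add_mul_self_inf (he s hs) (he (r * s) hrs)
    _ ≤ x⁺ * x⁺ + (2 * (r - 1)) • (f * g) + y⁻ * y⁻ := by
      gcongr
      exact negPart_inf_posPart_amgmGap_mul_self_le hf hg hr hs
    _ = x⁺ * x⁺ + y⁻ * y⁻ + (2 * (r - 1)) • (f * g) := add_right_comm _ _ _

theorem sub_le_of_forall_le_amgmGap_mul_self (hA : MulPreservesDisjoint A) (hf : 0 ≤ f)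
    (hg : 0 ≤ g) {e : A} (he : ∀ θ : ℝ, 0 < θ → e ≤ amgmGap f g θ * amgmGap f g θ) {r s : ℝ}
    (hr : 1 ≤ r) (hs : 0 < s) (m : ℕ) :
    e - (2 * (r - 1)) • (f * g) ≤
      (s * s) • (f * f) + ((r ^ (m + 1) * s)⁻¹ * (r ^ (m + 1) * s)⁻¹) • (g * g) := by
  set x : ℕ → A := fun i => amgmGap f g (r ^ i * s)
  have hchain : e - (2 * (r - 1)) • (f * g) ≤ (x 0)⁺ * (x 0)⁺ ⊔ (x (m + 1))⁻ * (x (m + 1))⁻ := by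
    refine le_sup_of_forall_le_sup (p := fun i => (x i)⁺ * (x i)⁺) (q := fun i => (x i)⁻ * (x i)⁻)
      (mul_nonneg (posPart_nonneg _) (posPart_nonneg _))
      (fun i => hA.mul_inf_mul_eq_zero (posPart_inf_negPart_eq_zero _) (posPart_nonneg _)
        (negPart_nonneg _)) (fun i => ?_) m
    have hstep : r ^ (i + 1) * s = r * (r ^ i * s) := by ring
    simp only [x, hstep]
    exact sub_le_posPart_mul_self_sup_negPart_mul_self hA hf hg he hr (by positivity)
  calc e - (2 * (r - 1)) • (f * g) ≤ (x 0)⁺ * (x 0)⁺ + (x (m + 1))⁻ * (x (m + 1))⁻ :=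
        hchain.trans <| sup_le
          (le_add_of_nonneg_right (mul_nonneg (negPart_nonneg _) (negPart_nonneg _)))
          (le_add_of_nonneg_left (mul_nonneg (posPart_nonneg _) (posPart_nonneg _)))
    _ ≤ _ := by
      gcongr
      · simpa [x] using posPart_amgmGap_mul_self_le hf hg hs.le
      · exact negPart_amgmGap_mul_self_le hf hg (by positivity)

theorem MulPreservesDisjoint.mul_self_le_mul
    (harch : ∀ x y : A, (∀ n : ℕ, (n : ℝ) • x ≤ y) → x ≤ 0) (hA : MulPreservesDisjoint A)
    {a : A} (ha : 0 ≤ a) (hf : 0 ≤ f) (hg : 0 ≤ g)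
    (h : ∀ θ : ℝ, 0 < θ → (2 : ℝ) • a ≤ θ • f + θ⁻¹ • g) : a * a ≤ f * g := by
  have he (θ : ℝ) (hθ : 0 < θ) : (4 : ℝ) • (a * a - f * g) ≤ amgmGap f g θ * amgmGap f g θ :=
    smul_sub_le_amgmGap_mul_self ha hθ.ne' (h θ hθ)
  suffices (4 : ℝ) • (a * a - f * g) ≤ 0 by
    exact sub_nonpos.1 (nonpos_of_smul_nonpos_of_pos_left this (by norm_num))
  have hD : 0 ≤ f * g + (f * f + g * g) :=
    add_nonneg (mul_nonneg hf hg) (add_nonneg (mul_nonneg hf hf) (mul_nonneg hg hg))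
  refine nonpos_of_forall_le_smul harch hD fun ε hε => ?_
  set r : ℝ := 1 + ε / 2 with hr_def
  have hr : 1 < r := by linarith
  obtain ⟨n, hn⟩ := pow_unbounded_of_one_lt ε⁻¹ hr
  set c : ℝ := (r ^ (n + 1))⁻¹
  have hc : c * c ≤ ε := by
    have hc1 : c ≤ 1 := inv_le_one_of_one_le₀ (one_le_pow₀ hr.le)
    have hcε : c < ε := inv_lt_of_inv_lt₀ hε (hn.trans_le (pow_le_pow_right₀ hr.le n.le_succ))
    nlinarith [show 0 < c by positivity]
  have hgrid := sub_le_of_forall_le_amgmGap_mul_self hA hf hg he hr.le (s := c) (by positivity)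
    (2 * n + 1)
  have htop : r ^ (2 * n + 1 + 1) * c = r ^ (n + 1) := by
    rw [show 2 * n + 1 + 1 = (n + 1) + (n + 1) by ring, pow_add, mul_assoc,
      mul_inv_cancel₀ (by positivity), mul_one]
  rw [htop, show 2 * (r - 1) = ε by ring, sub_le_iff_le_add] at hgrid
  calc (4 : ℝ) • (a * a - f * g) ≤ (c * c) • (f * f) + (c * c) • (g * g) + ε • (f * g) := hgrid
    _ ≤ ε • (f * f) + ε • (g * g) + ε • (f * g) := by gcongr
    _ = ε • (f * g + (f * f + g * g)) := by rw [smul_add, smul_add]; abel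

end CauchySchwarz

theorem two_smul_abs_le_of_posSemidef {V A : Type*} [AddCommGroup V] [Module ℝ V]
    [AddCommGroup A] [Lattice A] [IsOrderedAddMonoid A] [Module ℝ A] [PosSMulMono ℝ A]
    (T : V →ₗ[ℝ] V →ₗ[ℝ] A) (hsymm : ∀ u v : V, T u v = T v u) (hpos : ∀ v : V, 0 ≤ T v v)
    (u v : V) {θ : ℝ} (hθ : 0 < θ) : (2 : ℝ) • |T u v| ≤ θ • T u u + θ⁻¹ • T v v := by
  have key (w : V) : (2 : ℝ) • T w v ≤ θ • T w w + θ⁻¹ • T v v := by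
    have h := smul_nonneg (inv_nonneg.2 hθ.le) (hpos (θ • w - v))
    have hexp : θ⁻¹ • T (θ • w - v) (θ • w - v) = θ • T w w + θ⁻¹ • T v v - (2 : ℝ) • T w v := by
      simp only [map_sub, map_smul, LinearMap.sub_apply, LinearMap.smul_apply, hsymm v w]
      match_scalars <;> field_simp
      ring
    rwa [hexp, sub_nonneg] at h
  have hu := key u
  have hnu := key (-u)
  simp only [map_neg, LinearMap.neg_apply, neg_neg] at hnu
  rw [← le_inv_smul_iff_of_pos two_pos] at hu hnu ⊢
  exact abs_le'.2 ⟨hu, hnu⟩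

theorem stmt6_general {V : Type*} [AddCommGroup V] [Module ℝ V]
    {A : Type*} [NonUnitalCommRing A] [Lattice A]
    [CovariantClass A A (· + ·) (· ≤ ·)]
    [Module ℝ A] [PosSMulMono ℝ A]
    [IsScalarTower ℝ A A] [SMulCommClass ℝ A A]
    (harch : ∀ f g : A, (∀ n : ℕ, (n : ℝ) • f ≤ g) → f ≤ 0)
    (hmulpos : ∀ a b : A, 0 ≤ a → 0 ≤ b → 0 ≤ a * b)
    (hfalg : ∀ a b c : A, a ⊓ b = 0 → 0 ≤ c → (c * a) ⊓ b = 0)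
    (T : V →ₗ[ℝ] V →ₗ[ℝ] A)
    (hsymm : ∀ u v : V, T u v = T v u)
    (hpos : ∀ v : V, 0 ≤ T v v)
    (u v : V) :
    |T u v| * |T u v| ≤ T u u * T v v := by
  have : IsOrderedAddMonoid A := { add_le_add_left := fun _ _ h c => add_le_add_left h c }
  have : PosMulMono A := ⟨fun a ha b c hbc => by
    simpa only [mul_sub, sub_nonneg] using hmulpos a (c - b) ha (sub_nonneg.2 hbc)⟩
  exact MulPreservesDisjoint.mul_self_le_mul harch hfalg (abs_nonneg _) (hpos u) (hpos v)
    fun θ hθ => two_smul_abs_le_of_posSemidef T hsymm hpos u v hθ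

/-- **Corollary 3.2(3) (real case), Cauchy–Schwarz inequality.** For a bilinear, symmetric,
positive semidefinite map `T` into a geometric mean closed semiprime Archimedean
`f`-algebra `A`, `|T(u,v)|² ≤ T(u,u) * T(v,v)`. -/
theorem stmt6 {V : Type*} [AddCommGroup V] [Module ℝ V]
    {A : Type*} [NonUnitalCommRing A] [Lattice A]
    [CovariantClass A A (· + ·) (· ≤ ·)]
    [Module ℝ A] [PosSMulMono ℝ A]
    [IsScalarTower ℝ A A] [SMulCommClass ℝ A A]
    (harch : ∀ f g : A, (∀ n : ℕ, (n : ℝ) • f ≤ g) → f ≤ 0)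
    (hmulpos : ∀ a b : A, 0 ≤ a → 0 ≤ b → 0 ≤ a * b)
    (hfalg : ∀ a b c : A, a ⊓ b = 0 → 0 ≤ c → (c * a) ⊓ b = 0)
    (hsemiprime : ∀ a : A, a * a = 0 → a = 0)
    (hgm : ∀ f g : A, 0 ≤ f → 0 ≤ g →
      ∃ m, IsGLB {x | ∃ θ : ℝ, 0 < θ ∧ x = θ • f + θ⁻¹ • g} m)
    (T : V →ₗ[ℝ] V →ₗ[ℝ] A)
    (hsymm : ∀ u v : V, T u v = T v u)
    (hpos : ∀ v : V, 0 ≤ T v v)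
    (u v : V) :
    |T u v| * |T u v| ≤ T u u * T v v :=
  stmt6_general harch hmulpos hfalg T hsymm hpos u v
end

section
/- Let E and F be weighted geometric mean closed Archimedean vector lattices, let n ≥ 1, and let r₁, …, rₙ ∈ (0,1) satisfy r₁ + ⋯ + rₙ = 1. If T : E → F is a positive linear map, then for all f₁, …, fₙ ∈ E, T( △ₖ₌₁ⁿ (fₖ, rₖ) ) ≤ △ₖ₌₁ⁿ ( T(|fₖ|), rₖ ). -/
/-- The set whose infimum (when it exists) is the weighted geometric mean
`△ₖ₌₁ⁿ (fₖ, rₖ) = inf { Σₖ rₖ·θₖ·|fₖ| : θₖ ∈ (0,∞), ∏ₖ θₖ^{rₖ} = 1 }`. -/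
def wSet {E : Type*} [AddCommGroup E] [Lattice E] [Module ℝ E]
    (n : ℕ) (f : Fin n → E) (r : Fin n → ℝ) : Set E :=
  {x | ∃ θ : Fin n → ℝ, (∀ k, 0 < θ k) ∧ (∏ k, θ k ^ r k) = 1 ∧
      x = ∑ k, (r k * θ k) • |f k|}

/-- **Proposition 4.1(1) (real case).** If `T : E → F` is a positive linear map between
weighted geometric mean closed Archimedean vector lattices, then
`T(△ₖ₌₁ⁿ (fₖ, rₖ)) ≤ △ₖ₌₁ⁿ (T(|fₖ|), rₖ)`. -/
theorem stmt8 {E : Type*} [AddCommGroup E] [Lattice E]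
    [CovariantClass E E (· + ·) (· ≤ ·)]
    [Module ℝ E] [PosSMulMono ℝ E]
    {F : Type*} [AddCommGroup F] [Lattice F]
    [CovariantClass F F (· + ·) (· ≤ ·)]
    [Module ℝ F] [PosSMulMono ℝ F]
    (harchE : ∀ f g : E, (∀ n : ℕ, (n : ℝ) • f ≤ g) → f ≤ 0)
    (harchF : ∀ f g : F, (∀ n : ℕ, (n : ℝ) • f ≤ g) → f ≤ 0)
    (hwgmE : ∀ (n : ℕ) (f : Fin n → E) (r : Fin n → ℝ),
      (∀ k, 0 < r k ∧ r k < 1) → (∑ k, r k) = 1 → ∃ m, IsGLB (wSet n f r) m)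
    (hwgmF : ∀ (n : ℕ) (f : Fin n → F) (r : Fin n → ℝ),
      (∀ k, 0 < r k ∧ r k < 1) → (∑ k, r k) = 1 → ∃ m, IsGLB (wSet n f r) m)
    (T : E →ₗ[ℝ] F) (hT : ∀ x : E, 0 ≤ x → 0 ≤ T x)
    (n : ℕ) (hn : 1 ≤ n)
    (r : Fin n → ℝ) (hr : ∀ k, 0 < r k ∧ r k < 1) (hr1 : (∑ k, r k) = 1)
    (f : Fin n → E)
    (m : E) (hm : IsGLB (wSet n f r) m)
    (m' : F) (hm' : IsGLB (wSet n (fun k => T |f k|) r) m') :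
    T m ≤ m' := by
  apply hm'.2
  rintro x ⟨θ, hθ, hprod, rfl⟩
  have hy : m ≤ ∑ k, (r k * θ k) • |f k| := hm.1 ⟨θ, hθ, hprod, rfl⟩
  have hmono : T m ≤ T (∑ k, (r k * θ k) • |f k|) := by
    have h := hT _ (sub_nonneg.mpr hy)
    rw [map_sub] at h
    exact sub_nonneg.mp h
  calc T m ≤ T (∑ k, (r k * θ k) • |f k|) := hmono
    _ = ∑ k, (r k * θ k) • T (|f k|) := by simp [map_sum, map_smul]
    _ = ∑ k, (r k * θ k) • |T (|f k|)| := by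
        refine Finset.sum_congr rfl fun k _ => ?_
        rw [abs_of_nonneg (hT _ (abs_nonneg _))]
end

section
/- Let E and F be weighted geometric mean closed Archimedean vector lattices, let n ≥ 1, and let r₁, …, rₙ ∈ (0,1) satisfy r₁ + ⋯ + rₙ = 1. A linear map T : E → F is a vector lattice homomorphism if and only if T( △ₖ₌₁ⁿ (fₖ, rₖ) ) = △ₖ₌₁ⁿ ( T(fₖ), rₖ ) for all f₁, …, fₙ ∈ E. -/
/-!
Lattice homomorphisms are monotone, so `T m` is a lower bound of the transported set. For the
converse inequality the infimum over the non-compact family of admissible weights is replaced by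
a finite one: for every `ε > 0` a finite grid `S` of weights with geometric mean `≥ 1` dominates
every admissible `θ` up to `ε` in each coordinate, whence `inf_{Θ ∈ S} Σ rₖ Θₖ |fₖ| ≤ m + ε u`
with `u = Σ rₖ |fₖ|`. Finite infima are preserved by `T`, and the Archimedean property of `F`
lets `ε → 0`.

Conversely, by AM-GM the weighted geometric mean of the constant family `x, …, x` is `|x|`, so
a map preserving these means preserves `|·|`, and hence `⊔` via `x ⊔ y = (x + y + |y - x|) / 2`.
-/

open Finset Filter

section Weights

variable {n : ℕ} {r : Fin n → ℝ}

def wgmWeights (r : Fin n → ℝ) : Set (Fin n → ℝ) :=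
  {θ | (∀ k, 0 < θ k) ∧ ∏ k, θ k ^ r k = 1}

lemma exists_mem_wgmWeights_le (hr1 : ∑ k, r k = 1) {Θ : Fin n → ℝ} (hΘ : ∀ k, 0 < Θ k)
    (h1 : 1 ≤ ∏ k, Θ k ^ r k) : ∃ θ ∈ wgmWeights r, θ ≤ Θ := by
  set c := ∏ k, Θ k ^ r k
  have hc : 0 < c := one_pos.trans_le h1
  refine ⟨fun k => Θ k / c, ⟨fun k => div_pos (hΘ k) hc, ?_⟩, fun k => div_le_self (hΘ k).le h1⟩
  calc ∏ k, (Θ k / c) ^ r k = c / c ^ ∑ k, r k := by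
        simp_rw [Real.div_rpow (hΘ _).le hc.le]
        rw [prod_div_distrib, ← Real.rpow_sum_of_pos hc]
    _ = 1 := by rw [hr1, Real.rpow_one, div_self hc.ne']

lemma prod_rpow_ite_eq (hr1 : ∑ k, r k = 1) {ε : ℝ} (hε : 0 < ε) {N : ℝ} (hN : 0 ≤ N)
    (j : Fin n) :
    ∏ k, (if k = j then N * ε else ε) ^ r k = ε * N ^ r j := by
  have hsplit : ∀ k, (if k = j then N * ε else ε) ^ r k =
      ε ^ r k * if k = j then N ^ r j else 1 := by
    intro k
    split_ifs with hkj
    · rw [hkj, Real.mul_rpow hN hε.le, mul_comm]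
    · rw [mul_one]
  simp_rw [hsplit, prod_mul_distrib, ← Real.rpow_sum_of_pos hε, hr1, Real.rpow_one,
    prod_ite_eq' univ j, if_pos (mem_univ j)]

lemma exists_nat_forall_one_le_mul_rpow (hr : ∀ k, 0 < r k) {ε : ℝ} (hε : 0 < ε) :
    ∃ N : ℕ, 1 ≤ N ∧ ∀ j, 1 ≤ ε * (N : ℝ) ^ r j := by
  have hlarge : ∀ j, ∀ᶠ N : ℕ in atTop, 1 ≤ ε * (N : ℝ) ^ r j := fun j =>
    (((tendsto_rpow_atTop (hr j)).comp tendsto_natCast_atTop_atTop).const_mul_atTop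
      hε).eventually_ge_atTop 1
  exact ((eventually_ge_atTop 1).and (eventually_all.2 hlarge)).exists

lemma exists_finset_net_wgmWeights (hr : ∀ k, 0 < r k) (hr1 : ∑ k, r k = 1) {ε : ℝ}
    (hε : 0 < ε) :
    ∃ S : Finset (Fin n → ℝ), (∀ Θ ∈ S, ∃ θ ∈ wgmWeights r, θ ≤ Θ) ∧
      ∀ θ ∈ wgmWeights r, ∃ Θ ∈ S, ∀ k, Θ k ≤ θ k + ε := by
  obtain ⟨N, hN1, hN⟩ := exists_nat_forall_one_le_mul_rpow hr hε
  -- A bounded `θ` is rounded up to the grid `{ε, 2ε, …, Nε}ⁿ`; if `θ j > Nε`, the choice of `N`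
  -- makes `(ε, …, Nε, …, ε)` (with `Nε` at `j`) have geometric mean `≥ 1`.
  let G : Finset ℝ := (Icc 1 N).image fun i : ℕ => i * ε
  have hG : ∀ i : ℕ, 1 ≤ i → i ≤ N → (i : ℝ) * ε ∈ G := fun i h1 h2 =>
    mem_image_of_mem _ (mem_Icc.2 ⟨h1, h2⟩)
  refine ⟨(Fintype.piFinset fun _ => G).filter fun Θ => 1 ≤ ∏ k, Θ k ^ r k, ?_, ?_⟩
  · intro Θ hΘ
    rw [mem_filter, Fintype.mem_piFinset] at hΘ
    refine exists_mem_wgmWeights_le hr1 (fun k => ?_) hΘ.2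
    obtain ⟨i, hi, hik⟩ := mem_image.1 (hΘ.1 k)
    rw [← hik]
    have : (1 : ℝ) ≤ i := by exact_mod_cast (mem_Icc.1 hi).1
    positivity
  rintro θ ⟨hθ, hθ1⟩
  by_cases hbounded : ∀ k, θ k ≤ N * ε
  swap
  · obtain ⟨j, hj⟩ := not_forall.1 hbounded
    rw [not_le] at hj
    refine ⟨fun k => if k = j then N * ε else ε, ?_, fun k => ?_⟩
    · rw [mem_filter, Fintype.mem_piFinset, prod_rpow_ite_eq hr1 hε N.cast_nonneg]
      refine ⟨fun k => ?_, hN j⟩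
      split_ifs
      · exact hG N hN1 le_rfl
      · simpa using hG 1 le_rfl hN1
    · dsimp only
      split_ifs with hkj
      · rw [hkj]; linarith
      · linarith [hθ k]
  refine ⟨fun k => ⌈θ k / ε⌉₊ * ε, ?_, fun k => ?_⟩
  · rw [mem_filter, Fintype.mem_piFinset]
    refine ⟨fun k => hG _ (Nat.one_le_iff_ne_zero.2 ?_) ?_, ?_⟩
    · exact (Nat.ceil_pos.2 (div_pos (hθ k) hε)).ne'
    · exact Nat.ceil_le.2 ((div_le_iff₀ hε).2 (hbounded k))
    · rw [← hθ1]
      refine prod_le_prod (fun k _ => (Real.rpow_pos_of_pos (hθ k) _).le) fun k _ => ?_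
      exact Real.rpow_le_rpow (hθ k).le ((div_le_iff₀ hε).1 (Nat.le_ceil _)) (hr k).le
  · have hceil := Nat.ceil_lt_add_one (div_pos (hθ k) hε).le
    have hround := (lt_div_iff₀ hε).1 (by linarith : ((⌈θ k / ε⌉₊ : ℝ)) - 1 < θ k / ε)
    linarith

end Weights

section LatticeHom

variable {α β : Type*} [Lattice α] [Lattice β]

lemma monotone_of_map_sup {g : α → β} (hg : ∀ x y, g (x ⊔ y) = g x ⊔ g y) : Monotone g :=
  fun x y hxy => by
    rw [← sup_eq_right.2 hxy, hg]
    exact le_sup_left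

variable {E F : Type*} [AddCommGroup E] [Lattice E] [Module ℝ E]
  [AddCommGroup F] [Lattice F] [Module ℝ F]

lemma LinearMap.map_abs_of_map_sup (T : E →ₗ[ℝ] F) (hT : ∀ x y, T (x ⊔ y) = T x ⊔ T y) (x : E) :
    T |x| = |T x| := by
  rw [abs, abs, hT, map_neg]

variable [IsOrderedAddMonoid E] [IsOrderedAddMonoid F]

lemma LinearMap.map_inf_of_map_sup (T : E →ₗ[ℝ] F) (hT : ∀ x y, T (x ⊔ y) = T x ⊔ T y) (x y : E) :
    T (x ⊓ y) = T x ⊓ T y := by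
  rw [← neg_neg (x ⊓ y), neg_inf, map_neg, hT, map_neg, map_neg, neg_sup, neg_neg, neg_neg]

lemma LinearMap.map_sup_of_map_abs (T : E →ₗ[ℝ] F) (hT : ∀ x, T |x| = |T x|) (x y : E) :
    T (x ⊔ y) = T x ⊔ T y := by
  rw [sup_eq_half_smul_add_add_abs_sub' ℝ, sup_eq_half_smul_add_add_abs_sub' ℝ, map_smul, map_add,
    map_add, hT, map_sub]

end LatticeHom

section WeightedGeometricMean

variable {E F : Type*} [AddCommGroup E] [Lattice E] [Module ℝ E] [AddCommGroup F] [Lattice F]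
  [Module ℝ F] {n : ℕ} {r : Fin n → ℝ}

def wgmSum (f : Fin n → E) (r θ : Fin n → ℝ) : E :=
  ∑ k, (r k * θ k) • |f k|

lemma wgmSum_mem_wSet (f : Fin n → E) {θ : Fin n → ℝ} (hθ : θ ∈ wgmWeights r) :
    wgmSum f r θ ∈ wSet n f r :=
  ⟨θ, hθ.1, hθ.2, rfl⟩

lemma wSet_eq_image_wgmSum (f : Fin n → E) (r : Fin n → ℝ) :
    wSet n f r = wgmSum f r '' wgmWeights r := by
  ext x
  constructor
  · rintro ⟨θ, hθ, hθ1, rfl⟩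
    exact ⟨θ, ⟨hθ, hθ1⟩, rfl⟩
  · rintro ⟨θ, hθ, rfl⟩
    exact wgmSum_mem_wSet f hθ

lemma wgmSum_add_const (f : Fin n → E) (r θ : Fin n → ℝ) (ε : ℝ) :
    wgmSum f r (fun k => θ k + ε) = wgmSum f r θ + ε • wgmSum f r 1 := by
  simp only [wgmSum, smul_sum, smul_smul, ← sum_add_distrib, ← add_smul, Pi.one_apply]
  congr! 2
  ring

lemma wgmSum_const (x : E) (r θ : Fin n → ℝ) :
    wgmSum (fun _ => x) r θ = (∑ k, r k * θ k) • |x| :=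
  (sum_smul ..).symm

lemma LinearMap.map_wgmSum (T : E →ₗ[ℝ] F) (hT : ∀ x, T |x| = |T x|) (f : Fin n → E)
    (r θ : Fin n → ℝ) : T (wgmSum f r θ) = wgmSum (fun k => T (f k)) r θ := by
  simp only [wgmSum, map_sum, map_smul, hT]

lemma LinearMap.wSet_map (T : E →ₗ[ℝ] F) (hT : ∀ x, T |x| = |T x|) (f : Fin n → E)
    (r : Fin n → ℝ) : wSet n (fun k => T (f k)) r = T '' wSet n f r := by
  simp only [wSet_eq_image_wgmSum, Set.image_image, T.map_wgmSum hT]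

variable [IsOrderedAddMonoid E] [PosSMulMono ℝ E] [IsOrderedAddMonoid F] [PosSMulMono ℝ F]

lemma wgmSum_mono (f : Fin n → E) (hr : ∀ k, 0 ≤ r k) : Monotone (wgmSum f r) :=
  fun _ _ h => sum_le_sum fun k _ =>
    smul_le_smul_of_nonneg_right (mul_le_mul_of_nonneg_left (h k) (hr k)) (abs_nonneg _)

lemma isLeast_wSet_const (hr : ∀ k, 0 ≤ r k) (hr1 : ∑ k, r k = 1) (x : E) :
    IsLeast (wSet n (fun _ => x) r) |x| := by
  rw [wSet_eq_image_wgmSum]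
  refine ⟨⟨1, ⟨fun _ => one_pos, by simp⟩, by simp [wgmSum_const, hr1]⟩, ?_⟩
  rintro _ ⟨θ, ⟨hθ, hθ1⟩, rfl⟩
  have amgm := Real.geom_mean_le_arith_mean_weighted univ r θ (fun k _ => hr k) hr1
    fun k _ => (hθ k).le
  rw [hθ1] at amgm
  rw [wgmSum_const]
  simpa using smul_le_smul_of_nonneg_right amgm (abs_nonneg x)

lemma le_of_forall_pos_le_add_smul_s9 (harch : ∀ f g : F, (∀ n : ℕ, (n : ℝ) • f ≤ g) → f ≤ 0)
    {a b c : F} (h : ∀ ε : ℝ, 0 < ε → b ≤ a + ε • c) : b ≤ a := by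
  rw [← sub_nonpos]
  refine harch _ (c ⊔ 0) fun N => ?_
  rcases N.eq_zero_or_pos with rfl | hN
  · simp
  have hN' : (0 : ℝ) < N := by exact_mod_cast hN
  calc (N : ℝ) • (b - a) ≤ (N : ℝ) • ((N : ℝ)⁻¹ • c) :=
        smul_le_smul_of_nonneg_left (sub_le_iff_le_add'.2 (h _ (inv_pos.2 hN'))) hN'.le
    _ = c := by rw [smul_smul, mul_inv_cancel₀ hN'.ne', one_smul]
    _ ≤ c ⊔ 0 := le_sup_left

lemma inf'_wgmSum_le_add_smul {f : Fin n → E} {m : E} (hr : ∀ k, 0 ≤ r k)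
    (hm : IsGLB (wSet n f r) m) {ε : ℝ} {S : Finset (Fin n → ℝ)} (hS : S.Nonempty)
    (hnet : ∀ θ ∈ wgmWeights r, ∃ Θ ∈ S, ∀ k, Θ k ≤ θ k + ε) :
    S.inf' hS (wgmSum f r) ≤ m + ε • wgmSum f r 1 := by
  rw [← sub_le_iff_le_add]
  refine hm.2 ?_
  rw [wSet_eq_image_wgmSum]
  rintro _ ⟨θ, hθ, rfl⟩
  obtain ⟨Θ, hΘS, hΘ⟩ := hnet θ hθ
  rw [sub_le_iff_le_add, ← wgmSum_add_const]
  exact (inf'_le _ hΘS).trans (wgmSum_mono f hr hΘ)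

theorem LinearMap.isGLB_wSet_map_of_map_sup
    (harch : ∀ f g : F, (∀ n : ℕ, (n : ℝ) • f ≤ g) → f ≤ 0) (hr : ∀ k, 0 < r k)
    (hr1 : ∑ k, r k = 1) (T : E →ₗ[ℝ] F) (hT : ∀ x y, T (x ⊔ y) = T x ⊔ T y) {f : Fin n → E}
    {m : E} (hm : IsGLB (wSet n f r) m) : IsGLB (wSet n (fun k => T (f k)) r) (T m) := by
  have hmono := monotone_of_map_sup hT
  rw [T.wSet_map (T.map_abs_of_map_sup hT)]
  refine ⟨hmono.mem_lowerBounds_image hm.1, fun b hb => ?_⟩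
  refine le_of_forall_pos_le_add_smul_s9 harch (c := T (wgmSum f r 1)) fun ε hε => ?_
  obtain ⟨S, hSweights, hnet⟩ := exists_finset_net_wgmWeights hr hr1 hε
  have hS : S.Nonempty := by
    obtain ⟨Θ, hΘ, -⟩ := hnet 1 ⟨fun _ => one_pos, by simp⟩
    exact ⟨Θ, hΘ⟩
  have hb_inf : b ≤ T (S.inf' hS (wgmSum f r)) := by
    rw [apply_inf'_eq_inf'_comp hS T (T.map_inf_of_map_sup hT)]
    refine le_inf' _ _ fun Θ hΘ => ?_
    obtain ⟨θ, hθ, hθΘ⟩ := hSweights Θ hΘ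
    exact (hb ⟨_, wgmSum_mem_wSet f hθ, rfl⟩).trans
      (hmono (wgmSum_mono f (fun k => (hr k).le) hθΘ))
  calc b ≤ T (S.inf' hS (wgmSum f r)) := hb_inf
    _ ≤ T (m + ε • wgmSum f r 1) :=
        hmono (inf'_wgmSum_le_add_smul (fun k => (hr k).le) hm hS hnet)
    _ = T m + ε • T (wgmSum f r 1) := by rw [map_add, map_smul]

lemma LinearMap.map_abs_of_isGLB_wSet_map (hr : ∀ k, 0 ≤ r k) (hr1 : ∑ k, r k = 1)
    (T : E →ₗ[ℝ] F)
    (hT : ∀ f m, IsGLB (wSet n f r) m → IsGLB (wSet n (fun k => T (f k)) r) (T m)) (x : E) :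
    T |x| = |T x| :=
  (hT _ _ (isLeast_wSet_const hr hr1 x).isGLB).unique (isLeast_wSet_const hr hr1 (T x)).isGLB

end WeightedGeometricMean

theorem stmt9_general {E : Type*} [AddCommGroup E] [Lattice E]
    [CovariantClass E E (· + ·) (· ≤ ·)]
    [Module ℝ E] [PosSMulMono ℝ E]
    {F : Type*} [AddCommGroup F] [Lattice F]
    [CovariantClass F F (· + ·) (· ≤ ·)]
    [Module ℝ F] [PosSMulMono ℝ F]
    (harchF : ∀ f g : F, (∀ n : ℕ, (n : ℝ) • f ≤ g) → f ≤ 0)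
    (n : ℕ)
    (r : Fin n → ℝ) (hr : ∀ k, 0 < r k ∧ r k < 1) (hr1 : (∑ k, r k) = 1)
    (T : E →ₗ[ℝ] F) :
    (∀ f g : E, T (f ⊔ g) = T f ⊔ T g) ↔
      (∀ (f : Fin n → E) (m : E), IsGLB (wSet n f r) m →
        IsGLB (wSet n (fun k => T (f k)) r) (T m)) := by
  have : IsOrderedAddMonoid E := { add_le_add_left := fun _ _ h c => add_le_add_left h c }
  have : IsOrderedAddMonoid F := { add_le_add_left := fun _ _ h c => add_le_add_left h c }
  have hr0 : ∀ k, 0 < r k := fun k => (hr k).1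
  exact ⟨fun hT _ _ hm => T.isGLB_wSet_map_of_map_sup harchF hr0 hr1 hT hm,
    fun hT => T.map_sup_of_map_abs (T.map_abs_of_isGLB_wSet_map (fun k => (hr0 k).le) hr1 hT)⟩

/-- **Proposition 4.1(2) (real case).** A linear map `T : E → F` between weighted geometric
mean closed Archimedean vector lattices is a vector lattice homomorphism if and only if
`T(△ₖ₌₁ⁿ (fₖ, rₖ)) = △ₖ₌₁ⁿ (T(fₖ), rₖ)` for all `f₁, …, fₙ`. -/
theorem stmt9 {E : Type*} [AddCommGroup E] [Lattice E]
    [CovariantClass E E (· + ·) (· ≤ ·)]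
    [Module ℝ E] [PosSMulMono ℝ E]
    {F : Type*} [AddCommGroup F] [Lattice F]
    [CovariantClass F F (· + ·) (· ≤ ·)]
    [Module ℝ F] [PosSMulMono ℝ F]
    (harchE : ∀ f g : E, (∀ n : ℕ, (n : ℝ) • f ≤ g) → f ≤ 0)
    (harchF : ∀ f g : F, (∀ n : ℕ, (n : ℝ) • f ≤ g) → f ≤ 0)
    (hwgmE : ∀ (n : ℕ) (f : Fin n → E) (r : Fin n → ℝ),
      (∀ k, 0 < r k ∧ r k < 1) → (∑ k, r k) = 1 → ∃ m, IsGLB (wSet n f r) m)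
    (hwgmF : ∀ (n : ℕ) (f : Fin n → F) (r : Fin n → ℝ),
      (∀ k, 0 < r k ∧ r k < 1) → (∑ k, r k) = 1 → ∃ m, IsGLB (wSet n f r) m)
    (n : ℕ) (hn : 1 ≤ n)
    (r : Fin n → ℝ) (hr : ∀ k, 0 < r k ∧ r k < 1) (hr1 : (∑ k, r k) = 1)
    (T : E →ₗ[ℝ] F) :
    (∀ f g : E, T (f ⊔ g) = T f ⊔ T g) ↔
      (∀ (f : Fin n → E) (m : E), IsGLB (wSet n f r) m →
        IsGLB (wSet n (fun k => T (f k)) r) (T m)) :=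
  stmt9_general harchF n r hr hr1 T
end

section
/- Let A be a weighted geometric mean closed Archimedean Φ-algebra. Then for every a ∈ A⁺ and every n ∈ ℕ, n ≥ 1, there exists a unique b ∈ A⁺ with bⁿ = a (denoted a^{1/n}). Consequently a^q exists in A⁺ for every positive rational q. -/
/-!
Write `p ⊥ q` for `p ⊓ q = 0`. For `a ≥ 0` and `N = m + 1`, the weighted geometric mean of
`(a, 1)` with weights `(1/N, m/N)` is `b = inf_{v > 0} (v⁻ᵐ a + m v) / N`, the infimum of the
tangent lines of the concave function `a ↦ a^{1/N}`. Lying below each of them, and above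
`u⁻ᵐ (a ⊓ uᴺ)` by AM–GM, `b` satisfies `(b - u)⁺ ⊥ (uᴺ - a)⁺` and `(u - b)⁺ ⊥ (a - uᴺ)⁺` for
every `u > 0`. Since `bᴺ - uᴺ = S (b - u)` with `S ≥ 0`, the f-algebra axiom turns these into
`(bᴺ - t)⁺ ⊥ (t - a)⁺` and `(a - t)⁺ ⊥ (t - bᴺ)⁺` for every real `t > 0`. In an Archimedean
f-algebra such a separation of `y` from `z` forces `y ≤ z`: running `t` through the grid `k/n`
gives `y - z ≤ (1 + y²)/n`.

Uniqueness: `A` is semiprime, and if `xᴺ = yᴺ` then `d = (x - y)⁺` satisfies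
`d^(N+1) ≤ d² S = d (x - y) S = 0` with `S = ∑ xⁱ y^(N-1-i)`.
-/

open Finset

/-- Weighted AM–GM for the weights `1/(m+1), m/(m+1)`, with equality at `v = u`. -/
lemma inv_pow_le_amgm (m : ℕ) {u v : ℝ} (hu : 0 < u) (hv : 0 < v) :
    (u ^ m)⁻¹ ≤ ((m : ℝ) + 1)⁻¹ * ((v ^ m)⁻¹ + m * v / u ^ (m + 1)) := by
  have h := one_add_mul_le_pow (a := u / v - 1) (by linarith [div_pos hu hv]) (m + 1)
  rw [add_sub_cancel, div_pow, le_div_iff₀ (by positivity)] at h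
  push_cast at h
  rw [← sub_nonneg]
  have e : ((m : ℝ) + 1)⁻¹ * ((v ^ m)⁻¹ + m * v / u ^ (m + 1)) - (u ^ m)⁻¹ =
      (u ^ (m + 1) - (1 + (m + 1) * (u / v - 1)) * v ^ (m + 1)) /
        (((m : ℝ) + 1) * v ^ m * u ^ (m + 1)) := by
    field_simp
    ring
  rw [e]
  exact div_nonneg (by linarith) (by positivity)

lemma rpow_inv_mul_rpow_eq_one_iff (m : ℕ) {s v : ℝ} (hs : 0 ≤ s) (hv : 0 ≤ v) :
    s ^ ((m : ℝ) + 1)⁻¹ * v ^ (m * ((m : ℝ) + 1)⁻¹) = 1 ↔ s * v ^ m = 1 := by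
  rw [Real.rpow_natCast_mul hv, ← Real.mul_rpow hs (pow_nonneg hv m)]
  refine ⟨fun h => ?_, fun h => by rw [h, Real.one_rpow]⟩
  have := Real.rpow_inv_natCast_pow (mul_nonneg hs (pow_nonneg hv m)) m.succ_ne_zero
  rwa [Nat.cast_succ, h, one_pow, eq_comm] at this

noncomputable def rootWeights (m : ℕ) : Fin 2 → ℝ := ![((m : ℝ) + 1)⁻¹, m * ((m : ℝ) + 1)⁻¹]

lemma rootWeights_mem_Ioo {m : ℕ} (hm : 1 ≤ m) (k : Fin 2) :
    rootWeights m k ∈ Set.Ioo 0 1 := by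
  have hm' : (1 : ℝ) ≤ m := by exact_mod_cast hm
  fin_cases k <;> simp only [rootWeights, Fin.zero_eta, Fin.mk_one, Matrix.cons_val_zero,
    Matrix.cons_val_one] <;> refine ⟨by positivity, ?_⟩
  · exact inv_lt_one_of_one_lt₀ (by linarith)
  · rw [← div_eq_mul_inv, div_lt_one (by positivity)]
    linarith

lemma sum_rootWeights (m : ℕ) : ∑ k, rootWeights m k = 1 := by
  rw [Fin.sum_univ_two]
  simp only [rootWeights, Matrix.cons_val_zero, Matrix.cons_val_one]
  field_simp
  ring

section LatticeOrderedGroup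

variable {E : Type*} [AddCommGroup E] [Lattice E] [IsOrderedAddMonoid E]

lemma le_add_of_forall_inf_eq_zero {x g : E} {P Q : ℕ → E} (hP : ∀ k, 0 ≤ P k)
    (hx : ∀ k, x ≤ P k + Q k) (hPQ : ∀ k, P k ⊓ Q k = 0) (hQ0 : Q 0 ≤ g)
    (hQ : ∀ k, Q (k + 1) ≤ Q k + g) (K : ℕ) : x ≤ g + P K := by
  induction K with
  | zero =>
    calc x ≤ P 0 + Q 0 := hx 0
      _ ≤ P 0 + g := by gcongr
      _ = g + P 0 := add_comm _ _
  | succ K ih =>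
    have hle : x - g - P (K + 1) ≤ P K ⊓ Q K := by
      refine le_inf ((sub_le_self _ (hP (K + 1))).trans (sub_le_iff_le_add'.2 ih)) ?_
      rw [sub_sub, sub_le_iff_le_add]
      calc x ≤ P (K + 1) + Q (K + 1) := hx (K + 1)
        _ ≤ P (K + 1) + (Q K + g) := by gcongr; exact hQ K
        _ = Q K + (g + P (K + 1)) := by abel
    rw [hPQ K, sub_nonpos] at hle
    exact sub_le_iff_le_add'.1 hle

lemma posPart_add_le {p q : E} (hq : 0 ≤ q) : (p + q)⁺ ≤ p⁺ + q :=
  sup_le (by gcongr; exact le_posPart p) (add_nonneg (posPart_nonneg p) hq)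

end LatticeOrderedGroup

section VectorLattice

variable {E : Type*} [AddCommGroup E] [Lattice E] [IsOrderedAddMonoid E] [Module ℝ E]

lemma mem_wSet_rootWeights_iff {a e x : E} (ha : 0 ≤ a) (he : 0 ≤ e) (m : ℕ) :
    x ∈ wSet 2 ![a, e] (rootWeights m) ↔
      ∃ v : ℝ, 0 < v ∧ x = ((m : ℝ) + 1)⁻¹ • ((v ^ m)⁻¹ • a + (m * v) • e) := by
  simp only [wSet, rootWeights, Set.mem_ofPred_eq, Fin.forall_fin_two, Fin.prod_univ_two,
    Fin.sum_univ_two, Matrix.cons_val_zero, Matrix.cons_val_one, abs_of_nonneg ha, abs_of_nonneg he]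
  constructor
  · rintro ⟨θ, ⟨h0, h1⟩, hprod, rfl⟩
    rw [rpow_inv_mul_rpow_eq_one_iff m h0.le h1.le] at hprod
    refine ⟨θ 1, h1, ?_⟩
    rw [eq_inv_of_mul_eq_one_left hprod]
    module
  · rintro ⟨v, hv, rfl⟩
    refine ⟨![(v ^ m)⁻¹, v], ⟨by simp [hv], by simpa using hv⟩, ?_, ?_⟩
    · simp only [Matrix.cons_val_zero, Matrix.cons_val_one]
      rw [rpow_inv_mul_rpow_eq_one_iff m (by positivity) hv.le]
      exact inv_mul_cancel₀ (by positivity)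
    · simp only [Matrix.cons_val_zero, Matrix.cons_val_one]
      module

variable [PosSMulMono ℝ E]

lemma inf_eq_zero_of_smul_inf_eq_zero {c : ℝ} (hc : 0 < c) {p q : E} (hp : 0 ≤ p)
    (hq : 0 ≤ q) (h : c • p ⊓ q = 0) : p ⊓ q = 0 := by
  have hd : 0 < min c 1 := lt_min hc one_pos
  have hle : min c 1 • (p ⊓ q) ≤ 0 := by
    rw [← h, show min c 1 • (p ⊓ q) = min c 1 • p ⊓ min c 1 • q from
      (OrderIso.smulRight hd).map_inf p q]
    exact inf_le_inf (smul_le_smul_of_nonneg_right (min_le_left c 1) hp)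
      (by simpa using smul_le_smul_of_nonneg_right (min_le_right c 1) hq)
  simpa [hd.ne'] using le_antisymm hle (smul_nonneg hd.le (le_inf hp hq))

lemma posPart_inf_negPart_eq_zero_of_smul_le {c : ℝ} (hc : 0 < c) {x y : E}
    (h : c • x ≤ y⁺) : x⁺ ⊓ y⁻ = 0 := by
  refine inf_eq_zero_of_smul_inf_eq_zero hc (posPart_nonneg x) (negPart_nonneg y) ?_
  refine le_antisymm ?_ (le_inf (smul_nonneg hc.le (posPart_nonneg x)) (negPart_nonneg y))
  calc c • x⁺ ⊓ y⁻ ≤ y⁺ ⊓ y⁻ := by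
        refine inf_le_inf_right _ ?_
        calc c • x⁺ = c • x ⊔ c • 0 := (OrderIso.smulRight hc).map_sup x 0
          _ ≤ y⁺ := by rw [smul_zero]; exact sup_le h (posPart_nonneg y)
    _ = 0 := posPart_inf_negPart_eq_zero y

end VectorLattice

section IsGLB

variable {E : Type*} [AddCommGroup E] [Lattice E] [IsOrderedAddMonoid E] [Module ℝ E]
  [PosSMulMono ℝ E] {a e b : E} {m : ℕ}

lemma isGLB_rootWeights_nonneg (ha : 0 ≤ a) (he : 0 ≤ e)
    (hb : IsGLB (wSet 2 ![a, e] (rootWeights m)) b) : 0 ≤ b := by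
  refine hb.2 fun x hx => ?_
  obtain ⟨v, hv, rfl⟩ := (mem_wSet_rootWeights_iff ha he m).1 hx
  exact smul_nonneg (by positivity)
    (add_nonneg (smul_nonneg (by positivity) ha) (smul_nonneg (by positivity) he))

lemma isGLB_rootWeights_posPart_sub_smul_inf_eq_zero (ha : 0 ≤ a) (he : 0 ≤ e)
    (hb : IsGLB (wSet 2 ![a, e] (rootWeights m)) b) {u : ℝ} (hu : 0 < u) :
    (b - u • e)⁺ ⊓ (u ^ (m + 1) • e - a)⁺ = 0 := by
  have hle := hb.1 ((mem_wSet_rootWeights_iff ha he m).2 ⟨u, hu, rfl⟩)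
  have key : (((m : ℝ) + 1) * u ^ m) • (b - u • e) ≤ (a - u ^ (m + 1) • e)⁺ := by
    refine le_trans ?_ (le_posPart _)
    calc (((m : ℝ) + 1) * u ^ m) • (b - u • e)
        ≤ (((m : ℝ) + 1) * u ^ m) • (((m : ℝ) + 1)⁻¹ • ((u ^ m)⁻¹ • a + (m * u) • e) - u • e) :=
          smul_le_smul_of_nonneg_left (sub_le_sub_right hle _) (by positivity)
      _ = a - u ^ (m + 1) • e := by
          match_scalars <;> field_simp
          ring
  simpa only [← posPart_neg, neg_sub] using
    posPart_inf_negPart_eq_zero_of_smul_le (by positivity) key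

lemma isGLB_rootWeights_inf_le_smul (ha : 0 ≤ a) (he : 0 ≤ e)
    (hb : IsGLB (wSet 2 ![a, e] (rootWeights m)) b) {u : ℝ} (hu : 0 < u) :
    a ⊓ u ^ (m + 1) • e ≤ u ^ m • b := by
  rw [← inv_smul_le_iff_of_pos (by positivity)]
  refine hb.2 fun x hx => ?_
  obtain ⟨v, hv, rfl⟩ := (mem_wSet_rootWeights_iff ha he m).1 hx
  set w := a ⊓ u ^ (m + 1) • e
  calc (u ^ m)⁻¹ • w ≤ (((m : ℝ) + 1)⁻¹ * ((v ^ m)⁻¹ + m * v / u ^ (m + 1))) • w :=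
        smul_le_smul_of_nonneg_right (inv_pow_le_amgm m hu hv)
          (le_inf ha (smul_nonneg (by positivity) he))
    _ = ((m : ℝ) + 1)⁻¹ • ((v ^ m)⁻¹ • w + (m * v / u ^ (m + 1)) • w) := by
        rw [mul_smul, add_smul]
    _ ≤ ((m : ℝ) + 1)⁻¹ • ((v ^ m)⁻¹ • a + (m * v / u ^ (m + 1)) • (u ^ (m + 1) • e)) := by
        gcongr
        exacts [inf_le_left, inf_le_right]
    _ = ((m : ℝ) + 1)⁻¹ • ((v ^ m)⁻¹ • a + (m * v) • e) := by
        rw [smul_smul, div_mul_cancel₀ _ (by positivity)]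

lemma isGLB_rootWeights_posPart_smul_sub_inf_eq_zero (ha : 0 ≤ a) (he : 0 ≤ e)
    (hb : IsGLB (wSet 2 ![a, e] (rootWeights m)) b) {u : ℝ} (hu : 0 < u) :
    (u • e - b)⁺ ⊓ (a - u ^ (m + 1) • e)⁺ = 0 := by
  have key : u ^ m • (u • e - b) ≤ (u ^ (m + 1) • e - a)⁺ :=
    calc u ^ m • (u • e - b) = u ^ (m + 1) • e - u ^ m • b := by module
      _ ≤ u ^ (m + 1) • e - a ⊓ u ^ (m + 1) • e :=
        sub_le_sub_left (isGLB_rootWeights_inf_le_smul ha he hb hu) _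
      _ = (u ^ (m + 1) • e - a)⁺ := by rw [inf_comm, inf_eq_sub_posPart_sub, sub_sub_cancel]
  simpa only [← posPart_neg, neg_sub] using
    posPart_inf_negPart_eq_zero_of_smul_le (by positivity) key

end IsGLB

namespace FAlgebra

section Basic

variable {A : Type*} [CommRing A] [Lattice A]
  (hfalg : ∀ a b c : A, a ⊓ b = 0 → 0 ≤ c → (c * a) ⊓ b = 0)
include hfalg

lemma mul_eq_zero_of_inf_eq_zero {x y : A} (h : x ⊓ y = 0) : x * y = 0 := by
  have hx : 0 ≤ x := h ▸ inf_le_left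
  have hy : 0 ≤ y := h ▸ inf_le_right
  have hyxy : y ⊓ (x * y) = 0 := by rw [inf_comm, mul_comm]; exact hfalg x y y h hy
  simpa using hfalg y (x * y) x hyxy hx

variable [IsOrderedAddMonoid A]

lemma posPart_mul_negPart (x : A) : x⁺ * x⁻ = 0 :=
  mul_eq_zero_of_inf_eq_zero hfalg (posPart_inf_negPart_eq_zero x)

lemma posPart_mul_eq_mul_self (x : A) : x⁺ * x = x⁺ * x⁺ :=
  calc x⁺ * x = x⁺ * (x⁺ - x⁻) := by rw [posPart_sub_negPart]
    _ = x⁺ * x⁺ := by rw [mul_sub, posPart_mul_negPart hfalg, sub_zero]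

lemma mul_self_eq_posPart_add_negPart (x : A) : x * x = x⁺ * x⁺ + x⁻ * x⁻ := by
  conv_lhs => rw [← posPart_sub_negPart x]
  linear_combination (-2 : A) * posPart_mul_negPart hfalg x

lemma mul_self_nonneg (hmulpos : ∀ a b : A, 0 ≤ a → 0 ≤ b → 0 ≤ a * b) (x : A) : 0 ≤ x * x := by
  rw [mul_self_eq_posPart_add_negPart hfalg]
  exact add_nonneg (hmulpos _ _ (posPart_nonneg x) (posPart_nonneg x))
    (hmulpos _ _ (negPart_nonneg x) (negPart_nonneg x))

end Basic

section Ordered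

variable {A : Type*} [CommRing A] [Lattice A] [IsOrderedRing A]
  (hfalg : ∀ a b c : A, a ⊓ b = 0 → 0 ≤ c → (c * a) ⊓ b = 0)
include hfalg

lemma posPart_pow_sub_pow_inf_eq_zero {x y q : A} (hx : 0 ≤ x) (hy : 0 ≤ y)
    (h : (x - y)⁺ ⊓ q = 0) (N : ℕ) : (x ^ N - y ^ N)⁺ ⊓ q = 0 := by
  set S := ∑ i ∈ range N, x ^ i * y ^ (N - 1 - i)
  have hS : 0 ≤ S := sum_nonneg fun i _ => mul_nonneg (pow_nonneg hx i) (pow_nonneg hy _)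
  have hle : (x ^ N - y ^ N)⁺ ≤ S * (x - y)⁺ := by
    refine sup_le ?_ (mul_nonneg hS (posPart_nonneg _))
    rw [← geom_sum₂_mul]
    exact mul_le_mul_of_nonneg_left (le_posPart _) hS
  refine le_antisymm ?_ (le_inf (posPart_nonneg _) (h ▸ inf_le_right))
  rw [← hfalg _ _ S h hS]
  exact inf_le_inf_right q hle

variable [Algebra ℝ A] [PosSMulMono ℝ A]

lemma posPart_sub_smul_one_le {y : A} (hy : 0 ≤ y) {T : ℝ} (hT : 0 < T) :
    (y - T • 1)⁺ ≤ T⁻¹ • (y * y) := by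
  rw [le_inv_smul_iff_of_pos hT]
  have hpy : (y - T • 1)⁺ ≤ y := sup_le (sub_le_self y (smul_nonneg hT.le zero_le_one)) hy
  calc T • (y - T • 1)⁺
      ≤ T • (y - T • 1)⁺ + (y - T • 1)⁺ * (y - T • 1)⁺ :=
        le_add_of_nonneg_right (mul_nonneg (posPart_nonneg _) (posPart_nonneg _))
    _ = (y - T • 1)⁺ * y := by
        rw [← posPart_mul_eq_mul_self hfalg, mul_sub, mul_smul_comm, mul_one]
        abel
    _ ≤ y * y := mul_le_mul_of_nonneg_right hpy hy

variable (harch : ∀ f g : A, (∀ n : ℕ, (n : ℝ) • f ≤ g) → f ≤ 0)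
include harch

lemma eq_zero_of_mul_self_eq_zero_of_nonneg {x : A} (hx : 0 ≤ x) (h : x * x = 0) : x = 0 := by
  refine le_antisymm (harch x 1 fun n => ?_) hx
  have key := posPart_sub_smul_one_le hfalg (smul_nonneg (Nat.cast_nonneg (α := ℝ) n) hx) one_pos
  rw [smul_mul_smul_comm, h, smul_zero, smul_zero, one_smul, posPart_nonpos, sub_nonpos] at key
  exact key

lemma isReduced : IsReduced A := by
  refine (isReduced_iff_pow_one_lt 2 (by norm_num)).2 fun x hx => ?_
  rw [sq, mul_self_eq_posPart_add_negPart hfalg] at hx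
  obtain ⟨hp, hn⟩ := (add_eq_zero_iff_of_nonneg
    (mul_nonneg (posPart_nonneg x) (posPart_nonneg x))
    (mul_nonneg (negPart_nonneg x) (negPart_nonneg x))).1 hx
  rw [← posPart_sub_negPart x,
    eq_zero_of_mul_self_eq_zero_of_nonneg hfalg harch (posPart_nonneg x) hp,
    eq_zero_of_mul_self_eq_zero_of_nonneg hfalg harch (negPart_nonneg x) hn, sub_zero]

lemma le_of_pow_eq_pow {x y : A} (hx : 0 ≤ x) (hy : 0 ≤ y) {N : ℕ} (hN : N ≠ 0)
    (h : x ^ N = y ^ N) : x ≤ y := by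
  have := isReduced hfalg harch
  have hd : 0 ≤ (x - y)⁺ := posPart_nonneg _
  have hdx : (x - y)⁺ ≤ x := sup_le (sub_le_self x hy) hx
  set S := ∑ i ∈ range N, x ^ i * y ^ (N - 1 - i)
  have hS : S * (x - y) = 0 := by rw [geom_sum₂_mul, h, sub_self]
  have hxS : x ^ (N - 1) ≤ S := by
    simpa using single_le_sum (f := fun i => x ^ i * y ^ (N - 1 - i))
      (fun i _ => mul_nonneg (pow_nonneg hx i) (pow_nonneg hy _)) (mem_range.2 (Nat.sub_one_lt hN))
  have hpow : (x - y)⁺ ^ (N + 1) = 0 := by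
    refine le_antisymm ?_ (pow_nonneg hd _)
    calc (x - y)⁺ ^ (N + 1) = (x - y)⁺ * (x - y)⁺ * (x - y)⁺ ^ (N - 1) := by
          rw [← sq, ← pow_add]
          congr 1
          omega
      _ ≤ (x - y)⁺ * (x - y)⁺ * S :=
          mul_le_mul_of_nonneg_left ((pow_le_pow_left₀ hd hdx _).trans hxS) (mul_nonneg hd hd)
      _ = 0 := by rw [← posPart_mul_eq_mul_self hfalg, mul_assoc, mul_comm (x - y), hS, mul_zero]
  rw [← sub_nonpos, ← posPart_eq_zero]
  exact IsNilpotent.eq_zero ⟨_, hpow⟩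

lemma le_of_forall_posPart_inf_eq_zero {y z : A} (hy : 0 ≤ y) (hz : 0 ≤ z)
    (h : ∀ t : ℝ, 0 < t → (y - t • 1)⁺ ⊓ (t • 1 - z)⁺ = 0) : y ≤ z := by
  rw [← sub_nonpos]
  refine harch _ (1 + y * y) fun n => ?_
  rcases n.eq_zero_or_pos with rfl | hn
  · simpa using add_nonneg zero_le_one (mul_self_nonneg hfalg (fun _ _ => mul_nonneg) y)
  have hn' : (0 : ℝ) < n := by exact_mod_cast hn
  set t : ℕ → ℝ := fun k => k * (n : ℝ)⁻¹
  have hg : (0 : A) ≤ (n : ℝ)⁻¹ • 1 := smul_nonneg (inv_nonneg.2 hn'.le) zero_le_one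
  have hQ0 : (t 0 • (1 : A) - z)⁺ = 0 := by simp [t, negPart_eq_zero.2 hz]
  have hchain := le_add_of_forall_inf_eq_zero (x := y - z) (g := (n : ℝ)⁻¹ • 1)
    (P := fun k => (y - t k • 1)⁺) (Q := fun k => (t k • 1 - z)⁺) (fun _ => posPart_nonneg _)
    (fun k => (sub_add_sub_cancel y (t k • 1) z).symm.trans_le
      (add_le_add (le_posPart _) (le_posPart _)))
    (fun k => ?_) (hQ0.trans_le hg) (fun k => ?_) (n * n)
  · have ht : t (n * n) = n := by
      simp only [t]
      push_cast
      field_simp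
    rw [← le_inv_smul_iff_of_pos hn', smul_add]
    simp only [ht] at hchain
    exact hchain.trans (add_le_add_right (posPart_sub_smul_one_le hfalg hy hn') _)
  · rcases k.eq_zero_or_pos with rfl | hk
    · simp only [hQ0, inf_of_le_right (posPart_nonneg _)]
    · exact h _ (by positivity)
  · have e : t (k + 1) • (1 : A) - z = (t k • 1 - z) + (n : ℝ)⁻¹ • 1 := by
      simp only [t]
      push_cast
      module
    simpa only [e] using posPart_add_le hg

theorem pow_succ_eq_of_isGLB {a b : A} (ha : 0 ≤ a) {m : ℕ}
    (hb : IsGLB (wSet 2 ![a, 1] (rootWeights m)) b) : b ^ (m + 1) = a := by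
  have hb0 := isGLB_rootWeights_nonneg ha zero_le_one hb
  have hroot : ∀ t : ℝ, 0 < t → ∃ u : ℝ, 0 < u ∧ u ^ (m + 1) • (1 : A) = t • 1 := fun t ht =>
    ⟨t ^ ((m + 1 : ℕ) : ℝ)⁻¹, by positivity, by rw [Real.rpow_inv_natCast_pow ht.le m.succ_ne_zero]⟩
  have hpow : ∀ u : ℝ, (u • (1 : A)) ^ (m + 1) = u ^ (m + 1) • 1 := fun u => by
    rw [smul_pow, one_pow]
  refine le_antisymm
    (le_of_forall_posPart_inf_eq_zero hfalg harch (pow_nonneg hb0 _) ha fun t ht => ?_)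
    (le_of_forall_posPart_inf_eq_zero hfalg harch ha (pow_nonneg hb0 _) fun t ht => ?_)
  · obtain ⟨u, hu, hut⟩ := hroot t ht
    have := posPart_pow_sub_pow_inf_eq_zero hfalg hb0 (smul_nonneg hu.le zero_le_one)
      (isGLB_rootWeights_posPart_sub_smul_inf_eq_zero ha zero_le_one hb hu) (m + 1)
    rwa [hpow, hut] at this
  · obtain ⟨u, hu, hut⟩ := hroot t ht
    have := posPart_pow_sub_pow_inf_eq_zero hfalg (smul_nonneg hu.le zero_le_one) hb0
      (isGLB_rootWeights_posPart_smul_sub_inf_eq_zero ha zero_le_one hb hu) (m + 1)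
    rwa [hpow, hut, inf_comm] at this

end Ordered

end FAlgebra

/-- **Lemma 4.2, first assertion.** In a weighted geometric mean closed Archimedean
`Φ`-algebra `A`, every `a ∈ A⁺` has a unique nonnegative `N`-th root `a^{1/N}` for each
`N ≥ 1`; consequently `a^q` exists for every positive rational `q = m/N`. -/
theorem stmt11 {A : Type*} [CommRing A] [Lattice A]
    [CovariantClass A A (· + ·) (· ≤ ·)]
    [Algebra ℝ A] [PosSMulMono ℝ A]
    (harch : ∀ f g : A, (∀ n : ℕ, (n : ℝ) • f ≤ g) → f ≤ 0)
    (hmulpos : ∀ a b : A, 0 ≤ a → 0 ≤ b → 0 ≤ a * b)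
    (hfalg : ∀ a b c : A, a ⊓ b = 0 → 0 ≤ c → (c * a) ⊓ b = 0)
    (hwgm : ∀ (n : ℕ) (f : Fin n → A) (r : Fin n → ℝ),
      (∀ k, 0 < r k ∧ r k < 1) → (∑ k, r k) = 1 → ∃ m, IsGLB (wSet n f r) m) :
    (∀ a : A, 0 ≤ a → ∀ N : ℕ, 1 ≤ N → ∃! b : A, 0 ≤ b ∧ b ^ N = a) ∧
    (∀ a : A, 0 ≤ a → ∀ M N : ℕ, 1 ≤ M → 1 ≤ N →
      ∃! b : A, 0 ≤ b ∧ b ^ N = a ^ M) := by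
  have : IsOrderedAddMonoid A := { add_le_add_left := fun _ _ h c => add_le_add_left h c }
  have : ZeroLEOneClass A := ⟨by simpa using FAlgebra.mul_self_nonneg hfalg hmulpos (1 : A)⟩
  have : IsOrderedRing A := .of_mul_nonneg hmulpos
  have hexists (a : A) (ha : 0 ≤ a) (m : ℕ) : ∃ b, 0 ≤ b ∧ b ^ (m + 1) = a := by
    rcases m.eq_zero_or_pos with rfl | hm
    · exact ⟨a, ha, pow_one a⟩
    obtain ⟨b, hb⟩ := hwgm 2 ![a, 1] (rootWeights m) (rootWeights_mem_Ioo hm) (sum_rootWeights m)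
    exact ⟨b, isGLB_rootWeights_nonneg ha zero_le_one hb,
      FAlgebra.pow_succ_eq_of_isGLB hfalg harch ha hb⟩
  have hroot (a : A) (ha : 0 ≤ a) (N : ℕ) (hN : 1 ≤ N) : ∃! b, 0 ≤ b ∧ b ^ N = a := by
    obtain ⟨m, rfl⟩ := Nat.exists_eq_add_of_le' hN
    obtain ⟨b, hb0, hb⟩ := hexists a ha m
    refine ⟨b, ⟨hb0, hb⟩, fun c ⟨hc0, hc⟩ => ?_⟩
    have hcb : c ^ (m + 1) = b ^ (m + 1) := hc.trans hb.symm
    exact le_antisymm (FAlgebra.le_of_pow_eq_pow hfalg harch hc0 hb0 m.succ_ne_zero hcb)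
      (FAlgebra.le_of_pow_eq_pow hfalg harch hb0 hc0 m.succ_ne_zero hcb.symm)
  exact ⟨hroot, fun a ha M N _ hN => hroot _ (pow_nonneg ha M) N hN⟩
end

section
/- Let A and B be weighted geometric mean closed Archimedean Φ-algebras with unit elements e and e′ respectively, let C be a Φ-subalgebra of A (a vector sublattice and subalgebra containing e), and let T : C → B be a multiplicative vector lattice homomorphism with T(e) = e′. Let a ∈ A⁺ and r ∈ (0,∞). If a ∈ C and a^r ∈ C, then T(a^r) = (T(a))^r, where a^r is computed in A and (T(a))^r in B via the infimum formula defining real powers. -/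
/-- The set whose infimum gives the fractional part of the real power `a^r` in a
`Φ`-algebra with unit `1`: with `r̃ = r - ⌊r⌋`, this is
`{ r̃·θ₁·a + (1-r̃)·θ₂·e : θ₁, θ₂ ∈ (0,∞), θ₁^{r̃}·θ₂^{1-r̃} = 1 }`. -/
def rpowSet {A : Type*} [CommRing A] [Lattice A] [Module ℝ A]
    (a : A) (r : ℝ) : Set A :=
  {x | ∃ θ₁ θ₂ : ℝ, 0 < θ₁ ∧ 0 < θ₂ ∧
      θ₁ ^ (r - (⌊r⌋₊ : ℝ)) * θ₂ ^ (1 - (r - (⌊r⌋₊ : ℝ))) = 1 ∧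
      x = ((r - (⌊r⌋₊ : ℝ)) * θ₁) • a + ((1 - (r - (⌊r⌋₊ : ℝ))) * θ₂) • (1 : A)}

/-- `IsRPow a r b` says that `b = a^r` in the sense of Definition 4.3:
`a^r = a^{⌊r⌋} · inf (rpowSet a r)` (with `a^{⌊r⌋} = e` when `⌊r⌋ = 0`). -/
def IsRPow {A : Type*} [CommRing A] [Lattice A] [Module ℝ A]
    (a : A) (r : ℝ) (b : A) : Prop :=
  ∃ c : A, IsGLB (rpowSet a r) c ∧ b = a ^ ⌊r⌋₊ * c

/-!
Write `s = r - ⌊r⌋`. If `s = 0` both sides are ordinary powers, which a multiplicative `T`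
preserves. Otherwise the admissible weights `(θ₁, θ₂)` form the graph of `θ ↦ θ ^ (-s/(1-s))`,
and for every `ε > 0` this graph has a finite `ε`-net `U` that does not depend on the algebra.
In a `Φ`-algebra, multiplication by a positive element distributes over `⊓`, so the finite
infimum over `U` of `a^⌊r⌋ (s θ₁ a + (1 - s) θ₂ e)` lies between `a^r` and
`a^r + ε a^⌊r⌋ (a + e)`. `T` preserves finite infima, products and the unit, hence `T (a^r)` and
`(T a)^r` are within `ε T (a^⌊r⌋ (a + e))` of each other for every `ε`, and the Archimedean
property of `B` forces equality.
-/

open Finset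

lemma exists_finset_forall_le_add_of_antitoneOn {φ : ℝ → ℝ} (hφ : AntitoneOn φ (Set.Ioi 0))
    (hφ0 : ∀ θ, 0 < θ → 0 ≤ φ θ) {ε M : ℝ} (hε : 0 < ε) (hM : 0 < M) (hφM : φ M ≤ ε) :
    ∃ U : Finset ℝ, U.Nonempty ∧ (∀ u ∈ U, 0 < u) ∧
      ∀ θ, 0 < θ → ∃ u ∈ U, u ≤ θ + ε ∧ φ u ≤ φ θ + ε := by
  set N := ⌈M / ε⌉₊
  have hN : 1 ≤ N := Nat.ceil_pos.2 (div_pos hM hε)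
  have hMN : M ≤ ε * N := (div_le_iff₀' hε).1 (Nat.le_ceil _)
  have hpos : ∀ k : ℕ, 1 ≤ k → 0 < ε * k := fun k hk => by positivity
  refine ⟨(Icc 1 N).image (fun k : ℕ => ε * k), ⟨ε * N, mem_image_of_mem _ (by simp [hN])⟩, ?_, ?_⟩
  · simp only [mem_image, mem_Icc]
    rintro _ ⟨k, ⟨hk, -⟩, rfl⟩
    exact hpos k hk
  intro θ hθ
  set k := ⌈θ / ε⌉₊
  have hk : 1 ≤ k := Nat.ceil_pos.2 (div_pos hθ hε)
  have hθk : θ ≤ ε * k := (div_le_iff₀' hε).1 (Nat.le_ceil _)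
  have hkθ : ε * k < θ + ε := by
    have := Nat.ceil_lt_add_one (div_pos hθ hε).le
    rwa [← lt_div_iff₀' hε, add_div, div_self hε.ne']
  refine ⟨ε * (min k N : ℕ), mem_image_of_mem _ (mem_Icc.2 ⟨le_min hk hN, min_le_right _ _⟩),
    ?_, ?_⟩
  · calc ε * (min k N : ℕ) ≤ ε * k := by gcongr; exact_mod_cast min_le_left k N
      _ ≤ θ + ε := hkθ.le
  rcases le_total k N with hkN | hNk
  · rw [min_eq_left hkN]
    exact (hφ hθ (hpos k hk) hθk).trans (le_add_of_nonneg_right hε.le)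
  · rw [min_eq_right hNk]
    calc φ (ε * N) ≤ φ M := hφ hM (hpos N hN) hMN
      _ ≤ φ θ + ε := hφM.trans (le_add_of_nonneg_left (hφ0 θ hθ))

def IsGeomWeight (s : ℝ) (p : ℝ × ℝ) : Prop :=
  0 < p.1 ∧ 0 < p.2 ∧ p.1 ^ s * p.2 ^ (1 - s) = 1

open Real in
lemma isGeomWeight_iff {s : ℝ} (hs : s < 1) {p : ℝ × ℝ} :
    IsGeomWeight s p ↔ 0 < p.1 ∧ p.2 = p.1 ^ (-(s / (1 - s))) := by
  have ht : 1 - s ≠ 0 := (sub_pos.2 hs).ne'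
  constructor
  · rintro ⟨h₁, h₂, h⟩
    refine ⟨h₁, ?_⟩
    have h' : p.2 ^ (1 - s) = p.1 ^ (-s) := by
      rw [rpow_neg h₁.le]
      exact eq_inv_of_mul_eq_one_right h
    rw [← rpow_rpow_inv h₂.le ht, h', ← rpow_mul h₁.le, neg_mul, div_eq_mul_inv]
  · rintro ⟨h₁, h⟩
    refine ⟨h₁, h ▸ rpow_pos_of_pos h₁ _, ?_⟩
    rw [h, ← rpow_mul h₁.le, ← rpow_add h₁, neg_mul, div_mul_cancel₀ _ ht, add_neg_cancel,
      rpow_zero]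

open Real in
lemma exists_finset_isGeomWeight_approx {s ε : ℝ} (hs₀ : 0 < s) (hs₁ : s < 1) (hε : 0 < ε) :
    ∃ U : Finset (ℝ × ℝ), U.Nonempty ∧ (∀ p ∈ U, IsGeomWeight s p) ∧
      ∀ θ, IsGeomWeight s θ → ∃ p ∈ U, p.1 ≤ θ.1 + ε ∧ p.2 ≤ θ.2 + ε := by
  set q := s / (1 - s)
  have hq : 0 < q := div_pos hs₀ (sub_pos.2 hs₁)
  obtain ⟨U, hU, hUpos, hUcov⟩ := exists_finset_forall_le_add_of_antitoneOn
    (antitoneOn_rpow_Ioi_of_exponent_nonpos (neg_nonpos.2 hq.le))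
    (fun θ hθ => (rpow_pos_of_pos hθ _).le) hε (rpow_pos_of_pos hε (-q)⁻¹)
    (rpow_inv_rpow hε.le (neg_ne_zero.2 hq.ne')).le
  refine ⟨U.image fun u => (u, u ^ (-q)), hU.image _, ?_, ?_⟩
  · simp only [mem_image]
    rintro _ ⟨u, hu, rfl⟩
    exact (isGeomWeight_iff hs₁).2 ⟨hUpos u hu, rfl⟩
  · intro θ hθ
    obtain ⟨hθ₁, hθ₂⟩ := (isGeomWeight_iff hs₁).1 hθ
    obtain ⟨u, hu, hu₁, hu₂⟩ := hUcov θ.1 hθ₁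
    exact ⟨_, mem_image_of_mem _ hu, hu₁, hθ₂ ▸ hu₂⟩

section RPowTerm

variable {A B : Type*}

noncomputable def rpowTerm [Ring A] [Module ℝ A] (r : ℝ) (a : A) (p : ℝ × ℝ) : A :=
  ((r - (⌊r⌋₊ : ℝ)) * p.1) • a + ((1 - (r - (⌊r⌋₊ : ℝ))) * p.2) • (1 : A)

lemma map_rpowTerm [Ring A] [Ring B] [Algebra ℝ A] [Algebra ℝ B] {F : Type*} [FunLike F A B]
    [AlgHomClass F ℝ A B] (φ : F) (r : ℝ) (a : A) (p : ℝ × ℝ) :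
    φ (rpowTerm r a p) = rpowTerm r (φ a) p := by
  simp [rpowTerm]

lemma rpowSet_eq_image [CommRing A] [Lattice A] [Module ℝ A] (a : A) (r : ℝ) :
    rpowSet a r = rpowTerm r a '' {p | IsGeomWeight (r - ⌊r⌋₊) p} := by
  ext x
  simp [rpowSet, rpowTerm, IsGeomWeight, eq_comm, and_assoc]

lemma rpowTerm_le_rpowTerm_add_smul [Ring A] [PartialOrder A] [IsOrderedAddMonoid A]
    [Module ℝ A] [PosSMulMono ℝ A] {r ε : ℝ} (hr : 0 ≤ r) (hε : 0 ≤ ε) {a : A} (ha : 0 ≤ a)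
    (h1 : (0 : A) ≤ 1) {p θ : ℝ × ℝ} (h₁ : p.1 ≤ θ.1 + ε) (h₂ : p.2 ≤ θ.2 + ε) :
    rpowTerm r a p ≤ rpowTerm r a θ + ε • (a + 1) := by
  have hs₀ : 0 ≤ r - ⌊r⌋₊ := sub_nonneg.2 (Nat.floor_le hr)
  have hs₁ : r - ⌊r⌋₊ ≤ 1 := by linarith [Nat.lt_floor_add_one r]
  have hsplit : rpowTerm r a θ + ε • (a + 1) = ((r - ⌊r⌋₊) * θ.1 + ε) • a
      + ((1 - (r - ⌊r⌋₊)) * θ.2 + ε) • (1 : A) := by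
    simp only [rpowTerm, add_smul, smul_add]
    abel
  rw [hsplit, rpowTerm]
  gcongr ?_ • a + ?_ • (1 : A)
  · nlinarith
  · nlinarith

end RPowTerm

lemma posPart_sub_of_inf_eq_zero {G : Type*} [AddCommGroup G] [Lattice G] [IsOrderedAddMonoid G]
    {x y : G} (h : x ⊓ y = 0) : (x - y)⁺ = x := by
  have hsup : x ⊔ y = x + y := by rw [← inf_add_sup x y, h, zero_add]
  rw [posPart_def, ← sub_self y, ← sup_sub, hsup, add_sub_cancel_right]

section FAlgebra

variable {A : Type*} [CommRing A] [Lattice A] [IsOrderedAddMonoid A]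

lemma zero_le_one_of_mul_nonneg_of_mul_inf_eq_zero
    (hmulpos : ∀ a b : A, 0 ≤ a → 0 ≤ b → 0 ≤ a * b)
    (hfalg : ∀ a b c : A, a ⊓ b = 0 → 0 ≤ c → (c * a) ⊓ b = 0) : (0 : A) ≤ 1 := by
  set p := (1 : A)⁺
  set m := (1 : A)⁻
  have hm : 0 ≤ m := negPart_nonneg 1
  have hmp : m * p = 0 := by
    have h := hfalg m (m * p) p
      (by rw [inf_comm]; exact hfalg p m m (posPart_inf_negPart_eq_zero 1) hm) (posPart_nonneg 1)
    rwa [mul_comm p m, inf_idem] at h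
  have hm_eq : m = -(m * m) := by
    calc m = m * (p - m) := by rw [posPart_sub_negPart, mul_one]
      _ = -(m * m) := by rw [mul_sub, hmp, zero_sub]
  have hm0 : m = 0 := le_antisymm (hm_eq ▸ neg_nonpos.2 (hmulpos m m hm hm)) hm
  calc (0 : A) ≤ p := posPart_nonneg 1
    _ = p - m := by rw [hm0, sub_zero]
    _ = 1 := posPart_sub_negPart 1

lemma mul_posPart_of_nonneg (hfalg : ∀ a b c : A, a ⊓ b = 0 → 0 ≤ c → (c * a) ⊓ b = 0)
    {d : A} (hd : 0 ≤ d) (z : A) : (d * z)⁺ = d * z⁺ := by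
  have h : d * z⁺ ⊓ d * z⁻ = 0 := by
    rw [inf_comm]
    exact hfalg _ _ d (by rw [inf_comm]; exact hfalg _ _ d (posPart_inf_negPart_eq_zero z) hd) hd
  rw [← posPart_sub_of_inf_eq_zero h, ← mul_sub, posPart_sub_negPart]

lemma mul_inf_of_nonneg (hfalg : ∀ a b c : A, a ⊓ b = 0 → 0 ≤ c → (c * a) ⊓ b = 0)
    {d : A} (hd : 0 ≤ d) (x y : A) : d * (x ⊓ y) = d * x ⊓ d * y := by
  rw [inf_eq_sub_posPart_sub, inf_eq_sub_posPart_sub, mul_sub, ← mul_posPart_of_nonneg hfalg hd,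
    mul_sub]

lemma mul_finset_inf'_of_nonneg (hfalg : ∀ a b c : A, a ⊓ b = 0 → 0 ≤ c → (c * a) ⊓ b = 0)
    {d : A} (hd : 0 ≤ d) {ι : Type*} {U : Finset ι} (hU : U.Nonempty) (f : ι → A) :
    d * U.inf' hU f = U.inf' hU fun i => d * f i :=
  apply_inf'_eq_inf'_comp hU (d * ·) (mul_inf_of_nonneg hfalg hd)

end FAlgebra

lemma isOrderedRing_of_mul_nonneg_of_mul_inf_eq_zero {A : Type*} [CommRing A] [Lattice A]
    [AddLeftMono A] (hmulpos : ∀ a b : A, 0 ≤ a → 0 ≤ b → 0 ≤ a * b)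
    (hfalg : ∀ a b c : A, a ⊓ b = 0 → 0 ≤ c → (c * a) ⊓ b = 0) : IsOrderedRing A :=
  have : IsOrderedAddMonoid A :=
    ⟨fun _ _ h c => add_le_add_left h c, fun _ _ h c => add_le_add_right h c⟩
  have : ZeroLEOneClass A := ⟨zero_le_one_of_mul_nonneg_of_mul_inf_eq_zero hmulpos hfalg⟩
  .of_mul_nonneg hmulpos

section IsRPow

variable {A : Type*} [CommRing A] [Lattice A]

lemma IsRPow.eq_pow_of_natCast_floor_eq [Module ℝ A] {a b : A} {r : ℝ} (hb : IsRPow a r b)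
    (hr : (⌊r⌋₊ : ℝ) = r) : b = a ^ ⌊r⌋₊ := by
  obtain ⟨c, hc, rfl⟩ := hb
  have hset : rpowSet a r = {1} := by
    ext x
    simp [rpowSet, hr, exists_gt]
  rw [hc.unique (hset ▸ isGLB_singleton), mul_one]

lemma IsGLB.finset_inf'_rpowTerm_le [IsOrderedRing A] [Module ℝ A] [PosSMulMono ℝ A]
    {a c : A} {r ε : ℝ} (hc : IsGLB (rpowSet a r) c)
    (hr : 0 ≤ r) (hε : 0 ≤ ε) (ha : 0 ≤ a) {U : Finset (ℝ × ℝ)} (hU : U.Nonempty)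
    (hcover : ∀ θ, IsGeomWeight (r - ⌊r⌋₊) θ → ∃ p ∈ U, p.1 ≤ θ.1 + ε ∧ p.2 ≤ θ.2 + ε) :
    U.inf' hU (rpowTerm r a) ≤ c + ε • (a + 1) := by
  rw [← sub_le_iff_le_add]
  refine hc.2 ?_
  rw [rpowSet_eq_image]
  rintro _ ⟨θ, hθ, rfl⟩
  obtain ⟨p, hp, hp₁, hp₂⟩ := hcover θ hθ
  exact sub_le_iff_le_add.2 ((inf'_le _ hp).trans
    (rpowTerm_le_rpowTerm_add_smul hr hε ha zero_le_one hp₁ hp₂))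

lemma IsRPow.le_mul_rpowTerm_and_finset_inf'_le [IsOrderedRing A] [Algebra ℝ A]
    [PosSMulMono ℝ A] (hfalg : ∀ a b c : A, a ⊓ b = 0 → 0 ≤ c → (c * a) ⊓ b = 0) {a b : A} {r ε : ℝ}
    (hb : IsRPow a r b) (hr : 0 ≤ r) (hε : 0 ≤ ε) (ha : 0 ≤ a) {U : Finset (ℝ × ℝ)}
    (hU : U.Nonempty) (hUw : ∀ p ∈ U, IsGeomWeight (r - ⌊r⌋₊) p)
    (hcover : ∀ θ, IsGeomWeight (r - ⌊r⌋₊) θ → ∃ p ∈ U, p.1 ≤ θ.1 + ε ∧ p.2 ≤ θ.2 + ε) :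
    (∀ p ∈ U, b ≤ a ^ ⌊r⌋₊ * rpowTerm r a p) ∧
      U.inf' hU (fun p => a ^ ⌊r⌋₊ * rpowTerm r a p) ≤ b + ε • (a ^ ⌊r⌋₊ * (a + 1)) := by
  obtain ⟨c, hc, rfl⟩ := hb
  have hpow : 0 ≤ a ^ ⌊r⌋₊ := pow_nonneg ha _
  refine ⟨fun p hp => mul_le_mul_of_nonneg_left ?_ hpow, ?_⟩
  · exact hc.1 ((rpowSet_eq_image a r).symm ▸ ⟨p, hUw p hp, rfl⟩)
  · rw [← mul_finset_inf'_of_nonneg hfalg hpow, ← mul_smul_comm, ← mul_add]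
    exact mul_le_mul_of_nonneg_left (hc.finset_inf'_rpowTerm_le hr hε ha hU hcover) hpow

end IsRPow

section LatticeHomOn

variable {A B S F : Type*} [Lattice A] [Lattice B] [SetLike S A] {C : S} [FunLike F C B]

lemma map_mono_of_map_sup (hCsup : ∀ x y : A, x ∈ C → y ∈ C → x ⊔ y ∈ C) {T : F}
    (hThom : ∀ (x y : A) (hx : x ∈ C) (hy : y ∈ C),
      T ⟨x ⊔ y, hCsup x y hx hy⟩ = T ⟨x, hx⟩ ⊔ T ⟨y, hy⟩)
    {x y : C} (h : (x : A) ≤ y) : T x ≤ T y := by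
  have hy : y = ⟨x ⊔ y, hCsup x y x.2 y.2⟩ := Subtype.ext (sup_eq_right.2 h).symm
  rw [hy, hThom _ _ x.2 y.2]
  exact le_sup_left

variable [AddCommGroup A] [IsOrderedAddMonoid A] [AddCommGroup B] [IsOrderedAddMonoid B]
  [AddSubgroupClass S A] [AddMonoidHomClass F C B]

lemma infClosed_of_sup_mem (hCsup : ∀ x y : A, x ∈ C → y ∈ C → x ⊔ y ∈ C) :
    InfClosed (C : Set A) := fun x hx y hy => by
  rw [← neg_neg (x ⊓ y), neg_inf]
  exact neg_mem (hCsup _ _ (neg_mem hx) (neg_mem hy))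

variable (hCsup : ∀ x y : A, x ∈ C → y ∈ C → x ⊔ y ∈ C) {T : F}

lemma map_inf_of_map_sup
    (hThom : ∀ (x y : A) (hx : x ∈ C) (hy : y ∈ C),
      T ⟨x ⊔ y, hCsup x y hx hy⟩ = T ⟨x, hx⟩ ⊔ T ⟨y, hy⟩)
    {x y : A} (hx : x ∈ C) (hy : y ∈ C) :
    T ⟨x ⊓ y, infClosed_of_sup_mem hCsup hx hy⟩ = T ⟨x, hx⟩ ⊓ T ⟨y, hy⟩ := by
  have h : (⟨x ⊓ y, infClosed_of_sup_mem hCsup hx hy⟩ : C)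
      = -⟨-x ⊔ -y, hCsup _ _ (neg_mem hx) (neg_mem hy)⟩ :=
    Subtype.ext (by simp [neg_sup])
  rw [h, map_neg, hThom _ _ (neg_mem hx) (neg_mem hy),
    show (⟨-x, neg_mem hx⟩ : C) = -⟨x, hx⟩ from rfl,
    show (⟨-y, neg_mem hy⟩ : C) = -⟨y, hy⟩ from rfl, map_neg, map_neg, neg_sup, neg_neg, neg_neg]

lemma map_finset_inf'_of_map_sup
    (hThom : ∀ (x y : A) (hx : x ∈ C) (hy : y ∈ C),
      T ⟨x ⊔ y, hCsup x y hx hy⟩ = T ⟨x, hx⟩ ⊔ T ⟨y, hy⟩)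
    {ι : Type*} {U : Finset ι} (hU : U.Nonempty) (f : ι → C) :
    T ⟨U.inf' hU (fun i => (f i : A)),
        (infClosed_of_sup_mem hCsup).finsetInf'_mem hU fun i _ => (f i).2⟩ =
      U.inf' hU fun i => T (f i) := by
  induction hU using Finset.Nonempty.cons_induction with
  | singleton i => simp
  | cons i U hi hU ih =>
    simp only [inf'_cons hU]
    rw [map_inf_of_map_sup hCsup hThom (f i).2
      ((infClosed_of_sup_mem hCsup).finsetInf'_mem hU fun i _ => (f i).2), ih]

lemma map_le_add_map_and_le_map_add_map
    (hThom : ∀ (x y : A) (hx : x ∈ C) (hy : y ∈ C),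
      T ⟨x ⊔ y, hCsup x y hx hy⟩ = T ⟨x, hx⟩ ⊔ T ⟨y, hy⟩)
    {ι : Type*} {U : Finset ι} (hU : U.Nonempty) (f : ι → C) {x w : C} {y : B}
    (hxf : ∀ i ∈ U, (x : A) ≤ f i) (hfx : U.inf' hU (fun i => (f i : A)) ≤ x + w)
    (hyf : ∀ i ∈ U, y ≤ T (f i)) (hfy : U.inf' hU (fun i => T (f i)) ≤ y + T w) :
    T x ≤ y + T w ∧ y ≤ T x + T w := by
  refine ⟨(le_inf' hU _ fun i hi => map_mono_of_map_sup hCsup hThom (hxf i hi)).trans hfy, ?_⟩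
  rw [← map_add]
  calc y ≤ U.inf' hU (fun i => T (f i)) := le_inf' hU _ hyf
    _ = T ⟨_, (infClosed_of_sup_mem hCsup).finsetInf'_mem hU fun i _ => (f i).2⟩ :=
      (map_finset_inf'_of_map_sup hCsup hThom hU f).symm
    _ ≤ T (x + w) := map_mono_of_map_sup hCsup hThom hfx

end LatticeHomOn

lemma eq_of_forall_le_add_smul {B : Type*} [AddCommGroup B] [Lattice B] [IsOrderedAddMonoid B]
    [Module ℝ B] [PosSMulMono ℝ B] (harch : ∀ f g : B, (∀ n : ℕ, (n : ℝ) • f ≤ g) → f ≤ 0)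
    {x y w : B} (h : ∀ ε : ℝ, 0 < ε → x ≤ y + ε • w ∧ y ≤ x + ε • w) : x = y := by
  have key : ∀ {x y : B}, (∀ ε : ℝ, 0 < ε → x ≤ y + ε • w) → x ≤ y := by
    intro x y hxy
    refine sub_nonpos.1 (harch _ w⁺ fun n => ?_)
    rcases n.eq_zero_or_pos with rfl | hn
    · simp
    · have hn' : (0 : ℝ) < n := Nat.cast_pos.2 hn
      have := smul_le_smul_of_nonneg_left (sub_le_iff_le_add'.2 (hxy _ (inv_pos.2 hn')))
        hn'.le
      rw [smul_smul, mul_inv_cancel₀ hn'.ne', one_smul] at this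
      exact this.trans (le_posPart w)
  exact le_antisymm (key fun ε hε => (h ε hε).1) (key fun ε hε => (h ε hε).2)

theorem stmt13_general {A : Type*} [CommRing A] [Lattice A]
    [CovariantClass A A (· + ·) (· ≤ ·)]
    [Algebra ℝ A] [PosSMulMono ℝ A]
    {B : Type*} [CommRing B] [Lattice B]
    [CovariantClass B B (· + ·) (· ≤ ·)]
    [Algebra ℝ B] [PosSMulMono ℝ B]
    (hmulposA : ∀ a b : A, 0 ≤ a → 0 ≤ b → 0 ≤ a * b)
    (hfalgA : ∀ a b c : A, a ⊓ b = 0 → 0 ≤ c → (c * a) ⊓ b = 0)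
    (harchB : ∀ f g : B, (∀ n : ℕ, (n : ℝ) • f ≤ g) → f ≤ 0)
    (hmulposB : ∀ a b : B, 0 ≤ a → 0 ≤ b → 0 ≤ a * b)
    (hfalgB : ∀ a b c : B, a ⊓ b = 0 → 0 ≤ c → (c * a) ⊓ b = 0)
    (C : Subalgebra ℝ A) (hCsup : ∀ x y : A, x ∈ C → y ∈ C → x ⊔ y ∈ C)
    (T : C →ₗ[ℝ] B)
    (hThom : ∀ (x y : A) (hx : x ∈ C) (hy : y ∈ C),
      T ⟨x ⊔ y, hCsup x y hx hy⟩ = T ⟨x, hx⟩ ⊔ T ⟨y, hy⟩)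
    (hTmul : ∀ x y : C, T (x * y) = T x * T y)
    (hTone : T 1 = 1)
    (a : A) (ha : 0 ≤ a) (r : ℝ) (hr : 0 < r)
    (haC : a ∈ C) (b : A) (hb : IsRPow a r b) (hbC : b ∈ C)
    (b' : B) (hb' : IsRPow (T ⟨a, haC⟩) r b') :
    T ⟨b, hbC⟩ = b' := by
  have := isOrderedRing_of_mul_nonneg_of_mul_inf_eq_zero hmulposA hfalgA
  have := isOrderedRing_of_mul_nonneg_of_mul_inf_eq_zero hmulposB hfalgB
  let φ : C →ₐ[ℝ] B := .ofLinearMap T hTone hTmul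
  set a' : C := ⟨a, haC⟩
  change φ ⟨b, hbC⟩ = b'
  change IsRPow (φ a') r b' at hb'
  have hφa : 0 ≤ φ a' := by
    simpa using map_mono_of_map_sup (T := φ) hCsup hThom (x := 0) (y := a') ha
  rcases (sub_nonneg.2 (Nat.floor_le hr.le)).eq_or_lt with hs | hs
  · obtain rfl := hb.eq_pow_of_natCast_floor_eq (sub_eq_zero.1 hs.symm).symm
    obtain rfl := hb'.eq_pow_of_natCast_floor_eq (sub_eq_zero.1 hs.symm).symm
    exact map_pow φ a' _
  refine eq_of_forall_le_add_smul harchB (w := φ (a' ^ ⌊r⌋₊ * (a' + 1))) fun ε hε => ?_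
  obtain ⟨U, hU, hUw, hcover⟩ :=
    exists_finset_isGeomWeight_approx hs (by linarith [Nat.lt_floor_add_one r]) hε
  obtain ⟨hA₁, hA₂⟩ := hb.le_mul_rpowTerm_and_finset_inf'_le hfalgA hr.le hε.le ha hU hUw hcover
  obtain ⟨hB₁, hB₂⟩ := hb'.le_mul_rpowTerm_and_finset_inf'_le hfalgB hr.le hε.le hφa hU hUw hcover
  simpa using map_le_add_map_and_le_map_add_map (T := φ) hCsup hThom hU
    (fun p => a' ^ ⌊r⌋₊ * rpowTerm r a' p) (x := ⟨b, hbC⟩) (y := b')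
    (w := ε • (a' ^ ⌊r⌋₊ * (a' + 1))) (by simpa [a', rpowTerm] using hA₁)
    (by simpa [a', rpowTerm] using hA₂) (by simpa [map_rpowTerm] using hB₁)
    (by simpa [map_rpowTerm] using hB₂)

/-- **Corollary 4.4 (real case).** If `C` is a `Φ`-subalgebra of a weighted geometric mean
closed Archimedean `Φ`-algebra `A`, and `T : C → B` is a multiplicative vector lattice
homomorphism into a weighted geometric mean closed Archimedean `Φ`-algebra `B` with
`T(e) = e'`, then for `a ∈ A⁺` and `r > 0` with `a, a^r ∈ C` one has `T(a^r) = (T a)^r`. -/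
theorem stmt13 {A : Type*} [CommRing A] [Lattice A]
    [CovariantClass A A (· + ·) (· ≤ ·)]
    [Algebra ℝ A] [PosSMulMono ℝ A]
    {B : Type*} [CommRing B] [Lattice B]
    [CovariantClass B B (· + ·) (· ≤ ·)]
    [Algebra ℝ B] [PosSMulMono ℝ B]
    (harchA : ∀ f g : A, (∀ n : ℕ, (n : ℝ) • f ≤ g) → f ≤ 0)
    (hmulposA : ∀ a b : A, 0 ≤ a → 0 ≤ b → 0 ≤ a * b)
    (hfalgA : ∀ a b c : A, a ⊓ b = 0 → 0 ≤ c → (c * a) ⊓ b = 0)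
    (hwgmA : ∀ (n : ℕ) (f : Fin n → A) (r : Fin n → ℝ),
      (∀ k, 0 < r k ∧ r k < 1) → (∑ k, r k) = 1 →
      ∃ m, IsGLB {x | ∃ θ : Fin n → ℝ, (∀ k, 0 < θ k) ∧ (∏ k, θ k ^ r k) = 1 ∧
        x = ∑ k, (r k * θ k) • |f k|} m)
    (harchB : ∀ f g : B, (∀ n : ℕ, (n : ℝ) • f ≤ g) → f ≤ 0)
    (hmulposB : ∀ a b : B, 0 ≤ a → 0 ≤ b → 0 ≤ a * b)
    (hfalgB : ∀ a b c : B, a ⊓ b = 0 → 0 ≤ c → (c * a) ⊓ b = 0)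
    (hwgmB : ∀ (n : ℕ) (f : Fin n → B) (r : Fin n → ℝ),
      (∀ k, 0 < r k ∧ r k < 1) → (∑ k, r k) = 1 →
      ∃ m, IsGLB {x | ∃ θ : Fin n → ℝ, (∀ k, 0 < θ k) ∧ (∏ k, θ k ^ r k) = 1 ∧
        x = ∑ k, (r k * θ k) • |f k|} m)
    (C : Subalgebra ℝ A) (hCsup : ∀ x y : A, x ∈ C → y ∈ C → x ⊔ y ∈ C)
    (T : C →ₗ[ℝ] B)
    (hThom : ∀ (x y : A) (hx : x ∈ C) (hy : y ∈ C),
      T ⟨x ⊔ y, hCsup x y hx hy⟩ = T ⟨x, hx⟩ ⊔ T ⟨y, hy⟩)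
    (hTmul : ∀ x y : C, T (x * y) = T x * T y)
    (hTone : T 1 = 1)
    (a : A) (ha : 0 ≤ a) (r : ℝ) (hr : 0 < r)
    (haC : a ∈ C) (b : A) (hb : IsRPow a r b) (hbC : b ∈ C)
    (b' : B) (hb' : IsRPow (T ⟨a, haC⟩) r b') :
    T ⟨b, hbC⟩ = b' :=
  stmt13_general hmulposA hfalgA harchB hmulposB hfalgB C hCsup T hThom hTmul hTone a ha r hr haC b
    hb hbC b' hb'
end

section
/- Let A be a weighted geometric mean closed Archimedean Φ-algebra and let p, q ∈ (0,∞). Then for every a ∈ A⁺, a^p · a^q = a^{p+q}, where all real powers are defined via the infimum formula. -/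
/-!
Write `m_ρ` for the infimum of the elements `ρ θ₁ a + (1 - ρ) θ₂` with `θ₁ ^ ρ θ₂ ^ (1 - ρ) = 1`,
that is, of the tangents to the concave function `u ↦ u ^ ρ` evaluated at `a`. Then
`a ^ r = a ^ ⌊r⌋ m_{r - ⌊r⌋}`, and everything reduces to `m_s m_t = m_{s + t}` for `s + t ≤ 1`
(where `m_1 = a`); when the fractional parts add up to more than `1`, one passes through the
complementary exponent `1 - t`.

In an Archimedean `f`-algebra multiplication by a positive element commutes with these infima,
so `m_s m_t` is the infimum of products of lines. Such a product is a quadratic in `a` lying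
above `u ^ (s + t)`, hence above some tangent line of `u ^ (s + t)`, and a real quadratic that is
nonnegative on `[0, ∞)` is nonnegative at `a`; this gives `m_{s + t} ≤ m_s m_t`.

Conversely `m_s m_t` lies below the product of the tangents at `v` for every `v > 0`, a quadratic
touching `u ^ (s + t)` at `v`. To put it below a line `z` above `u ^ (s + t)`, up to `ε`, one
localises in `a`: the excess `D` is shown to be carried by `(a - x)⁺` for ever larger `x`, by real
induction from a small `v` to a large `V`, each step using the quadratic attached to a nearby
point, which is negative around it. Above `V` the excess is carried by `(a - V)⁻` as well, and
`(a - V)⁺ ⊓ (a - V)⁻ = 0` forces `D ≤ 0`.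
-/

open Set Filter Topology

class IsFAlgebra (A : Type*) [CommRing A] [Lattice A] : Prop where
  nonneg_mul : ∀ a b : A, 0 ≤ a → 0 ≤ b → 0 ≤ a * b
  mul_inf_eq_zero : ∀ a b c : A, a ⊓ b = 0 → 0 ≤ c → (c * a) ⊓ b = 0

namespace IsFAlgebra

variable {A : Type*} [CommRing A] [Lattice A] [IsFAlgebra A]

theorem mul_inf_mul_eq_zero {x y c d : A} (h : x ⊓ y = 0) (hc : 0 ≤ c) (hd : 0 ≤ d) :
    (c * x) ⊓ (d * y) = 0 := by
  have h' : y ⊓ (c * x) = 0 := by rw [inf_comm]; exact mul_inf_eq_zero x y c h hc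
  rw [inf_comm]; exact mul_inf_eq_zero y _ d h' hd

theorem mul_eq_zero_of_inf_eq_zero {x y : A} (h : x ⊓ y = 0) (hx : 0 ≤ x) (hy : 0 ≤ y) :
    x * y = 0 := by
  simpa [mul_comm y x] using mul_inf_mul_eq_zero h hy hx

variable [CovariantClass A A (· + ·) (· ≤ ·)]

instance : PosMulMono A where
  mul_le_mul_of_nonneg_left c hc x y hxy := sub_nonneg.1 <| by
    simpa only [mul_sub] using nonneg_mul _ _ hc (sub_nonneg.2 hxy)

instance : MulPosMono A where
  mul_le_mul_of_nonneg_right c hc x y hxy := sub_nonneg.1 <| by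
    simpa only [sub_mul] using nonneg_mul _ _ (sub_nonneg.2 hxy) hc

theorem mul_posPart_eq (x : A) : x * x⁺ = x⁺ * x⁺ := by
  have h : x⁻ * x⁺ = 0 := by
    rw [mul_comm]
    exact mul_eq_zero_of_inf_eq_zero (posPart_inf_negPart_eq_zero x) (posPart_nonneg x)
      (negPart_nonneg x)
  calc x * x⁺ = (x⁺ - x⁻) * x⁺ := by rw [posPart_sub_negPart]
    _ = x⁺ * x⁺ := by rw [sub_mul, h, sub_zero]

theorem mul_self_nonneg (x : A) : 0 ≤ x * x := by
  have h : x * x = x * x⁺ + (-x) * (-x)⁺ := by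
    rw [posPart_neg, neg_mul, ← sub_eq_add_neg, ← mul_sub, posPart_sub_negPart]
  rw [h, mul_posPart_eq, mul_posPart_eq]
  exact add_nonneg (mul_nonneg (posPart_nonneg _) (posPart_nonneg _))
    (mul_nonneg (posPart_nonneg _) (posPart_nonneg _))

instance : ZeroLEOneClass A where
  zero_le_one := by simpa using mul_self_nonneg (1 : A)

theorem mul_inf_of_nonneg {c : A} (hc : 0 ≤ c) (x y : A) : c * (x ⊓ y) = c * x ⊓ c * y := by
  have hdisj : (x - x ⊓ y) ⊓ (y - x ⊓ y) = 0 := by rw [← inf_sub, sub_self]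
  have h := mul_inf_mul_eq_zero hdisj hc hc
  rw [mul_sub, mul_sub, ← inf_sub, sub_eq_zero] at h
  exact h.symm

theorem le_of_le_posPart_mul_of_le_negPart_mul_add {x D W P z : A} (hW : 0 ≤ W) (hP : 0 ≤ P)
    (hz : 0 ≤ z) (h₁ : D ≤ x⁺ * W) (h₂ : D ≤ x⁻ * P + z) : D ≤ z := by
  have h : D - z ≤ x⁺ * W ⊓ x⁻ * P :=
    le_inf ((sub_le_self D hz).trans h₁) (sub_le_iff_le_add.2 h₂)
  rwa [mul_comm x⁺, mul_comm x⁻, mul_inf_mul_eq_zero (posPart_inf_negPart_eq_zero x) hW hP,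
    sub_nonpos] at h

variable [Algebra ℝ A]

theorem mul_le_smul_add_posPart_mul {c z w : A} (hz : 0 ≤ z) (hzw : z ≤ w) (n : ℝ) :
    c * z ≤ n • z + (c - n • 1)⁺ * w := by
  have hc : c = c ⊓ n • 1 + (c - n • 1)⁺ := by rw [inf_eq_sub_posPart_sub, sub_add_cancel]
  calc c * z = (c ⊓ n • 1) * z + (c - n • 1)⁺ * z := by rw [← add_mul, ← hc]
    _ ≤ (n • (1 : A)) * z + (c - n • 1)⁺ * w :=
      add_le_add (mul_le_mul_of_nonneg_right inf_le_right hz)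
        (mul_le_mul_of_nonneg_left hzw (posPart_nonneg _))
    _ = n • z + (c - n • 1)⁺ * w := by rw [smul_mul_assoc, one_mul]

variable [PosSMulMono ℝ A]

theorem smul_posPart_sub_le_mul_self {c : A} (hc : 0 ≤ c) {n : ℝ} (hn : 0 ≤ n) :
    n • (c - n • 1)⁺ ≤ c * c := by
  have h1 : n • (c - n • 1)⁺ ≤ c * (c - n • 1)⁺ := by
    have e : c * (c - n • 1)⁺ - n • (c - n • 1)⁺ = (c - n • 1) * (c - n • 1)⁺ := by
      rw [sub_mul, smul_mul_assoc, one_mul]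
    rw [← sub_nonneg, e, mul_posPart_eq]
    exact mul_self_nonneg _
  have h2 : (c - n • 1)⁺ ≤ c := by
    rw [← sub_nonneg, ← inf_eq_sub_posPart_sub]
    exact le_inf hc (smul_nonneg hn zero_le_one)
  exact h1.trans (mul_le_mul_of_nonneg_left h2 hc)

end IsFAlgebra

section Archimedean

variable {A : Type*} [CommRing A] [Lattice A] [CovariantClass A A (· + ·) (· ≤ ·)]
  [Algebra ℝ A] [PosSMulMono ℝ A]

theorem le_of_forall_le_add_smul (harch : ∀ f g : A, (∀ n : ℕ, (n : ℝ) • f ≤ g) → f ≤ 0)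
    {x y g : A} (hg : 0 ≤ g) (h : ∀ ε : ℝ, 0 < ε → x ≤ y + ε • g) : x ≤ y := by
  refine sub_nonpos.1 (harch _ g fun n => ?_)
  rcases Nat.eq_zero_or_pos n with rfl | hn
  · simpa using hg
  · have hn' : (0 : ℝ) < n := by exact_mod_cast hn
    exact (le_inv_smul_iff_of_pos hn').1 (sub_le_iff_le_add'.2 (h _ (inv_pos.2 hn')))

variable [IsFAlgebra A]

theorem le_mul_of_isGLB (harch : ∀ f g : A, (∀ n : ℕ, (n : ℝ) • f ≤ g) → f ≤ 0)
    {S : Set A} {m c y : A} (hS : IsGLB S m) (hne : S.Nonempty) (hc : 0 ≤ c)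
    (hy : ∀ x ∈ S, y ≤ c * x) : y ≤ c * m := by
  obtain ⟨x₀, hx₀⟩ := hne
  have hm₀ : 0 ≤ x₀ - m := sub_nonneg.2 (hS.1 hx₀)
  -- replacing `x` by `x ⊓ x₀` keeps `x - m` inside `[0, x₀ - m]`
  have key : ∀ n : ℝ, 0 < n → y - c * m ≤ (c - n • 1)⁺ * (x₀ - m) := by
    intro n hn
    set K := (c - n • 1)⁺ * (x₀ - m)
    have hlb : m + n⁻¹ • (y - c * m - K) ∈ lowerBounds S := by
      intro x hx
      have hz : 0 ≤ x ⊓ x₀ - m := sub_nonneg.2 (le_inf (hS.1 hx) (hS.1 hx₀))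
      have hy' : y ≤ c * (x ⊓ x₀) := by
        rw [IsFAlgebra.mul_inf_of_nonneg hc]
        exact le_inf (hy x hx) (hy x₀ hx₀)
      have hbd := IsFAlgebra.mul_le_smul_add_posPart_mul (c := c) hz
        (sub_le_sub_right inf_le_right m) n
      rw [mul_sub] at hbd
      have h : n⁻¹ • (y - c * m - K) ≤ x ⊓ x₀ - m :=
        (inv_smul_le_iff_of_pos hn).2 (sub_le_iff_le_add.2 ((sub_le_sub_right hy' _).trans hbd))
      calc m + n⁻¹ • (y - c * m - K) ≤ m + (x ⊓ x₀ - m) := add_le_add le_rfl h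
        _ ≤ x := by rw [add_sub_cancel]; exact inf_le_left
    have h := (inv_smul_le_iff_of_pos hn).1 (le_sub_iff_add_le'.2 (hS.2 hlb))
    rwa [sub_self, smul_zero, sub_nonpos] at h
  refine le_of_forall_le_add_smul harch (mul_nonneg (IsFAlgebra.mul_self_nonneg c) hm₀)
    fun ε hε => ?_
  have hbd : (c - ε⁻¹ • 1)⁺ ≤ ε • (c * c) := by
    have := smul_le_smul_of_nonneg_left
      (IsFAlgebra.smul_posPart_sub_le_mul_self hc (inv_nonneg.2 hε.le)) hε.le
    rwa [smul_smul, mul_inv_cancel₀ hε.ne', one_smul] at this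
  calc y ≤ c * m + (c - ε⁻¹ • 1)⁺ * (x₀ - m) := sub_le_iff_le_add'.1 (key _ (inv_pos.2 hε))
    _ ≤ c * m + ε • (c * c * (x₀ - m)) := by
      rw [← smul_mul_assoc]
      exact add_le_add le_rfl (mul_le_mul_of_nonneg_right hbd hm₀)

end Archimedean

section Real

theorem rpow_le_affine_of_weighted_prod_eq_one {ρ θ₁ θ₂ u : ℝ} (hρ0 : 0 ≤ ρ) (hρ1 : ρ ≤ 1)
    (hθ₁ : 0 ≤ θ₁) (hθ₂ : 0 ≤ θ₂) (hθ : θ₁ ^ ρ * θ₂ ^ (1 - ρ) = 1) (hu : 0 ≤ u) :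
    u ^ ρ ≤ ρ * θ₁ * u + (1 - ρ) * θ₂ := by
  have h := Real.geom_mean_le_arith_mean2_weighted hρ0 (sub_nonneg.2 hρ1) (mul_nonneg hθ₁ hu)
    hθ₂ (add_sub_cancel ρ 1)
  rwa [Real.mul_rpow hθ₁ hu, mul_right_comm, hθ, one_mul, ← mul_assoc] at h

theorem rpow_sub_one_mul_self {v : ℝ} (hv : 0 < v) (ρ : ℝ) : v ^ (ρ - 1) * v = v ^ ρ := by
  rw [← Real.rpow_add_one hv.ne', sub_add_cancel]

theorem tangent_mul_tangent_eval_self {v : ℝ} (hv : 0 < v) (s t : ℝ) :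
    s * t * v ^ (s + t - 2) * v ^ 2 + (s + t - 2 * (s * t)) * v ^ (s + t - 1) * v
      + (1 - s) * (1 - t) * v ^ (s + t) = v ^ (s + t) := by
  have h₁ := rpow_sub_one_mul_self hv (s + t)
  have h₂ := rpow_sub_one_mul_self hv (s + t - 1)
  rw [sub_sub, one_add_one_eq_two] at h₂
  linear_combination (s * t * v) * h₂ + (s + t - s * t) * h₁

theorem rpow_sub_one_weighted_prod_eq_one {v : ℝ} (hv : 0 < v) (ρ : ℝ) :
    (v ^ (ρ - 1)) ^ ρ * (v ^ ρ) ^ (1 - ρ) = 1 := by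
  rw [← Real.rpow_mul hv.le, ← Real.rpow_mul hv.le, ← Real.rpow_add hv,
    show (ρ - 1) * ρ + ρ * (1 - ρ) = 0 by ring, Real.rpow_zero]

theorem exists_pos_two_mul_add_eq_rpow {σ α : ℝ} (hσ : 0 < σ) (hσ1 : σ < 1) (hα : 0 < α)
    (β : ℝ) : ∃ c, 0 < c ∧ 2 * α * c + β = σ * c ^ (σ - 1) := by
  set g : ℝ → ℝ := fun c => σ * c ^ (σ - 1) - (2 * α * c + β)
  have hg : ContinuousOn g (Ioi 0) := fun c hc =>
    ((continuousAt_const.mul (Real.continuousAt_rpow_const _ _ (Or.inl (ne_of_gt hc)))).sub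
      (by fun_prop)).continuousWithinAt
  have hlo : ∀ᶠ c in 𝓝[>] 0, 0 < c ∧ c < 1 ∧ 0 < g c := by
    have h1 : Tendsto (fun c : ℝ => σ * c ^ (σ - 1)) (𝓝[>] 0) atTop :=
      (tendsto_rpow_neg_nhdsGT_zero (by linarith)).const_mul_atTop hσ
    filter_upwards [self_mem_nhdsWithin, Ioo_mem_nhdsGT one_pos,
      h1.eventually_gt_atTop (2 * α + |β|)] with c hc hc1 hgc
    refine ⟨hc, hc1.2, ?_⟩
    simp only [g]
    nlinarith [le_abs_self β, hc1.2]
  have hhi : ∀ᶠ c in atTop, 1 ≤ c ∧ g c < 0 := by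
    have h1 : Tendsto (fun c : ℝ => σ * c ^ (σ - 1)) atTop (𝓝 0) := by
      simpa [neg_sub] using (tendsto_rpow_neg_atTop (by linarith : 0 < 1 - σ)).const_mul σ
    filter_upwards [eventually_ge_atTop 1, h1.eventually (gt_mem_nhds one_pos),
      eventually_ge_atTop ((|β| + 1) / (2 * α))] with c hc h1c hc'
    refine ⟨hc, ?_⟩
    have : |β| + 1 ≤ 2 * α * c := by rwa [div_le_iff₀' (by positivity)] at hc'
    simp only [g]
    linarith [neg_abs_le β]
  obtain ⟨lo, hlo0, hlo1, hglo⟩ := hlo.exists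
  obtain ⟨hi, hhi1, hghi⟩ := hhi.exists
  obtain ⟨c, hc, hgc⟩ := intermediate_value_Icc' (by linarith : lo ≤ hi)
    (hg.mono fun x hx => lt_of_lt_of_le hlo0 hx.1) ⟨hghi.le, hglo.le⟩
  exact ⟨c, hlo0.trans_le hc.1, by simp only [g] at hgc; linarith⟩

theorem exists_tangent_le_quadratic {σ α β γ : ℝ} (hσ : 0 < σ) (hσ1 : σ ≤ 1) (hα : 0 < α)
    (hP : ∀ u : ℝ, 0 ≤ u → u ^ σ ≤ α * u ^ 2 + β * u + γ) :
    ∃ θ₁ θ₂ : ℝ, 0 < θ₁ ∧ 0 < θ₂ ∧ θ₁ ^ σ * θ₂ ^ (1 - σ) = 1 ∧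
      ∀ u : ℝ, 0 ≤ u → σ * θ₁ * u + (1 - σ) * θ₂ ≤ α * u ^ 2 + β * u + γ := by
  rcases hσ1.lt_or_eq with hσ1 | rfl
  · -- take the tangent to `u ^ σ` at the point `c` where its slope equals that of the
    -- quadratic: the quadratic minus this tangent is `α (u - c)² + (P c - c ^ σ)`
    obtain ⟨c, hc, hslope⟩ := exists_pos_two_mul_add_eq_rpow hσ hσ1 hα β
    refine ⟨c ^ (σ - 1), c ^ σ, Real.rpow_pos_of_pos hc _, Real.rpow_pos_of_pos hc _,
      rpow_sub_one_weighted_prod_eq_one hc σ, fun u hu => ?_⟩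
    have hPc := hP c hc.le
    have hcc := rpow_sub_one_mul_self hc σ
    nlinarith [mul_nonneg hα.le (sq_nonneg (u - c))]
  · refine ⟨1, 1, one_pos, one_pos, by simp, fun u hu => ?_⟩
    simpa using hP u hu

theorem eventually_tangent_coeffs_le {s t z₁ z₀ ε : ℝ} (hs : 0 < s) (ht : 0 < t)
    (hst : s + t ≤ 1) (hz₁ : 0 < z₁) (hε : 0 < ε)
    (hz : ∀ u : ℝ, 0 ≤ u → u ^ (s + t) ≤ z₁ * u + z₀) :
    ∀ᶠ V in atTop, s * t * V ^ (s + t - 2) ≤ ε ∧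
      (s + t - 2 * (s * t)) * V ^ (s + t - 1) ≤ z₁ := by
  have hz₀ : 0 ≤ z₀ := by simpa [Real.zero_rpow (by linarith : s + t ≠ 0)] using hz 0 le_rfl
  have hlim : Tendsto (fun V : ℝ => s * t * V ^ (s + t - 2)) atTop (𝓝 0) := by
    simpa [neg_sub] using
      (tendsto_rpow_neg_atTop (by linarith : 0 < 2 - (s + t))).const_mul (s * t)
  filter_upwards [eventually_gt_atTop 0, hlim.eventually (gt_mem_nhds hε),
    eventually_ge_atTop (z₀ / (2 * (s * t) * z₁))] with V hV hVε hVz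
  refine ⟨hVε.le, le_of_mul_le_mul_right ?_ hV⟩
  -- `V ^ (s + t) ≤ z₁ V + z₀` bounds the slope of the tangent at `V`
  have hz₀V : z₀ ≤ 2 * (s * t) * z₁ * V := by rwa [div_le_iff₀' (by positivity)] at hVz
  have hpow := hz V hV.le
  have hst4 : s * t ≤ 1 / 4 := by nlinarith [sq_nonneg (s - t)]
  have hV1 : 0 ≤ V ^ (s + t) := Real.rpow_nonneg hV.le _
  rw [mul_assoc, rpow_sub_one_mul_self hV]
  nlinarith [mul_le_mul_of_nonneg_left hpow (by linarith : (0 : ℝ) ≤ 1 - 2 * (s * t)),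
    mul_nonneg (by linarith : (0 : ℝ) ≤ 1 - (s + t)) hV1, mul_nonneg (mul_pos hs ht).le hz₀]

end Real

section Quadratic

variable {A : Type*} [CommRing A] [Algebra ℝ A]

def quadratic (a : A) (L M C : ℝ) : A := L • (a * a) + M • a + C • 1

theorem affine_mul_affine (a : A) (α β γ δ : ℝ) :
    (α • a + β • 1) * (γ • a + δ • 1) = quadratic a (α * γ) (α * δ + β * γ) (β * δ) := by
  simp only [quadratic, mul_add, add_mul, smul_mul_assoc, mul_smul_comm, mul_one, one_mul]
  module

theorem quadratic_sub_affine (a : A) (L M C p q : ℝ) :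
    quadratic a L M C - (p • a + q • 1) = quadratic a L (M - p) (C - q) := by
  simp only [quadratic]
  module

theorem tangent_mul_tangent (a : A) (s t : ℝ) {v : ℝ} (hv : 0 < v) :
    ((s * v ^ (s - 1)) • a + ((1 - s) * v ^ s) • 1) * ((t * v ^ (t - 1)) • a + ((1 - t) * v ^ t) • 1)
      = quadratic a (s * t * v ^ (s + t - 2)) ((s + t - 2 * (s * t)) * v ^ (s + t - 1))
          ((1 - s) * (1 - t) * v ^ (s + t)) := by
  have e₂ : v ^ (s + t - 2) = v ^ (s - 1) * v ^ (t - 1) := by rw [← Real.rpow_add hv]; ring_nf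
  have e₁ : v ^ (s + t - 1) = v ^ (s - 1) * v ^ t := by rw [← Real.rpow_add hv]; ring_nf
  have e₁' : v ^ (s + t - 1) = v ^ s * v ^ (t - 1) := by rw [← Real.rpow_add hv]; ring_nf
  have hL : s * v ^ (s - 1) * (t * v ^ (t - 1)) = s * t * v ^ (s + t - 2) := by rw [e₂]; ring
  have hM : s * v ^ (s - 1) * ((1 - t) * v ^ t) + (1 - s) * v ^ s * (t * v ^ (t - 1))
      = (s + t - 2 * (s * t)) * v ^ (s + t - 1) := by
    linear_combination (-(s * (1 - t))) * e₁ - ((1 - s) * t) * e₁'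
  have hC : (1 - s) * v ^ s * ((1 - t) * v ^ t) = (1 - s) * (1 - t) * v ^ (s + t) := by
    rw [Real.rpow_add hv]; ring
  rw [affine_mul_affine, hL, hM, hC]

variable [Lattice A] [CovariantClass A A (· + ·) (· ≤ ·)] [IsFAlgebra A]

theorem sub_smul_mul_sub_smul_le {a : A} (ha : 0 ≤ a) (l m : ℝ) :
    (a - l • 1) * (a - m • 1) ≤ (a - l • 1)⁺ * (a - m • 1)⁺ + m • (a - l • 1)⁻ :=
  calc (a - l • 1) * (a - m • 1) = (a - l • 1)⁺ * (a - m • 1) + (a - l • 1)⁻ * (m • 1 - a) := by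
        nth_rewrite 1 [← posPart_sub_negPart (a - l • 1)]
        ring
    _ ≤ (a - l • 1)⁺ * (a - m • 1)⁺ + (a - l • 1)⁻ * (m • 1) :=
        add_le_add (mul_le_mul_of_nonneg_left (le_posPart _) (posPart_nonneg _))
          (mul_le_mul_of_nonneg_left (sub_le_self _ ha) (negPart_nonneg _))
    _ = _ := by rw [mul_smul_comm, mul_one]

variable [PosSMulMono ℝ A]

theorem quadratic_nonneg {a : A} (ha : 0 ≤ a) {L M C : ℝ} (hL : 0 ≤ L)
    (hq : ∀ u : ℝ, 0 ≤ u → 0 ≤ L * u ^ 2 + M * u + C) : 0 ≤ quadratic a L M C := by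
  have hC : 0 ≤ C := by simpa using hq 0 le_rfl
  rcases le_or_gt 0 M with hM | hM
  · exact add_nonneg (add_nonneg (smul_nonneg hL (IsFAlgebra.mul_self_nonneg a))
      (smul_nonneg hM ha)) (smul_nonneg hC zero_le_one)
  -- with `M < 0` the quadratic is nonnegative on all of `ℝ`, so its discriminant is `≤ 0`
  have hdisc : discrim L M C ≤ 0 := discrim_le_zero fun x => by
    rcases le_or_gt 0 x with hx | hx
    · nlinarith [hq x hx]
    · nlinarith [hq (-x) (by linarith)]
  rw [discrim] at hdisc
  have hL' : 0 < L := lt_of_le_of_ne hL fun h => by subst h; nlinarith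
  have hsq : quadratic a L M C = L⁻¹ • ((L • a + (M / 2) • 1) * (L • a + (M / 2) • 1))
      + ((4 * L * C - M ^ 2) / (4 * L)) • 1 := by
    simp only [quadratic, mul_add, add_mul, smul_mul_assoc, mul_smul_comm, smul_smul, mul_one,
      one_mul, smul_add]
    match_scalars <;> field_simp <;> ring
  rw [hsq]
  exact add_nonneg (smul_nonneg (inv_nonneg.2 hL) (IsFAlgebra.mul_self_nonneg _))
    (smul_nonneg (div_nonneg (by linarith) (by positivity)) zero_le_one)

theorem quadratic_le_negPart_mul_add_posPart_mul {a : A} (ha : 0 ≤ a) {L M C l m : ℝ}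
    (hL : 0 ≤ L) (hl : 0 ≤ l) (hlm : l < m) (hql : L * l ^ 2 + M * l + C ≤ 0)
    (hqm : L * m ^ 2 + M * m + C ≤ 0) :
    ∃ P Q : A, 0 ≤ P ∧ 0 ≤ Q ∧
      quadratic a L M C ≤ (a - l • 1)⁻ * P + (a - m • 1)⁺ * Q := by
  have hml : 0 < m - l := sub_pos.2 hlm
  set A₀ := -(L * l ^ 2 + M * l + C) / (m - l)
  set B₀ := -(L * m ^ 2 + M * m + C) / (m - l)
  have hA₀ : 0 ≤ A₀ := div_nonneg (by linarith) hml.le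
  have hB₀ : 0 ≤ B₀ := div_nonneg (by linarith) hml.le
  -- the quadratic is its chord through `l` and `m` plus `L (u - l) (u - m)`
  have hchord : quadratic a L M C
      = A₀ • (a - m • 1) + B₀ • -(a - l • 1) + L • ((a - l • 1) * (a - m • 1)) := by
    simp only [quadratic, A₀, B₀, mul_sub, sub_mul, smul_mul_assoc, mul_smul_comm, smul_smul,
      mul_one, one_mul, smul_sub, neg_sub]
    match_scalars <;> field_simp <;> ring
  refine ⟨(B₀ + L * m) • 1, A₀ • 1 + L • (a - l • 1)⁺,
    smul_nonneg (by nlinarith) zero_le_one,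
    add_nonneg (smul_nonneg hA₀ zero_le_one) (smul_nonneg hL (posPart_nonneg _)), ?_⟩
  rw [hchord]
  calc _ ≤ A₀ • (a - m • 1)⁺ + B₀ • (a - l • 1)⁻
        + L • ((a - l • 1)⁺ * (a - m • 1)⁺ + m • (a - l • 1)⁻) :=
        add_le_add (add_le_add (smul_le_smul_of_nonneg_left (le_posPart _) hA₀)
          (smul_le_smul_of_nonneg_left (neg_le_negPart _) hB₀))
          (smul_le_smul_of_nonneg_left (sub_smul_mul_sub_smul_le ha l m) hL)
    _ = _ := by
      simp only [mul_add, mul_smul_comm, mul_one, smul_add, smul_smul, add_smul]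
      rw [mul_comm (a - m • 1)⁺]
      module

theorem quadratic_le_quadratic_of_le (a : A) {L L' : ℝ} (h : L ≤ L') (M C : ℝ) :
    quadratic a L M C ≤ quadratic a L' M C := by
  have : L • (a * a) ≤ L' • (a * a) := sub_nonneg.1 <| by
    rw [← sub_smul]
    exact smul_nonneg (sub_nonneg.2 h) (IsFAlgebra.mul_self_nonneg a)
  simp only [quadratic]
  exact add_le_add (add_le_add this le_rfl) le_rfl

theorem quadratic_le_smul_negPart (a : A) {L M C V : ℝ} (hL : L ≤ 0) (hM : M ≤ 0)
    (hMC : C + M * V ≤ 0) : quadratic a L M C ≤ (-M) • (a - V • 1)⁻ := by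
  have h : (-M) • (V • 1 - a) - quadratic a L M C = (-L) • (a * a) + (-(C + M * V)) • 1 := by
    simp only [quadratic]
    module
  calc quadratic a L M C ≤ (-M) • (V • 1 - a) := by
        rw [← sub_nonneg, h]
        exact add_nonneg (smul_nonneg (by linarith) (IsFAlgebra.mul_self_nonneg a))
          (smul_nonneg (by linarith) zero_le_one)
    _ ≤ (-M) • (a - V • 1)⁻ :=
        smul_le_smul_of_nonneg_left (by rw [← neg_sub]; exact neg_le_negPart _) (by linarith)

end Quadratic

theorem real_induction {P : ℝ → Prop} {a b : ℝ} (hab : a ≤ b) (ha : P a)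
    (hloc : ∀ x ∈ Icc a b, ∃ δ > 0, ∀ l ∈ Icc a b, ∀ m ∈ Icc a b,
      dist l x < δ → dist m x < δ → l ≤ m → P l → P m) : P b := by
  set T := {x | x ∈ Icc a b ∧ P x}
  have haT : a ∈ T := ⟨⟨le_rfl, hab⟩, ha⟩
  have hbdd : BddAbove T := ⟨b, fun x hx => hx.1.2⟩
  have hs : sSup T ∈ Icc a b := ⟨le_csSup hbdd haT, csSup_le ⟨a, haT⟩ fun x hx => hx.1.2⟩
  obtain ⟨δ, hδ, hstep⟩ := hloc _ hs
  obtain ⟨x, hxT, hx⟩ := exists_lt_of_lt_csSup ⟨a, haT⟩ (sub_lt_self (sSup T) hδ)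
  have hxs : x ≤ sSup T := le_csSup hbdd hxT
  set m := min b (sSup T + δ / 2)
  have hxm : x ≤ m := le_min hxT.1.2 (by linarith)
  have hm : m ∈ Icc a b := ⟨hxT.1.1.trans hxm, min_le_left _ _⟩
  have hmδ : m ≤ sSup T + δ / 2 := min_le_right _ _
  have hPm : P m := hstep x hxT.1 m hm (by rw [Real.dist_eq, abs_lt]; constructor <;> linarith)
    (by rw [Real.dist_eq, abs_lt]; constructor <;> linarith) hxm hxT.2
  have hms : m ≤ sSup T := le_csSup hbdd ⟨hm, hPm⟩
  rcases min_choice b (sSup T + δ / 2) with h | h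
  · rwa [← h]
  · linarith

section Localization

variable {A : Type*} [CommRing A] [Lattice A] [CovariantClass A A (· + ·) (· ≤ ·)]
  [Algebra ℝ A] [PosSMulMono ℝ A] [IsFAlgebra A]

theorem nonpos_of_forall_le_quadratic {a D : A} (ha : 0 ≤ a) {L M C : ℝ → ℝ}
    (hL : ∀ x, 0 < x → 0 ≤ L x) (hD : ∀ x, 0 < x → D ≤ quadratic a (L x) (M x) (C x))
    (hneg : ∀ x, 0 < x → L x * x ^ 2 + M x * x + C x < 0)
    {v V : ℝ} (hv : 0 < v) (hvV : v ≤ V) (hCv : C v ≤ 0)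
    {k : ℝ} (hk : 0 ≤ k) (hDV : D ≤ k • (a - V • 1)⁻) : D ≤ 0 := by
  have hcell : ∀ x l m, 0 < x → 0 ≤ l → l < m → L x * l ^ 2 + M x * l + C x ≤ 0 →
      L x * m ^ 2 + M x * m + C x ≤ 0 →
      ∃ P Q : A, 0 ≤ P ∧ 0 ≤ Q ∧ D ≤ (a - l • 1)⁻ * P + (a - m • 1)⁺ * Q :=
    fun x l m hx hl hlm hql hqm =>
      (quadratic_le_negPart_mul_add_posPart_mul ha (hL x hx) hl hlm hql hqm).imp
        fun _ ⟨Q, hP, hQ, h⟩ => ⟨Q, hP, hQ, (hD x hx).trans h⟩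
  -- `D` is carried by the part of `a` above `x`
  let Carried : ℝ → Prop := fun x => ∃ W : A, 0 ≤ W ∧ D ≤ (a - x • 1)⁺ * W
  have hbase : Carried v := by
    -- the cell `[0, v]` needs no induction hypothesis, as `(a - 0)⁻ = 0`
    obtain ⟨P, Q, -, hQ, h⟩ := hcell v 0 v hv le_rfl hv (by simpa using hCv) (hneg v hv).le
    rw [zero_smul, sub_zero, negPart_eq_zero.2 ha, zero_mul, zero_add] at h
    exact ⟨Q, hQ, h⟩
  have hCV : Carried V := real_induction hvV hbase fun x hx => by
    have hx0 : 0 < x := hv.trans_le hx.1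
    obtain ⟨δ, hδ, hball⟩ := Metric.eventually_nhds_iff.1 <|
      (show Continuous fun u : ℝ => L x * u ^ 2 + M x * u + C x by fun_prop).continuousAt
        |>.eventually_lt continuousAt_const (hneg x hx0)
    refine ⟨δ, hδ, fun l hl m _ hlx hmx hlm ⟨W, hW, hDW⟩ => ?_⟩
    rcases hlm.lt_or_eq with hlm | rfl
    · obtain ⟨P, Q, hP, hQ, h⟩ := hcell x l m hx0 (hv.le.trans hl.1) hlm (hball hlx).le
        (hball hmx).le
      exact ⟨Q, hQ, IsFAlgebra.le_of_le_posPart_mul_of_le_negPart_mul_add hW hP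
        (mul_nonneg (posPart_nonneg _) hQ) hDW h⟩
    · exact ⟨W, hW, hDW⟩
  obtain ⟨W, hW, hDW⟩ := hCV
  refine IsFAlgebra.le_of_le_posPart_mul_of_le_negPart_mul_add hW (smul_nonneg hk zero_le_one)
    le_rfl hDW ?_
  rwa [add_zero, mul_smul_comm, mul_one]

end Localization

section RpowLines

variable {A : Type*} [CommRing A] [Module ℝ A]

def rpowLines (a : A) (ρ : ℝ) : Set A :=
  {x | ∃ θ₁ θ₂ : ℝ, 0 < θ₁ ∧ 0 < θ₂ ∧ θ₁ ^ ρ * θ₂ ^ (1 - ρ) = 1 ∧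
      x = (ρ * θ₁) • a + ((1 - ρ) * θ₂) • (1 : A)}

theorem rpowSet_eq_rpowLines [Lattice A] (a : A) (r : ℝ) :
    rpowSet a r = rpowLines a (r - ⌊r⌋₊) := rfl

theorem rpowLines_zero (a : A) : rpowLines a 0 = {1} := by
  ext x
  constructor
  · rintro ⟨θ₁, θ₂, -, -, hθ, rfl⟩
    simp_all
  · rintro rfl
    exact ⟨1, 1, one_pos, one_pos, by simp, by simp⟩

theorem rpowLines_one (a : A) : rpowLines a 1 = {a} := by
  ext x
  constructor
  · rintro ⟨θ₁, θ₂, -, -, hθ, rfl⟩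
    simp_all
  · rintro rfl
    exact ⟨1, 1, one_pos, one_pos, by simp, by simp⟩

theorem tangent_mem_rpowLines (a : A) (ρ : ℝ) {v : ℝ} (hv : 0 < v) :
    (ρ * v ^ (ρ - 1)) • a + ((1 - ρ) * v ^ ρ) • (1 : A) ∈ rpowLines a ρ :=
  ⟨_, _, Real.rpow_pos_of_pos hv _, Real.rpow_pos_of_pos hv _,
    rpow_sub_one_weighted_prod_eq_one hv ρ, rfl⟩

theorem rpowLines_nonempty (a : A) (ρ : ℝ) : (rpowLines a ρ).Nonempty :=
  ⟨_, tangent_mem_rpowLines a ρ one_pos⟩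

theorem nonneg_of_mem_rpowLines [Lattice A] [CovariantClass A A (· + ·) (· ≤ ·)]
    [ZeroLEOneClass A] [PosSMulMono ℝ A] {a x : A} (ha : 0 ≤ a) {ρ : ℝ} (hρ0 : 0 ≤ ρ)
    (hρ1 : ρ ≤ 1) (hx : x ∈ rpowLines a ρ) : 0 ≤ x := by
  obtain ⟨θ₁, θ₂, h₁, h₂, -, rfl⟩ := hx
  exact add_nonneg (smul_nonneg (mul_nonneg hρ0 h₁.le) ha)
    (smul_nonneg (mul_nonneg (sub_nonneg.2 hρ1) h₂.le) zero_le_one)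

theorem exists_isGLB_rpowLines [Lattice A] [CovariantClass A A (· + ·) (· ≤ ·)]
    [ZeroLEOneClass A]
    (hwgm : ∀ (n : ℕ) (f : Fin n → A) (r : Fin n → ℝ),
      (∀ k, 0 < r k ∧ r k < 1) → (∑ k, r k) = 1 →
      ∃ m, IsGLB {x | ∃ θ : Fin n → ℝ, (∀ k, 0 < θ k) ∧ (∏ k, θ k ^ r k) = 1 ∧
        x = ∑ k, (r k * θ k) • |f k|} m)
    {a : A} (ha : 0 ≤ a) {ρ : ℝ} (hρ : 0 < ρ) (hρ1 : ρ < 1) :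
    ∃ m, IsGLB (rpowLines a ρ) m := by
  obtain ⟨m, hm⟩ := hwgm 2 ![a, 1] ![ρ, 1 - ρ]
    (by intro k; fin_cases k <;> constructor <;> simp <;> linarith)
    (by simp [Fin.sum_univ_two])
  refine ⟨m, ?_⟩
  convert hm using 1
  ext x
  simp only [rpowLines, Fin.prod_univ_two, Fin.sum_univ_two, Fin.forall_fin_two,
    mem_ofPred_eq, Matrix.cons_val_zero, Matrix.cons_val_one, abs_of_nonneg ha,
    abs_of_nonneg (zero_le_one' A)]
  constructor
  · rintro ⟨θ₁, θ₂, h₁, h₂, hθ, rfl⟩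
    exact ⟨![θ₁, θ₂], by simp [h₁, h₂], by simpa using hθ, by simp⟩
  · rintro ⟨θ, ⟨h₁, h₂⟩, hθ, rfl⟩
    exact ⟨θ 0, θ 1, h₁, h₂, hθ, rfl⟩

end RpowLines

section Main

variable {A : Type*} [CommRing A] [Lattice A] [CovariantClass A A (· + ·) (· ≤ ·)]
  [Algebra ℝ A] [PosSMulMono ℝ A] [IsFAlgebra A]

theorem le_affine_of_forall_le_tangent_mul_tangent
    (harch : ∀ f g : A, (∀ n : ℕ, (n : ℝ) • f ≤ g) → f ≤ 0) {a X : A} (ha : 0 ≤ a)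
    {s t : ℝ} (hs : 0 < s) (ht : 0 < t) (hst : s + t ≤ 1) {z₁ z₀ : ℝ} (hz₁ : 0 < z₁)
    (hz : ∀ u : ℝ, 0 ≤ u → u ^ (s + t) ≤ z₁ * u + z₀)
    (hX : ∀ v : ℝ, 0 < v → X ≤ quadratic a (s * t * v ^ (s + t - 2))
      ((s + t - 2 * (s * t)) * v ^ (s + t - 1)) ((1 - s) * (1 - t) * v ^ (s + t))) :
    X ≤ z₁ • a + z₀ • 1 := by
  have hσ : 0 < s + t := by linarith
  -- the slack `ε (a * a + 1)` makes every quadratic strictly negative at its own point and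
  -- lets the `a * a` coefficient be absorbed at the far end `V`
  refine le_of_forall_le_add_smul harch (add_nonneg (IsFAlgebra.mul_self_nonneg a) zero_le_one)
    fun ε hε => ?_
  rw [← sub_nonpos]
  set L : ℝ → ℝ := fun x => s * t * x ^ (s + t - 2)
  set M : ℝ → ℝ := fun x => (s + t - 2 * (s * t)) * x ^ (s + t - 1) - z₁
  set C : ℝ → ℝ := fun x => (1 - s) * (1 - t) * x ^ (s + t) - z₀ - ε
  have hD : ∀ x, 0 < x → X - (z₁ • a + z₀ • 1 + ε • (a * a + 1))
      ≤ quadratic a (L x - ε) (M x) (C x) := fun x hx => by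
    refine (sub_le_sub_right (hX x hx) _).trans (le_of_eq ?_)
    simp only [quadratic, L, M, C]
    module
  have hval : ∀ x, 0 < x → L x * x ^ 2 + M x * x + C x = x ^ (s + t) - z₁ * x - z₀ - ε := by
    intro x hx
    simp only [L, M, C]
    linear_combination tangent_mul_tangent_eval_self hx s t
  obtain ⟨V, ⟨hLV, hMV⟩, hvV⟩ := ((eventually_tangent_coeffs_le hs ht hst hz₁ hε hz).and
    (eventually_ge_atTop (ε ^ (s + t)⁻¹))).exists
  have hv : 0 < ε ^ (s + t)⁻¹ := Real.rpow_pos_of_pos hε _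
  refine nonpos_of_forall_le_quadratic ha (L := L) (M := M) (C := C) (fun x hx => by positivity)
    (fun x hx => (hD x hx).trans (quadratic_le_quadratic_of_le a (by linarith) _ _))
    (fun x hx => by rw [hval x hx]; linarith [hz x hx.le]) hv hvV ?_
    (by linarith : 0 ≤ -M V) ((hD V (hv.trans_le hvV)).trans
      (quadratic_le_smul_negPart a (by linarith) (by linarith) ?_))
  · have hs1 : (1 - s) * (1 - t) ≤ 1 := by nlinarith
    have hz₀ : 0 ≤ z₀ := by simpa [Real.zero_rpow hσ.ne'] using hz 0 le_rfl
    simp only [C]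
    rw [Real.rpow_inv_rpow hε.le hσ.ne']
    nlinarith
  · have hV := hv.trans_le hvV
    have hVσ := hz V hV.le
    have : 0 ≤ s * t * V ^ (s + t) := by positivity
    have e : (s + t - 2 * (s * t)) * V ^ (s + t - 1) * V = (s + t - 2 * (s * t)) * V ^ (s + t) := by
      rw [mul_assoc, rpow_sub_one_mul_self hV]
    simp only [M, C]
    nlinarith

theorem isGLB_rpowLines_add_le_mul {a m x y : A} (ha : 0 ≤ a) {s t : ℝ} (hs : 0 < s)
    (ht : 0 < t) (hst : s + t ≤ 1) (hm : IsGLB (rpowLines a (s + t)) m)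
    (hx : x ∈ rpowLines a s) (hy : y ∈ rpowLines a t) : m ≤ x * y := by
  obtain ⟨θ₁, θ₂, h₁, h₂, hθ, rfl⟩ := hx
  obtain ⟨η₁, η₂, h₁', h₂', hη, rfl⟩ := hy
  rw [affine_mul_affine]
  have hP : ∀ u : ℝ, 0 ≤ u → u ^ (s + t) ≤ s * θ₁ * (t * η₁) * u ^ 2
      + (s * θ₁ * ((1 - t) * η₂) + (1 - s) * θ₂ * (t * η₁)) * u
      + (1 - s) * θ₂ * ((1 - t) * η₂) := by
    intro u hu
    have hx := rpow_le_affine_of_weighted_prod_eq_one hs.le (by linarith) h₁.le h₂.le hθ hu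
    have hy := rpow_le_affine_of_weighted_prod_eq_one ht.le (by linarith) h₁'.le h₂'.le hη hu
    rw [Real.rpow_add' hu (by linarith)]
    calc u ^ s * u ^ t ≤ (s * θ₁ * u + (1 - s) * θ₂) * (t * η₁ * u + (1 - t) * η₂) :=
          mul_le_mul hx hy (Real.rpow_nonneg hu t) ((Real.rpow_nonneg hu s).trans hx)
      _ = _ := by ring
  obtain ⟨κ₁, κ₂, hκ₁, hκ₂, hκ, hle⟩ :=
    exists_tangent_le_quadratic (by linarith) hst (by positivity) hP
  refine (hm.1 ⟨κ₁, κ₂, hκ₁, hκ₂, hκ, rfl⟩).trans (sub_nonneg.1 ?_)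
  rw [quadratic_sub_affine]
  exact quadratic_nonneg ha (by positivity) fun u hu => by linarith [hle u hu]

theorem isGLB_rpowLines_mul (harch : ∀ f g : A, (∀ n : ℕ, (n : ℝ) • f ≤ g) → f ≤ 0)
    {a ms mt m : A} (ha : 0 ≤ a) {s t : ℝ} (hs : 0 ≤ s) (ht : 0 ≤ t) (hst : s + t ≤ 1)
    (hms : IsGLB (rpowLines a s) ms) (hmt : IsGLB (rpowLines a t) mt)
    (hm : IsGLB (rpowLines a (s + t)) m) : ms * mt = m := by
  rcases hs.lt_or_eq with hs | rfl
  swap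
  · rw [rpowLines_zero] at hms
    rw [← isGLB_singleton.unique hms, one_mul]
    exact hmt.unique (by rwa [zero_add] at hm)
  rcases ht.lt_or_eq with ht | rfl
  swap
  · rw [rpowLines_zero] at hmt
    rw [← isGLB_singleton.unique hmt, mul_one]
    exact hms.unique (by rwa [add_zero] at hm)
  have hmem : ∀ {ρ x}, 0 < ρ → ρ ≤ 1 → x ∈ rpowLines a ρ → 0 ≤ x :=
    fun hρ hρ1 hx => nonneg_of_mem_rpowLines ha hρ.le hρ1 hx
  have hmt0 : 0 ≤ mt := hmt.2 fun x hx => hmem ht (by linarith) hx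
  apply le_antisymm
  · refine hm.2 ?_
    rintro z ⟨θ₁, θ₂, h₁, h₂, hθ, rfl⟩
    refine le_affine_of_forall_le_tangent_mul_tangent harch ha hs ht hst (by positivity)
      (fun u hu => rpow_le_affine_of_weighted_prod_eq_one (by linarith) hst h₁.le h₂.le hθ hu)
      fun v hv => ?_
    rw [← tangent_mul_tangent a s t hv]
    exact mul_le_mul (hms.1 (tangent_mem_rpowLines a s hv)) (hmt.1 (tangent_mem_rpowLines a t hv))
      hmt0 (hmem hs (by linarith) (tangent_mem_rpowLines a s hv))
  · have h : ∀ x ∈ rpowLines a s, m ≤ mt * x := fun x hx => by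
      rw [mul_comm]
      exact le_mul_of_isGLB harch hmt (rpowLines_nonempty a t) (hmem hs (by linarith) hx)
        fun y hy => isGLB_rpowLines_add_le_mul ha hs ht hst hm hx hy
    rw [mul_comm]
    exact le_mul_of_isGLB harch hms (rpowLines_nonempty a s) hmt0 h

theorem isGLB_rpowLines_mul_eq_pow_floor_mul
    (harch : ∀ f g : A, (∀ n : ℕ, (n : ℝ) • f ≤ g) → f ≤ 0)
    (hwgm : ∀ (n : ℕ) (f : Fin n → A) (r : Fin n → ℝ),
      (∀ k, 0 < r k ∧ r k < 1) → (∑ k, r k) = 1 →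
      ∃ m, IsGLB {x | ∃ θ : Fin n → ℝ, (∀ k, 0 < θ k) ∧ (∏ k, θ k ^ r k) = 1 ∧
        x = ∑ k, (r k * θ k) • |f k|} m)
    {a ms mt m : A} (ha : 0 ≤ a) {s t : ℝ} (hs : 0 ≤ s) (hs1 : s < 1) (ht : 0 ≤ t) (ht1 : t < 1)
    (hms : IsGLB (rpowLines a s) ms) (hmt : IsGLB (rpowLines a t) mt)
    (hm : IsGLB (rpowLines a (s + t - ⌊s + t⌋₊)) m) : ms * mt = a ^ ⌊s + t⌋₊ * m := by
  rcases lt_or_ge (s + t) 1 with hlt | hge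
  · have h0 : ⌊s + t⌋₊ = 0 := Nat.floor_eq_zero.2 hlt
    rw [h0, Nat.cast_zero, sub_zero] at hm
    rw [h0, pow_zero, one_mul]
    exact isGLB_rpowLines_mul harch ha hs ht hlt.le hms hmt hm
  · have h1 : ⌊s + t⌋₊ = 1 := by
      rw [Nat.floor_eq_iff (by linarith)]
      constructor <;> push_cast <;> linarith
    rw [h1, Nat.cast_one] at hm
    rw [h1, pow_one]
    obtain ⟨m', hm'⟩ := exists_isGLB_rpowLines hwgm ha (by linarith : 0 < 1 - t) (by linarith)
    have hms' : ms = m * m' := (isGLB_rpowLines_mul harch ha (by linarith) (by linarith)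
      (by linarith) hm hm' (by convert hms using 2; ring)).symm
    have ha' : a = mt * m' := (isGLB_rpowLines_mul harch ha ht (by linarith) (by linarith) hmt hm'
      (by rw [add_sub_cancel, rpowLines_one]; exact isGLB_singleton)).symm
    rw [hms', ha']
    ring

end Main

/-- **Lemma 4.5(2).** In a weighted geometric mean closed Archimedean `Φ`-algebra `A`,
for `p, q ∈ (0,∞)` and `a ∈ A⁺` one has `a^p · a^q = a^{p+q}`. -/
theorem stmt15 {A : Type*} [CommRing A] [Lattice A]
    [CovariantClass A A (· + ·) (· ≤ ·)]
    [Algebra ℝ A] [PosSMulMono ℝ A]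
    (harch : ∀ f g : A, (∀ n : ℕ, (n : ℝ) • f ≤ g) → f ≤ 0)
    (hmulpos : ∀ a b : A, 0 ≤ a → 0 ≤ b → 0 ≤ a * b)
    (hfalg : ∀ a b c : A, a ⊓ b = 0 → 0 ≤ c → (c * a) ⊓ b = 0)
    (hwgm : ∀ (n : ℕ) (f : Fin n → A) (r : Fin n → ℝ),
      (∀ k, 0 < r k ∧ r k < 1) → (∑ k, r k) = 1 →
      ∃ m, IsGLB {x | ∃ θ : Fin n → ℝ, (∀ k, 0 < θ k) ∧ (∏ k, θ k ^ r k) = 1 ∧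
        x = ∑ k, (r k * θ k) • |f k|} m)
    (p q : ℝ) (hp : 0 < p) (hq : 0 < q)
    (a : A) (ha : 0 ≤ a)
    (b : A) (hb : IsRPow a p b)
    (c : A) (hc : IsRPow a q c)
    (d : A) (hd : IsRPow a (p + q) d) :
    b * c = d := by
  have : IsFAlgebra A := ⟨hmulpos, hfalg⟩
  obtain ⟨mb, hmb, rfl⟩ := hb
  obtain ⟨mc, hmc, rfl⟩ := hc
  obtain ⟨md, hmd, rfl⟩ := hd
  rw [rpowSet_eq_rpowLines] at hmb hmc hmd
  set s := p - ⌊p⌋₊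
  set t := q - ⌊q⌋₊
  have hs : 0 ≤ s := sub_nonneg.2 (Nat.floor_le hp.le)
  have ht : 0 ≤ t := sub_nonneg.2 (Nat.floor_le hq.le)
  have hfloor : ⌊p + q⌋₊ = ⌊s + t⌋₊ + (⌊p⌋₊ + ⌊q⌋₊) := by
    rw [← Nat.floor_add_natCast (add_nonneg hs ht)]
    congr 1
    simp only [s, t]
    push_cast
    ring
  have hfrac : p + q - ⌊p + q⌋₊ = s + t - ⌊s + t⌋₊ := by
    rw [hfloor]
    push_cast
    ring
  rw [hfrac] at hmd
  have key := isGLB_rpowLines_mul_eq_pow_floor_mul harch hwgm ha hs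
    (by linarith [Nat.lt_floor_add_one p]) ht (by linarith [Nat.lt_floor_add_one q]) hmb hmc hmd
  rw [hfloor, pow_add, pow_add]
  linear_combination (a ^ ⌊p⌋₊ * a ^ ⌊q⌋₊) * key
end
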